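/- arXiv:2511.21836 — 8 statements merged into one kernel-verified Lean document; each statement's English description precedes it below -/
import Mathlib

section
/- Invariant incidence ratios (Proposition 1). Assume Consistency, Exposure necessity, Exclusion restriction, Blinding, Treatment exchangeability, Positivity, Exposure exchangeability, and the sharp null hypothesis of no waning. Assume the nondegeneracy conditions E[ΔY1 | A=0] > 0, E[ΔY2 | A=0] > 0, P(E1[0]=1) > 0 and E[Y1[0,1]] > 0. Then IR1 = IR2, i.e. E[ΔY1 | A=1]/E[ΔY1 | A=0] = E[ΔY2 | A=1]/E[ΔY2 | A=0]. -/
/-!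
Within the arm `A = a`, consistency and exposure necessity give `ΔY1 = E1[a] * Y1[a,1]`, and
`ΔY2 = (1 - E1[a]) * Y2[a,1] * E2[a,0]`: someone exposed at time 1 who escapes interval 1 has
`ΔY2 = W[a,1] = Y2[a,1] = Y1[a,1] = ΔY1 = 0` by the exclusion restriction and the null of no
waning. Treatment exchangeability removes the conditioning on `A = a`, and exposure
exchangeability factors both expectations as an exposure term times `E[Y2[a,1]] = E[Y1[a,1]]`.
By blinding the exposure terms do not depend on `a`, so both incidence ratios reduce to
`E[Y1[1,1]] / E[Y1[0,1]]`.
-/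

open MeasureTheory ProbabilityTheory
open scoped ProbabilityTheory

namespace ProbabilityTheory
variable {Ω : Type*} [MeasurableSpace Ω] {μ : Measure Ω}

lemma measureReal_mul_integral_cond [IsFiniteMeasure μ] (s : Set Ω) (f : Ω → ℝ) :
    μ.real s * ∫ ω, f ω ∂μ[|s] = ∫ ω in s, f ω ∂μ := by
  rcases eq_or_ne (μ s) 0 with hs | hs
  · simp [measureReal_def, hs, Measure.restrict_eq_zero.2 hs]
  · rw [cond, integral_smul_measure, ENNReal.toReal_inv, smul_eq_mul, ← mul_assoc,
      ← measureReal_def, mul_inv_cancel₀ ((measureReal_ne_zero_iff (measure_ne_top μ s)).2 hs),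
      one_mul]

lemma integral_mul_eq_setIntegral_of_zero_or_one {Z : Ω → ℝ} (hZ : Measurable Z)
    (hZ01 : ∀ ω, Z ω = 0 ∨ Z ω = 1) (f : Ω → ℝ) :
    ∫ ω, f ω * Z ω ∂μ = ∫ ω in Z ⁻¹' {1}, f ω ∂μ := by
  rw [← integral_indicator (hZ (measurableSet_singleton 1))]
  congr 1 with ω
  rcases hZ01 ω with h | h <;> simp [h]

lemma IndepFun.setIntegral_preimage [IsFiniteMeasure μ] {β : Type*} [MeasurableSpace β]
    {X : Ω → β} {Y : Ω → ℝ} (hXY : IndepFun X Y μ) (hX : Measurable X)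
    (hY : AEStronglyMeasurable Y μ) {s : Set β} (hs : MeasurableSet s) :
    ∫ ω in X ⁻¹' s, Y ω ∂μ = μ.real (X ⁻¹' s) * ∫ ω, Y ω ∂μ := by
  have hφ : Measurable (s.indicator (1 : β → ℝ)) := measurable_const.indicator hs
  have hind : IndepFun (fun ω => s.indicator (1 : β → ℝ) (X ω)) Y μ :=
    hXY.comp hφ measurable_id
  calc ∫ ω in X ⁻¹' s, Y ω ∂μ = ∫ ω, s.indicator 1 (X ω) * Y ω ∂μ := by
        rw [← integral_indicator (hX hs)]
        congr 1 with ω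
        by_cases h : X ω ∈ s <;> simp [h]
    _ = (∫ ω, s.indicator 1 (X ω) ∂μ) * ∫ ω, Y ω ∂μ :=
        hind.integral_fun_mul_eq_mul_integral (hφ.comp hX).aestronglyMeasurable hY
    _ = μ.real (X ⁻¹' s) * ∫ ω, Y ω ∂μ := by
        rw [← integral_indicator_one (hX hs)]
        rfl

lemma IndepFun.integral_cond_preimage [IsFiniteMeasure μ] {β : Type*} [MeasurableSpace β]
    {X : Ω → β} {Y : Ω → ℝ} (hXY : IndepFun X Y μ) (hX : Measurable X)
    (hY : AEStronglyMeasurable Y μ) {s : Set β} (hs : MeasurableSet s)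
    (hμs : μ (X ⁻¹' s) ≠ 0) :
    ∫ ω, Y ω ∂μ[|X ⁻¹' s] = ∫ ω, Y ω ∂μ := by
  have h := measureReal_mul_integral_cond (μ := μ) (X ⁻¹' s) Y
  rw [hXY.setIntegral_preimage hX hY hs] at h
  exact mul_left_cancel₀ ((measureReal_ne_zero_iff (measure_ne_top μ _)).2 hμs) h

lemma ae_cond_of_ae_imp {s : Set Ω} (hs : MeasurableSet s) {p : Ω → Prop}
    (h : ∀ᵐ ω ∂μ, ω ∈ s → p ω) : ∀ᵐ ω ∂μ[|s], p ω := by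
  filter_upwards [ae_cond_mem hs, cond_absolutelyContinuous.ae_le h] with ω hω hp using hp hω

lemma integral_mul_mul_eq_of_indepFun_cond [IsFiniteMeasure μ] {X Y Z : Ω → ℝ}
    (hX : AEStronglyMeasurable X μ) (hY : AEStronglyMeasurable Y μ) (hZ : Measurable Z)
    (hZ01 : ∀ ω, Z ω = 0 ∨ Z ω = 1) (hZY : IndepFun Z Y μ)
    (hXY : IndepFun X Y μ[|Z ⁻¹' {1}]) :
    ∫ ω, X ω * Y ω * Z ω ∂μ = (∫ ω, X ω * Z ω ∂μ) * ∫ ω, Y ω ∂μ := by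
  have hcond (f : Ω → ℝ) :
      ∫ ω, f ω * Z ω ∂μ = μ.real (Z ⁻¹' {1}) * ∫ ω, f ω ∂μ[|Z ⁻¹' {1}] := by
    rw [integral_mul_eq_setIntegral_of_zero_or_one hZ hZ01, measureReal_mul_integral_cond]
  rw [hcond, hcond]
  rcases eq_or_ne (μ (Z ⁻¹' {1})) 0 with hB | hB
  · simp [measureReal_def, hB]
  rw [hXY.integral_fun_mul_eq_mul_integral (hX.mono_ac cond_absolutelyContinuous)
      (hY.mono_ac cond_absolutelyContinuous),
    hZY.integral_cond_preimage hZ hY (measurableSet_singleton 1) hB, mul_assoc]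

end ProbabilityTheory

section Arm

variable {Ω : Type*} [MeasurableSpace Ω] {μ : Measure Ω}
  {A E1 E2 DY1 DY2 : Ω → ℝ} {a : ℝ}

lemma integral_cond_DY1_eq_mul [IsFiniteMeasure μ] {E1a Y10 Y11 : Ω → ℝ} (hA : Measurable A)
    (hE1a : Measurable E1a) (hY11 : Measurable Y11) (hE1 : ∀ ω, E1 ω = 0 ∨ E1 ω = 1)
    (hconsE1 : ∀ᵐ ω ∂μ, A ω = a → E1 ω = E1a ω)
    (hconsY10 : ∀ᵐ ω ∂μ, A ω = a → E1 ω = 0 → DY1 ω = Y10 ω)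
    (hconsY11 : ∀ᵐ ω ∂μ, A ω = a → E1 ω = 1 → DY1 ω = Y11 ω)
    (hnecY10 : ∀ᵐ ω ∂μ, Y10 ω = 0)
    (hexch : IndepFun A (fun ω => E1a ω * Y11 ω) μ) (hee : IndepFun E1a Y11 μ)
    (hμa : μ {ω | A ω = a} ≠ 0) :
    ∫ ω, DY1 ω ∂μ[|{ω | A ω = a}] = (∫ ω, E1a ω ∂μ) * ∫ ω, Y11 ω ∂μ := by
  have hobs : ∀ᵐ ω ∂μ, A ω = a → DY1 ω = E1a ω * Y11 ω := by
    filter_upwards [hconsE1, hconsY10, hconsY11, hnecY10] with ω hE1a hY10 hY11 hnec hAa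
    rcases hE1 ω with h0 | h1
    · rw [hY10 hAa h0, hnec, ← hE1a hAa, h0, zero_mul]
    · rw [hY11 hAa h1, ← hE1a hAa, h1, one_mul]
  calc ∫ ω, DY1 ω ∂μ[|{ω | A ω = a}] = ∫ ω, E1a ω * Y11 ω ∂μ[|{ω | A ω = a}] :=
        integral_congr_ae (ae_cond_of_ae_imp (hA (measurableSet_singleton a)) hobs)
    _ = ∫ ω, E1a ω * Y11 ω ∂μ :=
        hexch.integral_cond_preimage hA (hE1a.mul hY11).aestronglyMeasurable
          (measurableSet_singleton a) hμa
    _ = (∫ ω, E1a ω ∂μ) * ∫ ω, Y11 ω ∂μ :=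
        hee.integral_fun_mul_eq_mul_integral hE1a.aestronglyMeasurable hY11.aestronglyMeasurable

lemma ae_DY2_eq_zero_of_E1_eq_one {Y11 Y21 W1 : Ω → ℝ}
    (hE2 : ∀ ω, E2 ω = 0 ∨ E2 ω = 1) (hDY1 : ∀ ω, DY1 ω = 0 ∨ DY1 ω = 1)
    (hmono : ∀ ω, DY1 ω = 1 → DY2 ω = 0)
    (hconsY11 : ∀ᵐ ω ∂μ, A ω = a → E1 ω = 1 → DY1 ω = Y11 ω)
    (hconsW : ∀ᵐ ω ∂μ, A ω = a → E1 ω = 1 → DY1 ω = 0 → E2 ω = 1 →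
      DY2 ω = W1 ω)
    (hnecE2 : ∀ᵐ ω ∂μ, E2 ω = 0 → DY2 ω = 0) (hexcl : ∀ᵐ ω ∂μ, W1 ω = Y21 ω)
    (hnull : ∀ᵐ ω ∂μ, Y11 ω = Y21 ω) :
    ∀ᵐ ω ∂μ, A ω = a → E1 ω = 1 → DY2 ω = 0 := by
  filter_upwards [hconsY11, hconsW, hnecE2, hexcl, hnull] with ω hY11 hW hnec hex hnu hAa hE1
  rcases hDY1 ω with h0 | h1
  · rcases hE2 ω with g0 | g1
    · exact hnec g0
    · rw [hW hAa hE1 h0 g1, hex, ← hnu, ← hY11 hAa hE1, h0]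
  · exact hmono ω h1

lemma integral_cond_DY2_eq_mul [IsFiniteMeasure μ] {E1a E20 Y11 Y21 : Ω → ℝ}
    (hA : Measurable A) (hE1a : Measurable E1a) (hE20 : Measurable E20) (hY21 : Measurable Y21)
    (hE1 : ∀ ω, E1 ω = 0 ∨ E1 ω = 1) (hE2 : ∀ ω, E2 ω = 0 ∨ E2 ω = 1)
    (hE20r : ∀ ω, E20 ω = 0 ∨ E20 ω = 1)
    (hconsE1 : ∀ᵐ ω ∂μ, A ω = a → E1 ω = E1a ω)
    (hconsE2 : ∀ᵐ ω ∂μ, A ω = a → E1 ω = 0 → E2 ω = E20 ω)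
    (hconsY21 : ∀ᵐ ω ∂μ, A ω = a → E1 ω = 0 → E2 ω = 1 → DY2 ω = Y21 ω)
    (hnecE2 : ∀ᵐ ω ∂μ, E2 ω = 0 → DY2 ω = 0)
    (hexposed : ∀ᵐ ω ∂μ, A ω = a → E1 ω = 1 → DY2 ω = 0)
    (hnull : ∀ᵐ ω ∂μ, Y11 ω = Y21 ω)
    (hexch : IndepFun A (fun ω => (1 - E1a ω) * Y21 ω * E20 ω) μ)
    (heeE2 : IndepFun E20 Y21 μ) (heeY2 : IndepFun E1a Y21 μ[|E20 ⁻¹' {1}])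
    (hμa : μ {ω | A ω = a} ≠ 0) :
    ∫ ω, DY2 ω ∂μ[|{ω | A ω = a}] =
      (∫ ω, (1 - E1a ω) * E20 ω ∂μ) * ∫ ω, Y11 ω ∂μ := by
  have hobs : ∀ᵐ ω ∂μ, A ω = a → DY2 ω = (1 - E1a ω) * Y21 ω * E20 ω := by
    filter_upwards [hconsE1, hconsE2, hconsY21, hnecE2, hexposed]
      with ω hE1a hE20 hY21 hnec hexp hAa
    rcases hE1 ω with h0 | h1
    · rw [← hE1a hAa, h0, ← hE20 hAa h0]
      rcases hE2 ω with g0 | g1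
      · rw [hnec g0, g0, mul_zero]
      · rw [hY21 hAa h0 g1, g1]
        ring
    · rw [hexp hAa h1, ← hE1a hAa, h1]
      ring
  have hX : Measurable fun ω => 1 - E1a ω := measurable_const.sub hE1a
  calc ∫ ω, DY2 ω ∂μ[|{ω | A ω = a}]
        = ∫ ω, (1 - E1a ω) * Y21 ω * E20 ω ∂μ[|{ω | A ω = a}] :=
        integral_congr_ae (ae_cond_of_ae_imp (hA (measurableSet_singleton a)) hobs)
    _ = ∫ ω, (1 - E1a ω) * Y21 ω * E20 ω ∂μ :=
        hexch.integral_cond_preimage hA ((hX.mul hY21).mul hE20).aestronglyMeasurable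
          (measurableSet_singleton a) hμa
    _ = (∫ ω, (1 - E1a ω) * E20 ω ∂μ) * ∫ ω, Y21 ω ∂μ :=
        integral_mul_mul_eq_of_indepFun_cond hX.aestronglyMeasurable hY21.aestronglyMeasurable
          hE20 hE20r heeE2 (heeY2.comp (measurable_const.sub measurable_id) measurable_id)
    _ = (∫ ω, (1 - E1a ω) * E20 ω ∂μ) * ∫ ω, Y11 ω ∂μ := by
        rw [integral_congr_ae (hnull.mono fun _ h => h.symm)]

end Arm

theorem invariant_incidence_ratios_general
    {Ω : Type*} [MeasurableSpace Ω] (μ : Measure Ω) [IsProbabilityMeasure μ]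
    (A E1 E2 DY1 DY2 : Ω → ℝ)
    (E1p : ℝ → Ω → ℝ) (E2p Y1p Y2p Wp : ℝ → ℝ → Ω → ℝ)
    (hAm : Measurable A)
    (hE1pm : ∀ a ∈ ({0, 1} : Set ℝ), Measurable (E1p a))
    (hE2pm : ∀ a ∈ ({0, 1} : Set ℝ), ∀ e1 ∈ ({0, 1} : Set ℝ), Measurable (E2p a e1))
    (hY1pm : ∀ a ∈ ({0, 1} : Set ℝ), ∀ e1 ∈ ({0, 1} : Set ℝ), Measurable (Y1p a e1))
    (hY2pm : ∀ a ∈ ({0, 1} : Set ℝ), ∀ e2 ∈ ({0, 1} : Set ℝ), Measurable (Y2p a e2))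
    (hE1r : ∀ ω, E1 ω = 0 ∨ E1 ω = 1)
    (hE2r : ∀ ω, E2 ω = 0 ∨ E2 ω = 1)
    (hDY1r : ∀ ω, DY1 ω = 0 ∨ DY1 ω = 1)
    (hE2pr : ∀ a ∈ ({0, 1} : Set ℝ), ∀ e1 ∈ ({0, 1} : Set ℝ), ∀ ω,
      E2p a e1 ω = 0 ∨ E2p a e1 ω = 1)
    (hmono : ∀ ω, DY1 ω = 1 → DY2 ω = 0)
    -- Consistency
    (hconsE1 : ∀ a ∈ ({0, 1} : Set ℝ), ∀ᵐ ω ∂μ, A ω = a → E1 ω = E1p a ω)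
    (hconsY1 : ∀ a ∈ ({0, 1} : Set ℝ), ∀ e1 ∈ ({0, 1} : Set ℝ),
      ∀ᵐ ω ∂μ, A ω = a → E1 ω = e1 → DY1 ω = Y1p a e1 ω)
    (hconsE2 : ∀ a ∈ ({0, 1} : Set ℝ), ∀ e1 ∈ ({0, 1} : Set ℝ),
      ∀ᵐ ω ∂μ, A ω = a → E1 ω = e1 → E2 ω = E2p a e1 ω)
    (hconsY2 : ∀ a ∈ ({0, 1} : Set ℝ), ∀ e2 ∈ ({0, 1} : Set ℝ),
      ∀ᵐ ω ∂μ, A ω = a → E1 ω = 0 → E2 ω = e2 → DY2 ω = Y2p a e2 ω)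
    (hconsW : ∀ a ∈ ({0, 1} : Set ℝ), ∀ e1 ∈ ({0, 1} : Set ℝ),
      ∀ᵐ ω ∂μ, A ω = a → E1 ω = e1 → DY1 ω = 0 → E2 ω = 1 → DY2 ω = Wp a e1 ω)
    -- Exposure necessity
    (hnecY1 : ∀ a ∈ ({0, 1} : Set ℝ), ∀ᵐ ω ∂μ, Y1p a 0 ω = 0)
    (hnecE2 : ∀ᵐ ω ∂μ, E2 ω = 0 → DY2 ω = 0)
    -- Exclusion restriction
    (hexcl : ∀ a ∈ ({0, 1} : Set ℝ), ∀ᵐ ω ∂μ, Wp a 1 ω = Y2p a 1 ω ∧ Wp a 0 ω = Y2p a 1 ω)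
    -- Blinding
    (hblind1 : ∀ᵐ ω ∂μ, E1p 0 ω = E1p 1 ω)
    (hblind2 : ∀ᵐ ω ∂μ, E2p 0 0 ω = E2p 1 0 ω)
    -- Treatment exchangeability
    (hexch : IndepFun A (fun ω => ![E1p 0 ω, E1p 1 ω,
      E2p 0 0 ω, E2p 0 1 ω, E2p 1 0 ω, E2p 1 1 ω,
      Y1p 0 0 ω, Y1p 0 1 ω, Y1p 1 0 ω, Y1p 1 1 ω,
      Y2p 0 0 ω, Y2p 0 1 ω, Y2p 1 0 ω, Y2p 1 1 ω,
      Wp 0 0 ω, Wp 0 1 ω, Wp 1 0 ω, Wp 1 1 ω]) μ)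
    -- Positivity
    (hpos : 0 < (μ {ω | A ω = 1}).toReal ∧ (μ {ω | A ω = 1}).toReal < 1)
    -- Exposure exchangeability
    (heeY1 : ∀ a ∈ ({0, 1} : Set ℝ), ∀ e1 ∈ ({0, 1} : Set ℝ), IndepFun (E1p a) (Y1p a e1) μ)
    (heeY2cond : ∀ a ∈ ({0, 1} : Set ℝ), ∀ e2 ∈ ({0, 1} : Set ℝ), ∀ e ∈ ({0, 1} : Set ℝ),
      IndepFun (E1p a) (Y2p a e2) (μ[|{ω | E2p a 0 ω = e}]))
    (heeE2 : ∀ a ∈ ({0, 1} : Set ℝ), ∀ e2 ∈ ({0, 1} : Set ℝ), IndepFun (E2p a 0) (Y2p a e2) μ)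
    -- Sharp null hypothesis of no waning
    (hnull : ∀ a ∈ ({0, 1} : Set ℝ), ∀ᵐ ω ∂μ, Y1p a 1 ω = Y2p a 1 ω)
    -- Nondegeneracy
    (hd1 : 0 < ∫ ω, DY1 ω ∂(μ[|{ω | A ω = 0}]))
    (hd2 : 0 < ∫ ω, DY2 ω ∂(μ[|{ω | A ω = 0}])) :
    (∫ ω, DY1 ω ∂(μ[|{ω | A ω = 1}])) / (∫ ω, DY1 ω ∂(μ[|{ω | A ω = 0}])) =
      (∫ ω, DY2 ω ∂(μ[|{ω | A ω = 1}])) / (∫ ω, DY2 ω ∂(μ[|{ω | A ω = 0}])) := by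
  have h0 : (0 : ℝ) ∈ ({0, 1} : Set ℝ) := by simp
  have h1 : (1 : ℝ) ∈ ({0, 1} : Set ℝ) := by simp
  have arm (a : ℝ) (ha : a ∈ ({0, 1} : Set ℝ)) (hμa : μ {ω | A ω = a} ≠ 0)
      (hexch₁ : IndepFun A (fun ω => E1p a ω * Y1p a 1 ω) μ)
      (hexch₂ : IndepFun A (fun ω => (1 - E1p a ω) * Y2p a 1 ω * E2p a 0 ω) μ) :
      ∫ ω, DY1 ω ∂μ[|{ω | A ω = a}] =
        (∫ ω, E1p a ω ∂μ) * ∫ ω, Y1p a 1 ω ∂μ ∧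
      ∫ ω, DY2 ω ∂μ[|{ω | A ω = a}] =
        (∫ ω, (1 - E1p a ω) * E2p a 0 ω ∂μ) * ∫ ω, Y1p a 1 ω ∂μ :=
    ⟨integral_cond_DY1_eq_mul hAm (hE1pm a ha) (hY1pm a ha 1 h1) hE1r (hconsE1 a ha)
      (hconsY1 a ha 0 h0) (hconsY1 a ha 1 h1) (hnecY1 a ha) hexch₁ (heeY1 a ha 1 h1) hμa,
    integral_cond_DY2_eq_mul hAm (hE1pm a ha) (hE2pm a ha 0 h0) (hY2pm a ha 1 h1) hE1r hE2r
      (hE2pr a ha 0 h0) (hconsE1 a ha) (hconsE2 a ha 0 h0) (hconsY2 a ha 1 h1) hnecE2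
      (ae_DY2_eq_zero_of_E1_eq_one hE2r hDY1r hmono (hconsY1 a ha 1 h1) (hconsW a ha 1 h1)
        hnecE2 ((hexcl a ha).mono fun _ h => h.1) (hnull a ha))
      (hnull a ha) hexch₂ (heeE2 a ha 1 h1) (heeY2cond a ha 1 h1 1 h1) hμa⟩
  have hμ0 : μ {ω | A ω = 0} ≠ 0 := fun h => by simp [cond_eq_zero_of_meas_eq_zero h] at hd1
  have hμ1 : μ {ω | A ω = 1} ≠ 0 := fun h => by simp [h] at hpos
  -- coordinates of `hexch`: 0, 1 ↦ E1[a]; 2, 4 ↦ E2[a,0]; 7, 9 ↦ Y1[a,1]; 11, 13 ↦ Y2[a,1]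
  have exch (ψ : (Fin 18 → ℝ) → ℝ) (hψ : Measurable ψ) := hexch.comp measurable_id hψ
  obtain ⟨hDY1₀, hDY2₀⟩ := arm 0 h0 hμ0 (exch (fun v => v 0 * v 7) (by fun_prop))
    (exch (fun v => (1 - v 0) * v 11 * v 2) (by fun_prop))
  obtain ⟨hDY1₁, hDY2₁⟩ := arm 1 h1 hμ1 (exch (fun v => v 1 * v 9) (by fun_prop))
    (exch (fun v => (1 - v 1) * v 13 * v 4) (by fun_prop))
  have hp : ∫ ω, E1p 1 ω ∂μ = ∫ ω, E1p 0 ω ∂μ :=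
    integral_congr_ae (hblind1.mono fun _ h => h.symm)
  have hq : ∫ ω, (1 - E1p 1 ω) * E2p 1 0 ω ∂μ = ∫ ω, (1 - E1p 0 ω) * E2p 0 0 ω ∂μ :=
    integral_congr_ae (by filter_upwards [hblind1, hblind2] with ω h1 h2; rw [h1, h2])
  rw [hDY1₀] at hd1 ⊢
  rw [hDY2₀] at hd2 ⊢
  rw [hDY1₁, hDY2₁, hp, hq, mul_div_mul_left _ _ (left_ne_zero_of_mul hd1.ne'),
    mul_div_mul_left _ _ (left_ne_zero_of_mul hd2.ne')]

/-- Proposition 1 (Invariant incidence ratios). -/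
theorem invariant_incidence_ratios
    {Ω : Type*} [MeasurableSpace Ω] (μ : Measure Ω) [IsProbabilityMeasure μ]
    (A E1 E2 DY1 DY2 : Ω → ℝ)
    (E1p : ℝ → Ω → ℝ) (E2p Y1p Y2p Wp : ℝ → ℝ → Ω → ℝ)
    (hAm : Measurable A) (hE1m : Measurable E1) (hE2m : Measurable E2)
    (hDY1m : Measurable DY1) (hDY2m : Measurable DY2)
    (hE1pm : ∀ a ∈ ({0, 1} : Set ℝ), Measurable (E1p a))
    (hE2pm : ∀ a ∈ ({0, 1} : Set ℝ), ∀ e1 ∈ ({0, 1} : Set ℝ), Measurable (E2p a e1))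
    (hY1pm : ∀ a ∈ ({0, 1} : Set ℝ), ∀ e1 ∈ ({0, 1} : Set ℝ), Measurable (Y1p a e1))
    (hY2pm : ∀ a ∈ ({0, 1} : Set ℝ), ∀ e2 ∈ ({0, 1} : Set ℝ), Measurable (Y2p a e2))
    (hWpm : ∀ a ∈ ({0, 1} : Set ℝ), ∀ e1 ∈ ({0, 1} : Set ℝ), Measurable (Wp a e1))
    (hAr : ∀ ω, A ω = 0 ∨ A ω = 1) (hE1r : ∀ ω, E1 ω = 0 ∨ E1 ω = 1)
    (hE2r : ∀ ω, E2 ω = 0 ∨ E2 ω = 1)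
    (hDY1r : ∀ ω, DY1 ω = 0 ∨ DY1 ω = 1) (hDY2r : ∀ ω, DY2 ω = 0 ∨ DY2 ω = 1)
    (hE1pr : ∀ a ∈ ({0, 1} : Set ℝ), ∀ ω, E1p a ω = 0 ∨ E1p a ω = 1)
    (hE2pr : ∀ a ∈ ({0, 1} : Set ℝ), ∀ e1 ∈ ({0, 1} : Set ℝ), ∀ ω,
      E2p a e1 ω = 0 ∨ E2p a e1 ω = 1)
    (hY1pr : ∀ a ∈ ({0, 1} : Set ℝ), ∀ e1 ∈ ({0, 1} : Set ℝ), ∀ ω,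
      Y1p a e1 ω = 0 ∨ Y1p a e1 ω = 1)
    (hY2pr : ∀ a ∈ ({0, 1} : Set ℝ), ∀ e2 ∈ ({0, 1} : Set ℝ), ∀ ω,
      Y2p a e2 ω = 0 ∨ Y2p a e2 ω = 1)
    (hWpr : ∀ a ∈ ({0, 1} : Set ℝ), ∀ e1 ∈ ({0, 1} : Set ℝ), ∀ ω,
      Wp a e1 ω = 0 ∨ Wp a e1 ω = 1)
    (hmono : ∀ ω, DY1 ω = 1 → DY2 ω = 0)
    -- Consistency
    (hconsE1 : ∀ a ∈ ({0, 1} : Set ℝ), ∀ᵐ ω ∂μ, A ω = a → E1 ω = E1p a ω)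
    (hconsY1 : ∀ a ∈ ({0, 1} : Set ℝ), ∀ e1 ∈ ({0, 1} : Set ℝ),
      ∀ᵐ ω ∂μ, A ω = a → E1 ω = e1 → DY1 ω = Y1p a e1 ω)
    (hconsE2 : ∀ a ∈ ({0, 1} : Set ℝ), ∀ e1 ∈ ({0, 1} : Set ℝ),
      ∀ᵐ ω ∂μ, A ω = a → E1 ω = e1 → E2 ω = E2p a e1 ω)
    (hconsY2 : ∀ a ∈ ({0, 1} : Set ℝ), ∀ e2 ∈ ({0, 1} : Set ℝ),
      ∀ᵐ ω ∂μ, A ω = a → E1 ω = 0 → E2 ω = e2 → DY2 ω = Y2p a e2 ω)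
    (hconsW : ∀ a ∈ ({0, 1} : Set ℝ), ∀ e1 ∈ ({0, 1} : Set ℝ),
      ∀ᵐ ω ∂μ, A ω = a → E1 ω = e1 → DY1 ω = 0 → E2 ω = 1 → DY2 ω = Wp a e1 ω)
    -- Exposure necessity
    (hnecY1 : ∀ a ∈ ({0, 1} : Set ℝ), ∀ᵐ ω ∂μ, Y1p a 0 ω = 0)
    (hnecY2 : ∀ a ∈ ({0, 1} : Set ℝ), ∀ᵐ ω ∂μ, Y2p a 0 ω = 0)
    (hnecE2 : ∀ᵐ ω ∂μ, E2 ω = 0 → DY2 ω = 0)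
    -- Exclusion restriction
    (hexcl : ∀ a ∈ ({0, 1} : Set ℝ), ∀ᵐ ω ∂μ, Wp a 1 ω = Y2p a 1 ω ∧ Wp a 0 ω = Y2p a 1 ω)
    -- Blinding
    (hblind1 : ∀ᵐ ω ∂μ, E1p 0 ω = E1p 1 ω)
    (hblind2 : ∀ᵐ ω ∂μ, E2p 0 0 ω = E2p 1 0 ω)
    -- Treatment exchangeability
    (hexch : IndepFun A (fun ω => ![E1p 0 ω, E1p 1 ω,
      E2p 0 0 ω, E2p 0 1 ω, E2p 1 0 ω, E2p 1 1 ω,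
      Y1p 0 0 ω, Y1p 0 1 ω, Y1p 1 0 ω, Y1p 1 1 ω,
      Y2p 0 0 ω, Y2p 0 1 ω, Y2p 1 0 ω, Y2p 1 1 ω,
      Wp 0 0 ω, Wp 0 1 ω, Wp 1 0 ω, Wp 1 1 ω]) μ)
    -- Positivity
    (hpos : 0 < (μ {ω | A ω = 1}).toReal ∧ (μ {ω | A ω = 1}).toReal < 1)
    -- Exposure exchangeability
    (heeY1 : ∀ a ∈ ({0, 1} : Set ℝ), ∀ e1 ∈ ({0, 1} : Set ℝ), IndepFun (E1p a) (Y1p a e1) μ)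
    (heeY2cond : ∀ a ∈ ({0, 1} : Set ℝ), ∀ e2 ∈ ({0, 1} : Set ℝ), ∀ e ∈ ({0, 1} : Set ℝ),
      IndepFun (E1p a) (Y2p a e2) (μ[|{ω | E2p a 0 ω = e}]))
    (heeE2 : ∀ a ∈ ({0, 1} : Set ℝ), ∀ e2 ∈ ({0, 1} : Set ℝ), IndepFun (E2p a 0) (Y2p a e2) μ)
    -- Sharp null hypothesis of no waning
    (hnull : ∀ a ∈ ({0, 1} : Set ℝ), ∀ᵐ ω ∂μ, Y1p a 1 ω = Y2p a 1 ω)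
    -- Nondegeneracy
    (hd1 : 0 < ∫ ω, DY1 ω ∂(μ[|{ω | A ω = 0}]))
    (hd2 : 0 < ∫ ω, DY2 ω ∂(μ[|{ω | A ω = 0}]))
    (hd3 : 0 < (μ {ω | E1p 0 ω = 1}).toReal)
    (hd4 : 0 < ∫ ω, Y1p 0 1 ω ∂μ) :
    (∫ ω, DY1 ω ∂(μ[|{ω | A ω = 1}])) / (∫ ω, DY1 ω ∂(μ[|{ω | A ω = 0}])) =
      (∫ ω, DY2 ω ∂(μ[|{ω | A ω = 1}])) / (∫ ω, DY2 ω ∂(μ[|{ω | A ω = 0}])) :=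
  invariant_incidence_ratios_general μ A E1 E2 DY1 DY2 E1p E2p Y1p Y2p Wp hAm hE1pm hE2pm hY1pm
    hY2pm hE1r hE2r hDY1r hE2pr hmono hconsE1 hconsY1 hconsE2 hconsY2 hconsW hnecY1 hnecE2 hexcl
    hblind1 hblind2 hexch hpos heeY1 heeY2cond heeE2 hnull hd1 hd2
end

section
/- Point identification of the first-interval challenge effect. Assume Consistency, Exposure necessity, Blinding, Treatment exchangeability, Positivity, and Exposure exchangeability, together with P(E1[0]=1) > 0, E[Y1[0,1]] > 0 and E[ΔY1 | A=0] > 0. Then E[ΔY1 | A=1]/E[ΔY1 | A=0] = E[Y1[1,1]]/E[Y1[0,1]]; that is, the first-interval observed incidence ratio IR1 equals 1 − VE1ch, the first-interval challenge effect being point identified from a standard two-arm trial. -/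
open MeasureTheory ProbabilityTheory
open scoped ProbabilityTheory

/-!
On the arm `{A = a}`, consistency and exposure necessity give `ΔY1 = E1[a] * Y1[a,1]` almost
surely. Treatment exchangeability lets one drop the conditioning on `A = a`, and exposure
exchangeability factors the expectation as `E[E1[a]] * E[Y1[a,1]]`. By blinding the exposure
factor is the same in both arms, so it cancels in the ratio.
-/

section

variable {Ω : Type*} [MeasurableSpace Ω] {μ : Measure Ω}

lemma integral_eq_measureReal_of_forall_eq_zero_or_eq_one {f : Ω → ℝ} (hf : Measurable f)
    (h01 : ∀ ω, f ω = 0 ∨ f ω = 1) : ∫ ω, f ω ∂μ = μ.real {ω | f ω = 1} := by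
  have hf_eq : f = {ω | f ω = 1}.indicator 1 := by
    funext ω
    rcases h01 ω with h | h <;> simp [h]
  conv_lhs => rw [hf_eq]
  exact integral_indicator_one (hf (measurableSet_singleton 1))

lemma ProbabilityTheory.IndepFun.map_cond_preimage [IsFiniteMeasure μ]
    {β γ : Type*} [MeasurableSpace β] [MeasurableSpace γ] {A : Ω → β} {Z : Ω → γ}
    (hAZ : A ⟂ᵢ[μ] Z) (hA : Measurable A) (hZ : Measurable Z) {s : Set β}
    (hs : MeasurableSet s) (hμs : μ (A ⁻¹' s) ≠ 0) :
    (μ[|A ⁻¹' s]).map Z = μ.map Z := by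
  ext t ht
  rw [Measure.map_apply hZ ht, Measure.map_apply hZ ht, cond_apply (hA hs),
    hAZ.measure_inter_preimage_eq_mul _ _ hs ht, ← mul_assoc,
    ENNReal.inv_mul_cancel hμs (measure_ne_top _ _), one_mul]

lemma ProbabilityTheory.IndepFun.integral_cond_preimage_s1 [IsFiniteMeasure μ]
    {β : Type*} [MeasurableSpace β] {A : Ω → β} {Z : Ω → ℝ}
    (hAZ : A ⟂ᵢ[μ] Z) (hA : Measurable A) (hZ : Measurable Z) {s : Set β}
    (hs : MeasurableSet s) (hμs : μ (A ⁻¹' s) ≠ 0) :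
    ∫ ω, Z ω ∂μ[|A ⁻¹' s] = ∫ ω, Z ω ∂μ := by
  calc ∫ ω, Z ω ∂μ[|A ⁻¹' s] = ∫ z, z ∂(μ[|A ⁻¹' s]).map Z :=
        (integral_map hZ.aemeasurable aestronglyMeasurable_id).symm
    _ = ∫ z, z ∂μ.map Z := by rw [hAZ.map_cond_preimage hA hZ hs hμs]
    _ = ∫ ω, Z ω ∂μ := integral_map hZ.aemeasurable aestronglyMeasurable_id

variable {A E1 DY1 E1a Y1a0 Y1a1 : Ω → ℝ} {a : ℝ}

lemma ae_outcome_eq_exposure_mul_challenge (hE1 : ∀ ω, E1 ω = 0 ∨ E1 ω = 1)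
    (hconsE1 : ∀ᵐ ω ∂μ, A ω = a → E1 ω = E1a ω)
    (hconsY0 : ∀ᵐ ω ∂μ, A ω = a → E1 ω = 0 → DY1 ω = Y1a0 ω)
    (hconsY1 : ∀ᵐ ω ∂μ, A ω = a → E1 ω = 1 → DY1 ω = Y1a1 ω)
    (hnec : ∀ᵐ ω ∂μ, Y1a0 ω = 0) :
    ∀ᵐ ω ∂μ, A ω = a → DY1 ω = E1a ω * Y1a1 ω := by
  filter_upwards [hconsE1, hconsY0, hconsY1, hnec] with ω hE1a hY0 hY1 hY1a0 hA
  rcases hE1 ω with hE | hE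
  · rw [hY0 hA hE, hY1a0, ← hE1a hA, hE, zero_mul]
  · rw [hY1 hA hE, ← hE1a hA, hE, one_mul]

lemma integral_cond_arm_eq_mul [IsFiniteMeasure μ] (hA : Measurable A) (hE1a : Measurable E1a)
    (hY1a1 : Measurable Y1a1) (hobs : ∀ᵐ ω ∂μ, A ω = a → DY1 ω = E1a ω * Y1a1 ω)
    (htrt : A ⟂ᵢ[μ] (E1a * Y1a1)) (hexp : E1a ⟂ᵢ[μ] Y1a1) (hμa : μ {ω | A ω = a} ≠ 0) :
    ∫ ω, DY1 ω ∂μ[|{ω | A ω = a}] = (∫ ω, E1a ω ∂μ) * ∫ ω, Y1a1 ω ∂μ := by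
  have hsa : MeasurableSet {ω | A ω = a} := hA (measurableSet_singleton a)
  calc ∫ ω, DY1 ω ∂μ[|{ω | A ω = a}] = ∫ ω, (E1a * Y1a1) ω ∂μ[|{ω | A ω = a}] :=
        integral_congr_ae <| by
          filter_upwards [cond_absolutelyContinuous.ae_le hobs, ae_cond_mem hsa] with ω h hω
          exact h hω
    _ = ∫ ω, (E1a * Y1a1) ω ∂μ :=
        htrt.integral_cond_preimage_s1 hA (hE1a.mul hY1a1) (measurableSet_singleton a) hμa
    _ = (∫ ω, E1a ω ∂μ) * ∫ ω, Y1a1 ω ∂μ :=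
        hexp.integral_mul_eq_mul_integral hE1a.aestronglyMeasurable hY1a1.aestronglyMeasurable

end

theorem first_interval_challenge_identification_general
    {Ω : Type*} [MeasurableSpace Ω] (μ : Measure Ω) [IsProbabilityMeasure μ]
    (A E1 DY1 : Ω → ℝ)
    (E1p : ℝ → Ω → ℝ) (E2p Y1p Y2p Wp : ℝ → ℝ → Ω → ℝ)
    (hAm : Measurable A)
    (hE1pm : ∀ a ∈ ({0, 1} : Set ℝ), Measurable (E1p a))
    (hY1pm : ∀ a ∈ ({0, 1} : Set ℝ), ∀ e1 ∈ ({0, 1} : Set ℝ), Measurable (Y1p a e1))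
    (hE1r : ∀ ω, E1 ω = 0 ∨ E1 ω = 1)
    (hE1pr : ∀ a ∈ ({0, 1} : Set ℝ), ∀ ω, E1p a ω = 0 ∨ E1p a ω = 1)
    -- Consistency
    (hconsE1 : ∀ a ∈ ({0, 1} : Set ℝ), ∀ᵐ ω ∂μ, A ω = a → E1 ω = E1p a ω)
    (hconsY1 : ∀ a ∈ ({0, 1} : Set ℝ), ∀ e1 ∈ ({0, 1} : Set ℝ),
      ∀ᵐ ω ∂μ, A ω = a → E1 ω = e1 → DY1 ω = Y1p a e1 ω)
    -- Exposure necessity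
    (hnecY1 : ∀ a ∈ ({0, 1} : Set ℝ), ∀ᵐ ω ∂μ, Y1p a 0 ω = 0)
    -- Blinding
    (hblind1 : ∀ᵐ ω ∂μ, E1p 0 ω = E1p 1 ω)
    -- Treatment exchangeability
    (hexch : IndepFun A (fun ω => ![E1p 0 ω, E1p 1 ω,
      E2p 0 0 ω, E2p 0 1 ω, E2p 1 0 ω, E2p 1 1 ω,
      Y1p 0 0 ω, Y1p 0 1 ω, Y1p 1 0 ω, Y1p 1 1 ω,
      Y2p 0 0 ω, Y2p 0 1 ω, Y2p 1 0 ω, Y2p 1 1 ω,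
      Wp 0 0 ω, Wp 0 1 ω, Wp 1 0 ω, Wp 1 1 ω]) μ)
    -- Positivity
    (hpos : 0 < (μ {ω | A ω = 1}).toReal ∧ (μ {ω | A ω = 1}).toReal < 1)
    -- Exposure exchangeability
    (heeY1 : ∀ a ∈ ({0, 1} : Set ℝ), ∀ e1 ∈ ({0, 1} : Set ℝ), IndepFun (E1p a) (Y1p a e1) μ)
    -- Nondegeneracy
    (hd3 : 0 < (μ {ω | E1p 0 ω = 1}).toReal)
    (hd1 : 0 < ∫ ω, DY1 ω ∂(μ[|{ω | A ω = 0}])) :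
    (∫ ω, DY1 ω ∂(μ[|{ω | A ω = 1}])) / (∫ ω, DY1 ω ∂(μ[|{ω | A ω = 0}])) =
      (∫ ω, Y1p 1 1 ω ∂μ) / (∫ ω, Y1p 0 1 ω ∂μ) := by
  have h0 : (0 : ℝ) ∈ ({0, 1} : Set ℝ) := by simp
  have h1 : (1 : ℝ) ∈ ({0, 1} : Set ℝ) := by simp
  have arm : ∀ a ∈ ({0, 1} : Set ℝ), A ⟂ᵢ[μ] (E1p a * Y1p a 1) → μ {ω | A ω = a} ≠ 0 →
      ∫ ω, DY1 ω ∂μ[|{ω | A ω = a}] = (∫ ω, E1p a ω ∂μ) * ∫ ω, Y1p a 1 ω ∂μ :=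
    fun a ha htrt hμa => integral_cond_arm_eq_mul hAm (hE1pm a ha) (hY1pm a ha 1 h1)
      (ae_outcome_eq_exposure_mul_challenge hE1r (hconsE1 a ha) (hconsY1 a ha 0 h0)
        (hconsY1 a ha 1 h1) (hnecY1 a ha)) htrt (heeY1 a ha 1 h1) hμa
  have htrt1 : A ⟂ᵢ[μ] (E1p 1 * Y1p 1 1) :=
    hexch.comp measurable_id ((measurable_pi_apply 1).mul (measurable_pi_apply 9))
  have htrt0 : A ⟂ᵢ[μ] (E1p 0 * Y1p 0 1) :=
    hexch.comp measurable_id ((measurable_pi_apply 0).mul (measurable_pi_apply 7))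
  have hμ1 : μ {ω | A ω = 1} ≠ 0 := fun h => by simp [h] at hpos
  have hμ0 : μ {ω | A ω = 0} ≠ 0 := fun h => by simp [cond_eq_zero_of_meas_eq_zero h] at hd1
  have hexposed : ∫ ω, E1p 0 ω ∂μ ≠ 0 := by
    rw [integral_eq_measureReal_of_forall_eq_zero_or_eq_one (hE1pm 0 h0) (hE1pr 0 h0)]
    exact hd3.ne'
  rw [arm 1 h1 htrt1 hμ1, arm 0 h0 htrt0 hμ0, ← integral_congr_ae hblind1,
    mul_div_mul_left _ _ hexposed]

/-- Point identification of the first-interval challenge effect: IR1 = 1 - VE1ch. -/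
theorem first_interval_challenge_identification
    {Ω : Type*} [MeasurableSpace Ω] (μ : Measure Ω) [IsProbabilityMeasure μ]
    (A E1 E2 DY1 DY2 : Ω → ℝ)
    (E1p : ℝ → Ω → ℝ) (E2p Y1p Y2p Wp : ℝ → ℝ → Ω → ℝ)
    (hAm : Measurable A) (hE1m : Measurable E1) (hE2m : Measurable E2)
    (hDY1m : Measurable DY1) (hDY2m : Measurable DY2)
    (hE1pm : ∀ a ∈ ({0, 1} : Set ℝ), Measurable (E1p a))
    (hE2pm : ∀ a ∈ ({0, 1} : Set ℝ), ∀ e1 ∈ ({0, 1} : Set ℝ), Measurable (E2p a e1))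
    (hY1pm : ∀ a ∈ ({0, 1} : Set ℝ), ∀ e1 ∈ ({0, 1} : Set ℝ), Measurable (Y1p a e1))
    (hY2pm : ∀ a ∈ ({0, 1} : Set ℝ), ∀ e2 ∈ ({0, 1} : Set ℝ), Measurable (Y2p a e2))
    (hWpm : ∀ a ∈ ({0, 1} : Set ℝ), ∀ e1 ∈ ({0, 1} : Set ℝ), Measurable (Wp a e1))
    (hAr : ∀ ω, A ω = 0 ∨ A ω = 1) (hE1r : ∀ ω, E1 ω = 0 ∨ E1 ω = 1)
    (hE2r : ∀ ω, E2 ω = 0 ∨ E2 ω = 1)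
    (hDY1r : ∀ ω, DY1 ω = 0 ∨ DY1 ω = 1) (hDY2r : ∀ ω, DY2 ω = 0 ∨ DY2 ω = 1)
    (hE1pr : ∀ a ∈ ({0, 1} : Set ℝ), ∀ ω, E1p a ω = 0 ∨ E1p a ω = 1)
    (hE2pr : ∀ a ∈ ({0, 1} : Set ℝ), ∀ e1 ∈ ({0, 1} : Set ℝ), ∀ ω,
      E2p a e1 ω = 0 ∨ E2p a e1 ω = 1)
    (hY1pr : ∀ a ∈ ({0, 1} : Set ℝ), ∀ e1 ∈ ({0, 1} : Set ℝ), ∀ ω,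
      Y1p a e1 ω = 0 ∨ Y1p a e1 ω = 1)
    (hY2pr : ∀ a ∈ ({0, 1} : Set ℝ), ∀ e2 ∈ ({0, 1} : Set ℝ), ∀ ω,
      Y2p a e2 ω = 0 ∨ Y2p a e2 ω = 1)
    (hWpr : ∀ a ∈ ({0, 1} : Set ℝ), ∀ e1 ∈ ({0, 1} : Set ℝ), ∀ ω,
      Wp a e1 ω = 0 ∨ Wp a e1 ω = 1)
    (hmono : ∀ ω, DY1 ω = 1 → DY2 ω = 0)
    -- Consistency
    (hconsE1 : ∀ a ∈ ({0, 1} : Set ℝ), ∀ᵐ ω ∂μ, A ω = a → E1 ω = E1p a ω)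
    (hconsY1 : ∀ a ∈ ({0, 1} : Set ℝ), ∀ e1 ∈ ({0, 1} : Set ℝ),
      ∀ᵐ ω ∂μ, A ω = a → E1 ω = e1 → DY1 ω = Y1p a e1 ω)
    (hconsE2 : ∀ a ∈ ({0, 1} : Set ℝ), ∀ e1 ∈ ({0, 1} : Set ℝ),
      ∀ᵐ ω ∂μ, A ω = a → E1 ω = e1 → E2 ω = E2p a e1 ω)
    (hconsY2 : ∀ a ∈ ({0, 1} : Set ℝ), ∀ e2 ∈ ({0, 1} : Set ℝ),
      ∀ᵐ ω ∂μ, A ω = a → E1 ω = 0 → E2 ω = e2 → DY2 ω = Y2p a e2 ω)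
    (hconsW : ∀ a ∈ ({0, 1} : Set ℝ), ∀ e1 ∈ ({0, 1} : Set ℝ),
      ∀ᵐ ω ∂μ, A ω = a → E1 ω = e1 → DY1 ω = 0 → E2 ω = 1 → DY2 ω = Wp a e1 ω)
    -- Exposure necessity
    (hnecY1 : ∀ a ∈ ({0, 1} : Set ℝ), ∀ᵐ ω ∂μ, Y1p a 0 ω = 0)
    (hnecY2 : ∀ a ∈ ({0, 1} : Set ℝ), ∀ᵐ ω ∂μ, Y2p a 0 ω = 0)
    (hnecE2 : ∀ᵐ ω ∂μ, E2 ω = 0 → DY2 ω = 0)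
    -- Blinding
    (hblind1 : ∀ᵐ ω ∂μ, E1p 0 ω = E1p 1 ω)
    (hblind2 : ∀ᵐ ω ∂μ, E2p 0 0 ω = E2p 1 0 ω)
    -- Treatment exchangeability
    (hexch : IndepFun A (fun ω => ![E1p 0 ω, E1p 1 ω,
      E2p 0 0 ω, E2p 0 1 ω, E2p 1 0 ω, E2p 1 1 ω,
      Y1p 0 0 ω, Y1p 0 1 ω, Y1p 1 0 ω, Y1p 1 1 ω,
      Y2p 0 0 ω, Y2p 0 1 ω, Y2p 1 0 ω, Y2p 1 1 ω,
      Wp 0 0 ω, Wp 0 1 ω, Wp 1 0 ω, Wp 1 1 ω]) μ)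
    -- Positivity
    (hpos : 0 < (μ {ω | A ω = 1}).toReal ∧ (μ {ω | A ω = 1}).toReal < 1)
    -- Exposure exchangeability
    (heeY1 : ∀ a ∈ ({0, 1} : Set ℝ), ∀ e1 ∈ ({0, 1} : Set ℝ), IndepFun (E1p a) (Y1p a e1) μ)
    (heeY2cond : ∀ a ∈ ({0, 1} : Set ℝ), ∀ e2 ∈ ({0, 1} : Set ℝ), ∀ e ∈ ({0, 1} : Set ℝ),
      IndepFun (E1p a) (Y2p a e2) (μ[|{ω | E2p a 0 ω = e}]))
    (heeE2 : ∀ a ∈ ({0, 1} : Set ℝ), ∀ e2 ∈ ({0, 1} : Set ℝ), IndepFun (E2p a 0) (Y2p a e2) μ)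
    -- Nondegeneracy
    (hd3 : 0 < (μ {ω | E1p 0 ω = 1}).toReal)
    (hd4 : 0 < ∫ ω, Y1p 0 1 ω ∂μ)
    (hd1 : 0 < ∫ ω, DY1 ω ∂(μ[|{ω | A ω = 0}])) :
    (∫ ω, DY1 ω ∂(μ[|{ω | A ω = 1}])) / (∫ ω, DY1 ω ∂(μ[|{ω | A ω = 0}])) =
      (∫ ω, Y1p 1 1 ω ∂μ) / (∫ ω, Y1p 0 1 ω ∂μ) :=
  first_interval_challenge_identification_general μ A E1 DY1 E1p E2p Y1p Y2p Wp hAm hE1pm hY1pm hE1r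
    hE1pr hconsE1 hconsY1 hnecY1 hblind1 hexch hpos heeY1 hd3 hd1
end

section
/- No second-interval events among the time-1 exposed under the null. Assume Consistency, Exposure necessity, the Exclusion restriction, and the sharp null hypothesis of no waning. Then for each a ∈ {0,1} with P(A = a) > 0: E[ΔY2 · 1{E1 = 1} | A = a] = 0; that is, under the sharp null, individuals who were exposed at time 1 experience no interval-2 events. -/
open MeasureTheory ProbabilityTheory
open scoped ProbabilityTheory

/-- No second-interval events among the time-1 exposed under the sharp null. -/
theorem no_second_interval_events_among_exposed
    {Ω : Type*} [MeasurableSpace Ω] (μ : Measure Ω) [IsProbabilityMeasure μ]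
    (A E1 E2 DY1 DY2 : Ω → ℝ)
    (E1p : ℝ → Ω → ℝ) (E2p Y1p Y2p Wp : ℝ → ℝ → Ω → ℝ)
    (hAm : Measurable A) (hE1m : Measurable E1) (hE2m : Measurable E2)
    (hDY1m : Measurable DY1) (hDY2m : Measurable DY2)
    (hE1pm : ∀ a ∈ ({0, 1} : Set ℝ), Measurable (E1p a))
    (hE2pm : ∀ a ∈ ({0, 1} : Set ℝ), ∀ e1 ∈ ({0, 1} : Set ℝ), Measurable (E2p a e1))
    (hY1pm : ∀ a ∈ ({0, 1} : Set ℝ), ∀ e1 ∈ ({0, 1} : Set ℝ), Measurable (Y1p a e1))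
    (hY2pm : ∀ a ∈ ({0, 1} : Set ℝ), ∀ e2 ∈ ({0, 1} : Set ℝ), Measurable (Y2p a e2))
    (hWpm : ∀ a ∈ ({0, 1} : Set ℝ), ∀ e1 ∈ ({0, 1} : Set ℝ), Measurable (Wp a e1))
    (hAr : ∀ ω, A ω = 0 ∨ A ω = 1) (hE1r : ∀ ω, E1 ω = 0 ∨ E1 ω = 1)
    (hE2r : ∀ ω, E2 ω = 0 ∨ E2 ω = 1)
    (hDY1r : ∀ ω, DY1 ω = 0 ∨ DY1 ω = 1) (hDY2r : ∀ ω, DY2 ω = 0 ∨ DY2 ω = 1)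
    (hE1pr : ∀ a ∈ ({0, 1} : Set ℝ), ∀ ω, E1p a ω = 0 ∨ E1p a ω = 1)
    (hE2pr : ∀ a ∈ ({0, 1} : Set ℝ), ∀ e1 ∈ ({0, 1} : Set ℝ), ∀ ω,
      E2p a e1 ω = 0 ∨ E2p a e1 ω = 1)
    (hY1pr : ∀ a ∈ ({0, 1} : Set ℝ), ∀ e1 ∈ ({0, 1} : Set ℝ), ∀ ω,
      Y1p a e1 ω = 0 ∨ Y1p a e1 ω = 1)
    (hY2pr : ∀ a ∈ ({0, 1} : Set ℝ), ∀ e2 ∈ ({0, 1} : Set ℝ), ∀ ω,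
      Y2p a e2 ω = 0 ∨ Y2p a e2 ω = 1)
    (hWpr : ∀ a ∈ ({0, 1} : Set ℝ), ∀ e1 ∈ ({0, 1} : Set ℝ), ∀ ω,
      Wp a e1 ω = 0 ∨ Wp a e1 ω = 1)
    (hmono : ∀ ω, DY1 ω = 1 → DY2 ω = 0)
    -- Consistency
    (hconsE1 : ∀ a ∈ ({0, 1} : Set ℝ), ∀ᵐ ω ∂μ, A ω = a → E1 ω = E1p a ω)
    (hconsY1 : ∀ a ∈ ({0, 1} : Set ℝ), ∀ e1 ∈ ({0, 1} : Set ℝ),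
      ∀ᵐ ω ∂μ, A ω = a → E1 ω = e1 → DY1 ω = Y1p a e1 ω)
    (hconsE2 : ∀ a ∈ ({0, 1} : Set ℝ), ∀ e1 ∈ ({0, 1} : Set ℝ),
      ∀ᵐ ω ∂μ, A ω = a → E1 ω = e1 → E2 ω = E2p a e1 ω)
    (hconsY2 : ∀ a ∈ ({0, 1} : Set ℝ), ∀ e2 ∈ ({0, 1} : Set ℝ),
      ∀ᵐ ω ∂μ, A ω = a → E1 ω = 0 → E2 ω = e2 → DY2 ω = Y2p a e2 ω)
    (hconsW : ∀ a ∈ ({0, 1} : Set ℝ), ∀ e1 ∈ ({0, 1} : Set ℝ),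
      ∀ᵐ ω ∂μ, A ω = a → E1 ω = e1 → DY1 ω = 0 → E2 ω = 1 → DY2 ω = Wp a e1 ω)
    -- Exposure necessity
    (hnecY1 : ∀ a ∈ ({0, 1} : Set ℝ), ∀ᵐ ω ∂μ, Y1p a 0 ω = 0)
    (hnecY2 : ∀ a ∈ ({0, 1} : Set ℝ), ∀ᵐ ω ∂μ, Y2p a 0 ω = 0)
    (hnecE2 : ∀ᵐ ω ∂μ, E2 ω = 0 → DY2 ω = 0)
    -- Exclusion restriction
    (hexcl : ∀ a ∈ ({0, 1} : Set ℝ), ∀ᵐ ω ∂μ, Wp a 1 ω = Y2p a 1 ω ∧ Wp a 0 ω = Y2p a 1 ω)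
    -- Sharp null hypothesis of no waning
    (hnull : ∀ a ∈ ({0, 1} : Set ℝ), ∀ᵐ ω ∂μ, Y1p a 1 ω = Y2p a 1 ω)
    :
    ∀ a ∈ ({0, 1} : Set ℝ), 0 < (μ {ω | A ω = a}).toReal →
      (∫ ω in {ω | E1 ω = 1}, DY2 ω ∂(μ[|{ω | A ω = a}])) = 0 := by

  intro a ha _
  have h1 : ∀ᵐ ω ∂μ, (A ω = a ∧ E1 ω = 1) → DY2 ω = 0 := by
    have h1mem : (1:ℝ) ∈ ({0,1} : Set ℝ) := by simp
    filter_upwards [hconsY1 a ha 1 h1mem, hnull a ha, hexcl a ha, hconsW a ha 1 h1mem,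
      hnecE2] with ω hY1 hn he hw hE2
    rintro ⟨hA, hE1⟩
    rcases hDY1r ω with hd1 | hd1
    · rcases hE2r ω with he2 | he2
      · exact hE2 he2
      · rw [hw hA hE1 hd1 he2, he.1, ← hn, ← hY1 hA hE1, hd1]
    · exact hmono ω hd1
  have hs : MeasurableSet ({ω | E1 ω = 1} ∩ {ω | A ω = a}) :=
    (hE1m (measurableSet_singleton 1)).inter (hAm (measurableSet_singleton a))
  have h2 : DY2 =ᵐ[(μ[|{ω | A ω = a}]).restrict {ω | E1 ω = 1}] 0 := by
    have ht : MeasurableSet {ω | E1 ω = (1:ℝ)} := hE1m (measurableSet_singleton 1)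
    rw [ProbabilityTheory.cond, Measure.restrict_smul, Measure.restrict_restrict ht]
    refine Filter.Eventually.filter_mono (Measure.ae_smul_measure_le _) ?_
    rw [ae_restrict_iff' hs]
    filter_upwards [h1] with ω h hω
    exact h ⟨hω.2, hω.1⟩
  rw [MeasureTheory.integral_congr_ae h2]
  simp
end

section
/- Equivalence of population-level and individual-level no waning under sharp no waning of the placebo. Let p : {0,1}^4 → ℝ be nonnegative with total sum 1, indexing principal strata by s = (s1, s2, s3, s4) = (y1 under vaccine, y1 under placebo, y2 under vaccine, y2 under placebo). Assume sharp no waning of the placebo: p(s) = 0 whenever s2 ≠ s4. Write N1 := Σ_{s: s1=1} p(s), D1 := Σ_{s: s2=1} p(s), N2 := Σ_{s: s3=1} p(s), D2 := Σ_{s: s4=1} p(s), and assume D1 > 0. Then D1 = D2, and the equality of challenge effects 1 − N1/D1 = 1 − N2/D2 holds if and only if Σ_{s: s1=1, s3=0} p(s) = Σ_{s: s1=0, s3=1} p(s); i.e., the population-level challenge effects at the two times are equal exactly when the probability mass transitioning from helped/harmed strata in the waning direction equals the mass transitioning in the improving direction. -/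
/-! Under sharp no waning of the placebo, `D1` and `D2` are both the mass of the strata with
`s2 = s4 = 1`, so the two challenge effects agree iff `N1 = N2`. Splitting `N1` on `s3` and `N2`
on `s1`, both contain the mass of the strata with `s1 = s3 = 1` and otherwise consist of one
transition term each. -/

theorem sum_sum_sum_eq_of_offDiag_eq_zero {α β γ M : Type*} [Fintype α] [Fintype β] [Fintype γ]
    [AddCommMonoid M] (p : α → γ → β → γ → M) (hp : ∀ a x b y, x ≠ y → p a x b y = 0) (x : γ) :
    ∑ a, ∑ b, ∑ y, p a x b y = ∑ a, ∑ y, ∑ b, p a y b x := by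
  refine Fintype.sum_congr _ _ fun a => ?_
  calc ∑ b, ∑ y, p a x b y = ∑ b, p a x b x :=
        Fintype.sum_congr _ _ fun b => Fintype.sum_eq_single x fun y hy => hp a x b y hy.symm
    _ = ∑ y, ∑ b, p a y b x :=
        (Fintype.sum_eq_single x fun y hy => Finset.sum_eq_zero fun b _ => hp a y b x hy).symm

theorem sum_bool_row_eq_sum_bool_col_iff {M : Type*} [AddCancelCommMonoid M] (q : Bool → Bool → M) :
    ∑ b, q true b = ∑ a, q a true ↔ q true false = q false true := by
  rw [Fintype.sum_bool, Fintype.sum_bool, add_right_inj]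

theorem population_vs_individual_no_waning_general
    (p : Bool → Bool → Bool → Bool → ℝ)
    -- sharp no waning of the placebo: no mass on strata with s2 ≠ s4
    (hplacebo : ∀ s1 s2 s3 s4, s2 ≠ s4 → p s1 s2 s3 s4 = 0)
    -- D1 > 0
    (hD1 : 0 < ∑ s1 : Bool, ∑ s3 : Bool, ∑ s4 : Bool, p s1 true s3 s4) :
    (∑ s1 : Bool, ∑ s3 : Bool, ∑ s4 : Bool, p s1 true s3 s4) =
      (∑ s1 : Bool, ∑ s2 : Bool, ∑ s3 : Bool, p s1 s2 s3 true) ∧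
    (1 - (∑ s2 : Bool, ∑ s3 : Bool, ∑ s4 : Bool, p true s2 s3 s4) /
          (∑ s1 : Bool, ∑ s3 : Bool, ∑ s4 : Bool, p s1 true s3 s4) =
        1 - (∑ s1 : Bool, ∑ s2 : Bool, ∑ s4 : Bool, p s1 s2 true s4) /
          (∑ s1 : Bool, ∑ s2 : Bool, ∑ s3 : Bool, p s1 s2 s3 true) ↔
      (∑ s2 : Bool, ∑ s4 : Bool, p true s2 false s4) =
        (∑ s2 : Bool, ∑ s4 : Bool, p false s2 true s4)) := by
  have hD : (∑ s1, ∑ s3, ∑ s4, p s1 true s3 s4) = ∑ s1, ∑ s2, ∑ s3, p s1 s2 s3 true :=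
    sum_sum_sum_eq_of_offDiag_eq_zero p hplacebo true
  refine ⟨hD, ?_⟩
  rw [← hD, sub_right_inj, div_left_inj' hD1.ne',
    Finset.sum_comm (f := fun s2 s3 => ∑ s4, p true s2 s3 s4)]
  exact sum_bool_row_eq_sum_bool_col_iff fun s1 s3 => ∑ s2, ∑ s4, p s1 s2 s3 s4

/-- Equivalence of population-level and individual-level no waning under sharp no waning of
the placebo. Strata are indexed by `(s1, s2, s3, s4)` = (interval-1 outcome under vaccine,
interval-1 outcome under placebo, interval-2 outcome under vaccine, interval-2 outcome under
placebo), with `true` playing the role of 1. -/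
theorem population_vs_individual_no_waning
    (p : Bool → Bool → Bool → Bool → ℝ)
    (hnonneg : ∀ s1 s2 s3 s4, 0 ≤ p s1 s2 s3 s4)
    (hsum : ∑ s1 : Bool, ∑ s2 : Bool, ∑ s3 : Bool, ∑ s4 : Bool, p s1 s2 s3 s4 = 1)
    -- sharp no waning of the placebo: no mass on strata with s2 ≠ s4
    (hplacebo : ∀ s1 s2 s3 s4, s2 ≠ s4 → p s1 s2 s3 s4 = 0)
    -- D1 > 0
    (hD1 : 0 < ∑ s1 : Bool, ∑ s3 : Bool, ∑ s4 : Bool, p s1 true s3 s4) :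
    (∑ s1 : Bool, ∑ s3 : Bool, ∑ s4 : Bool, p s1 true s3 s4) =
      (∑ s1 : Bool, ∑ s2 : Bool, ∑ s3 : Bool, p s1 s2 s3 true) ∧
    (1 - (∑ s2 : Bool, ∑ s3 : Bool, ∑ s4 : Bool, p true s2 s3 s4) /
          (∑ s1 : Bool, ∑ s3 : Bool, ∑ s4 : Bool, p s1 true s3 s4) =
        1 - (∑ s1 : Bool, ∑ s2 : Bool, ∑ s4 : Bool, p s1 s2 true s4) /
          (∑ s1 : Bool, ∑ s2 : Bool, ∑ s3 : Bool, p s1 s2 s3 true) ↔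
      (∑ s2 : Bool, ∑ s4 : Bool, p true s2 false s4) =
        (∑ s2 : Bool, ∑ s4 : Bool, p false s2 true s4)) :=
  population_vs_individual_no_waning_general p hplacebo hD1
end

section
/- Second-interval incidence decomposition under the alternative (Appendix D). Assume Consistency, Exposure necessity, the Exclusion restriction, Treatment exchangeability, Positivity, Exposure exchangeability, and Extended exposure exchangeability, together with 0 < P(E1[a]=1) < 1 and P(E1[a]=1, Y1[a,1]=0) > 0 for the given a ∈ {0,1}. Then E[ΔY2 | A=a] = P(Y2[a,1]=1) · P(E2[a,0]=1 | E1[a]=0) · P(E1[a]=0) + P(Y2[a,1]=1, Y1[a,1]=0) · P(E2[a,1]=1 | E1[a]=1, Y1[a,1]=0) · P(E1[a]=1). -/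
/-!
An interval-2 event requires exposure at time 2 (exposure necessity) and no interval-1 event, so on
`{A = a}` consistency identifies `{ΔY2 = 1}`, almost surely, with the disjoint union of the
potential-outcome events `{E1[a] = 0, E2[a,0] = 1, Y2[a,1] = 1}` and
`{E1[a] = 1, Y1[a,1] = 0, E2[a,1] = 1, W[a,1] = 1}`. Treatment exchangeability removes the
conditioning on `A = a`. The first event factors by exposure exchangeability, the second by extended
exposure exchangeability inside the subpopulation `Y1[a,1] = 0`, where `E1[a]` keeps its law because
it is independent of `Y1[a,1]`; the exclusion restriction finally turns `W[a,1]` into `Y2[a,1]`.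
-/

open MeasureTheory ProbabilityTheory
open scoped ProbabilityTheory

namespace ProbabilityTheory

variable {Ω : Type*} [MeasurableSpace Ω] {μ : Measure Ω}

lemma cond_apply_eq_of_measure_inter_eq_mul [IsFiniteMeasure μ] {s t : Set Ω}
    (hs : MeasurableSet s) (hs₀ : μ s ≠ 0) (h : μ (s ∩ t) = μ s * μ t) : μ[t|s] = μ t := by
  rw [cond_apply hs, h, ← mul_assoc, ENNReal.inv_mul_cancel hs₀ (measure_ne_top μ s), one_mul]

lemma IndepFun.cond_setOf_eq_apply [IsFiniteMeasure μ] {β γ : Type*} [MeasurableSpace β]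
    [MeasurableSingletonClass β] [MeasurableSpace γ] {A : Ω → β} {V : Ω → γ}
    (h : IndepFun A V μ) (hA : Measurable A) {a : β} (ha₀ : μ {ω | A ω = a} ≠ 0) {t : Set Ω}
    (ht : MeasurableSet[MeasurableSpace.comap V ‹_›] t) : μ[t|{ω | A ω = a}] = μ t := by
  obtain ⟨S, hS, rfl⟩ := ht
  exact cond_apply_eq_of_measure_inter_eq_mul (hA (measurableSet_singleton a)) ha₀
    (h.measure_inter_preimage_eq_mul {a} S (measurableSet_singleton a) hS)

lemma measure_inter_inter_eq_mul_of_cond [IsFiniteMeasure μ] {s t u : Set Ω}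
    (hs : MeasurableSet s) (hst : μ (s ∩ t) = μ s * μ t) (hut : μ[u ∩ t|s] = μ[u|s] * μ[t|s]) :
    μ (s ∩ u ∩ t) = μ (s ∩ u) * μ t := by
  rcases eq_or_ne (μ s) 0 with hs₀ | hs₀
  · simp [measure_mono_null (Set.inter_subset_left.trans Set.inter_subset_left) hs₀,
      measure_mono_null Set.inter_subset_left hs₀]
  calc μ (s ∩ u ∩ t) = μ[u ∩ t|s] * μ s := by rw [cond_mul_eq_inter hs, Set.inter_assoc]
    _ = μ[u|s] * μ s * μ[t|s] := by rw [hut]; ring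
    _ = μ (s ∩ u) * μ t := by
      rw [cond_mul_eq_inter hs, cond_apply_eq_of_measure_inter_eq_mul hs hs₀ hst]

lemma cond_apply_eq_add_of_ae_iff {s u t₁ t₂ : Set Ω} (hs : MeasurableSet s)
    (ht₂ : MeasurableSet t₂) (hd : Disjoint t₁ t₂)
    (h : ∀ᵐ ω ∂μ, ω ∈ s → (ω ∈ u ↔ ω ∈ t₁ ∨ ω ∈ t₂)) : μ[u|s] = μ[t₁|s] + μ[t₂|s] := by
  rw [← measure_union hd ht₂]
  refine measure_congr (Filter.eventuallyEq_set.2 ?_)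
  filter_upwards [cond_absolutelyContinuous h, ae_cond_mem hs] with ω hω hωs using hω hωs

lemma integral_eq_measure_setOf_eq_one {X : Ω → ℝ} (hX : Measurable X)
    (hX₀₁ : ∀ ω, X ω = 0 ∨ X ω = 1) : ∫ ω, X ω ∂μ = (μ {ω | X ω = 1}).toReal := by
  have hm : MeasurableSet {ω | X ω = 1} := hX (measurableSet_singleton 1)
  rw [← Measure.real_def, ← integral_indicator_one hm]
  congr 1 with ω
  rcases hX₀₁ ω with h | h <;> simp [h]

lemma measure_setOf_eq_ne_zero_of_zero_one [IsProbabilityMeasure μ] {X : Ω → ℝ}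
    (hX : Measurable X) (hX₀₁ : ∀ ω, X ω = 0 ∨ X ω = 1) (h₀ : 0 < (μ {ω | X ω = 1}).toReal)
    (h₁ : (μ {ω | X ω = 1}).toReal < 1) {x : ℝ} (hx : x ∈ ({0, 1} : Set ℝ)) :
    μ {ω | X ω = x} ≠ 0 := by
  rcases hx with rfl | rfl
  · have hcompl : {ω | X ω = 0} = {ω | X ω = 1}ᶜ := by
      ext ω; rcases hX₀₁ ω with h | h <;> simp [h]
    have hm : MeasurableSet {ω | X ω = 1} := hX (measurableSet_singleton 1)
    rw [hcompl, prob_compl_eq_one_sub hm]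
    refine (tsub_pos_of_lt ?_).ne'
    exact (ENNReal.toReal_lt_toReal (measure_ne_top _ _) ENNReal.one_ne_top).1 (by simpa using h₁)
  · exact (ENNReal.toReal_pos_iff.1 h₀).1.ne'

lemma IndepFun.measure_inter_setOf_eq_mul {β γ : Type*} [MeasurableSpace β] [MeasurableSpace γ]
    [MeasurableSingletonClass β] [MeasurableSingletonClass γ] {X : Ω → β} {Y : Ω → γ}
    (h : IndepFun X Y μ) (x : β) (y : γ) :
    μ ({ω | X ω = x} ∩ {ω | Y ω = y}) = μ {ω | X ω = x} * μ {ω | Y ω = y} :=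
  h.measure_inter_preimage_eq_mul {x} {y} (measurableSet_singleton x) (measurableSet_singleton y)

end ProbabilityTheory

section SecondInterval

variable {Ω : Type*}

def potentialOutcomes (E1p : ℝ → Ω → ℝ) (E2p Y1p Y2p Wp : ℝ → ℝ → Ω → ℝ) (ω : Ω) :
    Fin 18 → ℝ :=
  ![E1p 0 ω, E1p 1 ω, E2p 0 0 ω, E2p 0 1 ω, E2p 1 0 ω, E2p 1 1 ω,
    Y1p 0 0 ω, Y1p 0 1 ω, Y1p 1 0 ω, Y1p 1 1 ω, Y2p 0 0 ω, Y2p 0 1 ω, Y2p 1 0 ω, Y2p 1 1 ω,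
    Wp 0 0 ω, Wp 0 1 ω, Wp 1 0 ω, Wp 1 1 ω]

lemma measurableSet_comap_potentialOutcomes (E1p : ℝ → Ω → ℝ) (E2p Y1p Y2p Wp : ℝ → ℝ → Ω → ℝ)
    {a : ℝ} (ha : a ∈ ({0, 1} : Set ℝ)) :
    MeasurableSet[MeasurableSpace.comap (potentialOutcomes E1p E2p Y1p Y2p Wp) MeasurableSpace.pi]
        {ω | E1p a ω = 0 ∧ E2p a 0 ω = 1 ∧ Y2p a 1 ω = 1} ∧
      MeasurableSet[MeasurableSpace.comap (potentialOutcomes E1p E2p Y1p Y2p Wp)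
        MeasurableSpace.pi] {ω | E1p a ω = 1 ∧ Y1p a 1 ω = 0 ∧ E2p a 1 ω = 1 ∧ Wp a 1 ω = 1} := by
  have hV (i : Fin 18) (x : ℝ) := ((measurable_pi_apply i).comp
    (comap_measurable (potentialOutcomes E1p E2p Y1p Y2p Wp))) (measurableSet_singleton x)
  rcases ha with rfl | rfl
  · exact ⟨(hV 0 0).inter ((hV 2 1).inter (hV 11 1)),
      (hV 0 1).inter ((hV 7 0).inter ((hV 3 1).inter (hV 15 1)))⟩
  · exact ⟨(hV 1 0).inter ((hV 4 1).inter (hV 13 1)),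
      (hV 1 1).inter ((hV 9 0).inter ((hV 5 1).inter (hV 17 1)))⟩

variable [MeasurableSpace Ω] {μ : Measure Ω}

lemma ae_second_interval_event_iff {A E1 E2 DY1 DY2 E1a E2a₀ E2a₁ Y1a Y2a Wa : Ω → ℝ} {a : ℝ}
    (hE1r : ∀ ω, E1 ω = 0 ∨ E1 ω = 1) (hE2r : ∀ ω, E2 ω = 0 ∨ E2 ω = 1)
    (hDY1r : ∀ ω, DY1 ω = 0 ∨ DY1 ω = 1) (hmono : ∀ ω, DY1 ω = 1 → DY2 ω = 0)
    (hnecE2 : ∀ᵐ ω ∂μ, E2 ω = 0 → DY2 ω = 0)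
    (hconsE1 : ∀ᵐ ω ∂μ, A ω = a → E1 ω = E1a ω)
    (hconsY1 : ∀ᵐ ω ∂μ, A ω = a → E1 ω = 1 → DY1 ω = Y1a ω)
    (hconsE2₀ : ∀ᵐ ω ∂μ, A ω = a → E1 ω = 0 → E2 ω = E2a₀ ω)
    (hconsE2₁ : ∀ᵐ ω ∂μ, A ω = a → E1 ω = 1 → E2 ω = E2a₁ ω)
    (hconsY2 : ∀ᵐ ω ∂μ, A ω = a → E1 ω = 0 → E2 ω = 1 → DY2 ω = Y2a ω)
    (hconsW : ∀ᵐ ω ∂μ, A ω = a → E1 ω = 1 → DY1 ω = 0 → E2 ω = 1 → DY2 ω = Wa ω) :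
    ∀ᵐ ω ∂μ, A ω = a → (DY2 ω = 1 ↔
      (E1a ω = 0 ∧ E2a₀ ω = 1 ∧ Y2a ω = 1) ∨ (E1a ω = 1 ∧ Y1a ω = 0 ∧ E2a₁ ω = 1 ∧ Wa ω = 1)) := by
  filter_upwards [hnecE2, hconsE1, hconsY1, hconsE2₀, hconsE2₁, hconsY2, hconsW]
    with ω hnec hE1 hY1 hE2₀ hE2₁ hY2 hW hA
  have hE2_one : DY2 ω = 1 → E2 ω = 1 := fun hD =>
    (hE2r ω).resolve_left fun h => by simp [hnec h] at hD
  have hDY1_zero : DY2 ω = 1 → DY1 ω = 0 := fun hD =>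
    (hDY1r ω).resolve_right fun h => by simp [hmono ω h] at hD
  rcases hE1r ω with h1 | h1 <;> grind

lemma measure_event_after_late_exposure [IsFiniteMeasure μ] {E1 E2 Y2 : Ω → ℝ}
    (hE1 : Measurable E1) (hE2 : Measurable E2) (hE2Y2 : IndepFun E2 Y2 μ)
    (hE1Y2 : IndepFun E1 Y2 μ[|{ω | E2 ω = 1}]) :
    μ {ω | E1 ω = 0 ∧ E2 ω = 1 ∧ Y2 ω = 1} =
      μ {ω | Y2 ω = 1} * μ[{ω | E2 ω = 1}|{ω | E1 ω = 0}] * μ {ω | E1 ω = 0} := by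
  have hE : MeasurableSet {ω | E1 ω = 0} := hE1 (measurableSet_singleton 0)
  have hF : MeasurableSet {ω | E2 ω = 1} := hE2 (measurableSet_singleton 1)
  have hfactor := measure_inter_inter_eq_mul_of_cond hF (hE2Y2.measure_inter_setOf_eq_mul 1 1)
    (hE1Y2.measure_inter_setOf_eq_mul 0 1)
  rw [mul_assoc, cond_mul_eq_inter hE, mul_comm, Set.inter_comm, ← hfactor]
  congr 1 with ω
  simp only [Set.mem_ofPred_eq, Set.mem_inter_iff]
  tauto

lemma measure_event_after_repeat_exposure [IsFiniteMeasure μ] {E1 Y1 E2 W : Ω → ℝ}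
    (hE1 : Measurable E1) (hY1 : Measurable Y1) (hE2 : Measurable E2) (hE1Y1 : IndepFun E1 Y1 μ)
    (hE2W : IndepFun E2 W μ[|{ω | Y1 ω = 0}])
    (hE1W : IndepFun E1 W μ[|{ω | Y1 ω = 0 ∧ E2 ω = 1}]) :
    μ {ω | E1 ω = 1 ∧ Y1 ω = 0 ∧ E2 ω = 1 ∧ W ω = 1} =
      μ {ω | W ω = 1 ∧ Y1 ω = 0} * μ[{ω | E2 ω = 1}|{ω | E1 ω = 1 ∧ Y1 ω = 0}] *
        μ {ω | E1 ω = 1} := by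
  set B := {ω | Y1 ω = 0}
  have hB : MeasurableSet B := hY1 (measurableSet_singleton 0)
  have hE : MeasurableSet {ω | E1 ω = 1} := hE1 (measurableSet_singleton 1)
  have hF : MeasurableSet {ω | E2 ω = 1} := hE2 (measurableSet_singleton 1)
  rcases eq_or_ne (μ B) 0 with hB₀ | hB₀
  · have hT : μ {ω | E1 ω = 1 ∧ Y1 ω = 0 ∧ E2 ω = 1 ∧ W ω = 1} = 0 :=
      measure_mono_null (fun ω hω => hω.2.1) hB₀
    have hBW : μ {ω | W ω = 1 ∧ Y1 ω = 0} = 0 := measure_mono_null (fun ω hω => hω.2) hB₀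
    rw [hT, hBW, zero_mul, zero_mul]
  set ν := μ[|B]
  have hfactor := measure_inter_inter_eq_mul_of_cond (μ := ν) hF
    (hE2W.measure_inter_setOf_eq_mul 1 1)
    (by rw [cond_cond_eq_cond_inter hB hF]; exact hE1W.measure_inter_setOf_eq_mul 1 1)
  have hνE : ν {ω | E1 ω = 1} = μ {ω | E1 ω = 1} :=
    cond_apply_eq_of_measure_inter_eq_mul hB hB₀ (by
      rw [Set.inter_comm, mul_comm]; exact hE1Y1.measure_inter_setOf_eq_mul 1 0)
  have hD : μ[|{ω | E1 ω = 1 ∧ Y1 ω = 0}] = ν[|{ω | E1 ω = 1}] := by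
    rw [cond_cond_eq_cond_inter hB hE, Set.inter_comm]; rfl
  calc μ {ω | E1 ω = 1 ∧ Y1 ω = 0 ∧ E2 ω = 1 ∧ W ω = 1}
      = ν ({ω | E2 ω = 1} ∩ {ω | E1 ω = 1} ∩ {ω | W ω = 1}) * μ B := by
        rw [cond_mul_eq_inter hB]
        congr 1 with ω
        simp only [B, Set.mem_ofPred_eq, Set.mem_inter_iff]
        tauto
    _ = ν {ω | W ω = 1} * μ B * (ν[{ω | E2 ω = 1}|{ω | E1 ω = 1}] * ν {ω | E1 ω = 1}) := by
        rw [hfactor, cond_mul_eq_inter hE, Set.inter_comm]; ring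
    _ = _ := by
        rw [cond_mul_eq_inter hB, hνE, hD, Set.inter_comm, mul_assoc]; rfl

end SecondInterval

theorem second_interval_incidence_decomposition_general
    {Ω : Type*} [MeasurableSpace Ω] (μ : Measure Ω) [IsProbabilityMeasure μ]
    (A E1 E2 DY1 DY2 : Ω → ℝ)
    (E1p : ℝ → Ω → ℝ) (E2p Y1p Y2p Wp : ℝ → ℝ → Ω → ℝ)
    (hAm : Measurable A)
    (hDY2m : Measurable DY2)
    (hE1pm : ∀ a ∈ ({0, 1} : Set ℝ), Measurable (E1p a))
    (hE2pm : ∀ a ∈ ({0, 1} : Set ℝ), ∀ e1 ∈ ({0, 1} : Set ℝ), Measurable (E2p a e1))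
    (hY1pm : ∀ a ∈ ({0, 1} : Set ℝ), ∀ e1 ∈ ({0, 1} : Set ℝ), Measurable (Y1p a e1))
    (hWpm : ∀ a ∈ ({0, 1} : Set ℝ), ∀ e1 ∈ ({0, 1} : Set ℝ), Measurable (Wp a e1))
    (hAr : ∀ ω, A ω = 0 ∨ A ω = 1) (hE1r : ∀ ω, E1 ω = 0 ∨ E1 ω = 1)
    (hE2r : ∀ ω, E2 ω = 0 ∨ E2 ω = 1)
    (hDY1r : ∀ ω, DY1 ω = 0 ∨ DY1 ω = 1) (hDY2r : ∀ ω, DY2 ω = 0 ∨ DY2 ω = 1)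
    (hmono : ∀ ω, DY1 ω = 1 → DY2 ω = 0)
    -- Consistency
    (hconsE1 : ∀ a ∈ ({0, 1} : Set ℝ), ∀ᵐ ω ∂μ, A ω = a → E1 ω = E1p a ω)
    (hconsY1 : ∀ a ∈ ({0, 1} : Set ℝ), ∀ e1 ∈ ({0, 1} : Set ℝ),
      ∀ᵐ ω ∂μ, A ω = a → E1 ω = e1 → DY1 ω = Y1p a e1 ω)
    (hconsE2 : ∀ a ∈ ({0, 1} : Set ℝ), ∀ e1 ∈ ({0, 1} : Set ℝ),
      ∀ᵐ ω ∂μ, A ω = a → E1 ω = e1 → E2 ω = E2p a e1 ω)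
    (hconsY2 : ∀ a ∈ ({0, 1} : Set ℝ), ∀ e2 ∈ ({0, 1} : Set ℝ),
      ∀ᵐ ω ∂μ, A ω = a → E1 ω = 0 → E2 ω = e2 → DY2 ω = Y2p a e2 ω)
    (hconsW : ∀ a ∈ ({0, 1} : Set ℝ), ∀ e1 ∈ ({0, 1} : Set ℝ),
      ∀ᵐ ω ∂μ, A ω = a → E1 ω = e1 → DY1 ω = 0 → E2 ω = 1 → DY2 ω = Wp a e1 ω)
    -- Exposure necessity
    (hnecE2 : ∀ᵐ ω ∂μ, E2 ω = 0 → DY2 ω = 0)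
    -- Exclusion restriction
    (hexcl : ∀ a ∈ ({0, 1} : Set ℝ), ∀ᵐ ω ∂μ, Wp a 1 ω = Y2p a 1 ω ∧ Wp a 0 ω = Y2p a 1 ω)
    -- Treatment exchangeability
    (hexch : IndepFun A (fun ω => ![E1p 0 ω, E1p 1 ω,
      E2p 0 0 ω, E2p 0 1 ω, E2p 1 0 ω, E2p 1 1 ω,
      Y1p 0 0 ω, Y1p 0 1 ω, Y1p 1 0 ω, Y1p 1 1 ω,
      Y2p 0 0 ω, Y2p 0 1 ω, Y2p 1 0 ω, Y2p 1 1 ω,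
      Wp 0 0 ω, Wp 0 1 ω, Wp 1 0 ω, Wp 1 1 ω]) μ)
    -- Positivity
    (hpos : 0 < (μ {ω | A ω = 1}).toReal ∧ (μ {ω | A ω = 1}).toReal < 1)
    -- Exposure exchangeability
    (heeY1 : ∀ a ∈ ({0, 1} : Set ℝ), ∀ e1 ∈ ({0, 1} : Set ℝ), IndepFun (E1p a) (Y1p a e1) μ)
    (heeY2cond : ∀ a ∈ ({0, 1} : Set ℝ), ∀ e2 ∈ ({0, 1} : Set ℝ), ∀ e ∈ ({0, 1} : Set ℝ),
      IndepFun (E1p a) (Y2p a e2) (μ[|{ω | E2p a 0 ω = e}]))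
    (heeE2 : ∀ a ∈ ({0, 1} : Set ℝ), ∀ e2 ∈ ({0, 1} : Set ℝ), IndepFun (E2p a 0) (Y2p a e2) μ)
    -- Extended exposure exchangeability
    (hextee1 : ∀ a ∈ ({0, 1} : Set ℝ), ∀ e ∈ ({0, 1} : Set ℝ),
      IndepFun (E1p a) (Wp a 1) (μ[|{ω | Y1p a 1 ω = 0 ∧ E2p a 1 ω = e}]))
    (hextee2 : ∀ a ∈ ({0, 1} : Set ℝ),
      IndepFun (E2p a 1) (Wp a 1) (μ[|{ω | Y1p a 1 ω = 0}]))
    (a : ℝ) (ha : a ∈ ({0, 1} : Set ℝ)) :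
    (∫ ω, DY2 ω ∂(μ[|{ω | A ω = a}])) =
      (μ {ω | Y2p a 1 ω = 1}).toReal *
        ((μ[|{ω | E1p a ω = 0}]) {ω | E2p a 0 ω = 1}).toReal *
        (μ {ω | E1p a ω = 0}).toReal +
      (μ {ω | Y2p a 1 ω = 1 ∧ Y1p a 1 ω = 0}).toReal *
        ((μ[|{ω | E1p a ω = 1 ∧ Y1p a 1 ω = 0}]) {ω | E2p a 1 ω = 1}).toReal *
        (μ {ω | E1p a ω = 1}).toReal := by
  have h0 : (0 : ℝ) ∈ ({0, 1} : Set ℝ) := by norm_num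
  have h1 : (1 : ℝ) ∈ ({0, 1} : Set ℝ) := by norm_num
  have hA₀ := measure_setOf_eq_ne_zero_of_zero_one hAm hAr hpos.1 hpos.2 ha
  have hsplit := ae_second_interval_event_iff hE1r hE2r hDY1r hmono hnecE2 (hconsE1 a ha)
    (hconsY1 a ha 1 h1) (hconsE2 a ha 0 h0) (hconsE2 a ha 1 h1) (hconsY2 a ha 1 h1)
    (hconsW a ha 1 h1)
  have hdisj : Disjoint {ω | E1p a ω = 0 ∧ E2p a 0 ω = 1 ∧ Y2p a 1 ω = 1}
      {ω | E1p a ω = 1 ∧ Y1p a 1 ω = 0 ∧ E2p a 1 ω = 1 ∧ Wp a 1 ω = 1} :=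
    Set.disjoint_left.2 fun ω h₀ h₁ => zero_ne_one (h₀.1.symm.trans h₁.1)
  have hrepeat : MeasurableSet
      {ω | E1p a ω = 1 ∧ Y1p a 1 ω = 0 ∧ E2p a 1 ω = 1 ∧ Wp a 1 ω = 1} :=
    (measurableSet_eq_fun (hE1pm a ha) measurable_const).inter <|
      (measurableSet_eq_fun (hY1pm a ha 1 h1) measurable_const).inter <|
      (measurableSet_eq_fun (hE2pm a ha 1 h1) measurable_const).inter <|
      measurableSet_eq_fun (hWpm a ha 1 h1) measurable_const
  have hW : μ {ω | Y2p a 1 ω = 1 ∧ Y1p a 1 ω = 0} = μ {ω | Wp a 1 ω = 1 ∧ Y1p a 1 ω = 0} :=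
    measure_congr <| Filter.eventuallyEq_set.2 <| by
      filter_upwards [hexcl a ha] with ω hω using by rw [hω.1]
  have hAa : MeasurableSet {ω | A ω = a} := hAm (measurableSet_singleton a)
  obtain ⟨hlateV, hrepeatV⟩ := measurableSet_comap_potentialOutcomes E1p E2p Y1p Y2p Wp ha
  rw [integral_eq_measure_setOf_eq_one hDY2m hDY2r,
    cond_apply_eq_add_of_ae_iff (u := {ω | DY2 ω = 1}) hAa hrepeat hdisj hsplit,
    hexch.cond_setOf_eq_apply hAm hA₀ hlateV, hexch.cond_setOf_eq_apply hAm hA₀ hrepeatV,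
    ENNReal.toReal_add (measure_ne_top _ _) (measure_ne_top _ _),
    measure_event_after_late_exposure (hE1pm a ha) (hE2pm a ha 0 h0) (heeE2 a ha 1 h1)
      (heeY2cond a ha 1 h1 1 h1),
    measure_event_after_repeat_exposure (hE1pm a ha) (hY1pm a ha 1 h1) (hE2pm a ha 1 h1)
      (heeY1 a ha 1 h1) (hextee2 a ha) (hextee1 a ha 1 h1), hW]
  simp only [ENNReal.toReal_mul]

/-- Second-interval incidence decomposition under the alternative (Appendix D). -/
theorem second_interval_incidence_decomposition
    {Ω : Type*} [MeasurableSpace Ω] (μ : Measure Ω) [IsProbabilityMeasure μ]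
    (A E1 E2 DY1 DY2 : Ω → ℝ)
    (E1p : ℝ → Ω → ℝ) (E2p Y1p Y2p Wp : ℝ → ℝ → Ω → ℝ)
    (hAm : Measurable A) (hE1m : Measurable E1) (hE2m : Measurable E2)
    (hDY1m : Measurable DY1) (hDY2m : Measurable DY2)
    (hE1pm : ∀ a ∈ ({0, 1} : Set ℝ), Measurable (E1p a))
    (hE2pm : ∀ a ∈ ({0, 1} : Set ℝ), ∀ e1 ∈ ({0, 1} : Set ℝ), Measurable (E2p a e1))
    (hY1pm : ∀ a ∈ ({0, 1} : Set ℝ), ∀ e1 ∈ ({0, 1} : Set ℝ), Measurable (Y1p a e1))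
    (hY2pm : ∀ a ∈ ({0, 1} : Set ℝ), ∀ e2 ∈ ({0, 1} : Set ℝ), Measurable (Y2p a e2))
    (hWpm : ∀ a ∈ ({0, 1} : Set ℝ), ∀ e1 ∈ ({0, 1} : Set ℝ), Measurable (Wp a e1))
    (hAr : ∀ ω, A ω = 0 ∨ A ω = 1) (hE1r : ∀ ω, E1 ω = 0 ∨ E1 ω = 1)
    (hE2r : ∀ ω, E2 ω = 0 ∨ E2 ω = 1)
    (hDY1r : ∀ ω, DY1 ω = 0 ∨ DY1 ω = 1) (hDY2r : ∀ ω, DY2 ω = 0 ∨ DY2 ω = 1)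
    (hE1pr : ∀ a ∈ ({0, 1} : Set ℝ), ∀ ω, E1p a ω = 0 ∨ E1p a ω = 1)
    (hE2pr : ∀ a ∈ ({0, 1} : Set ℝ), ∀ e1 ∈ ({0, 1} : Set ℝ), ∀ ω,
      E2p a e1 ω = 0 ∨ E2p a e1 ω = 1)
    (hY1pr : ∀ a ∈ ({0, 1} : Set ℝ), ∀ e1 ∈ ({0, 1} : Set ℝ), ∀ ω,
      Y1p a e1 ω = 0 ∨ Y1p a e1 ω = 1)
    (hY2pr : ∀ a ∈ ({0, 1} : Set ℝ), ∀ e2 ∈ ({0, 1} : Set ℝ), ∀ ω,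
      Y2p a e2 ω = 0 ∨ Y2p a e2 ω = 1)
    (hWpr : ∀ a ∈ ({0, 1} : Set ℝ), ∀ e1 ∈ ({0, 1} : Set ℝ), ∀ ω,
      Wp a e1 ω = 0 ∨ Wp a e1 ω = 1)
    (hmono : ∀ ω, DY1 ω = 1 → DY2 ω = 0)
    -- Consistency
    (hconsE1 : ∀ a ∈ ({0, 1} : Set ℝ), ∀ᵐ ω ∂μ, A ω = a → E1 ω = E1p a ω)
    (hconsY1 : ∀ a ∈ ({0, 1} : Set ℝ), ∀ e1 ∈ ({0, 1} : Set ℝ),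
      ∀ᵐ ω ∂μ, A ω = a → E1 ω = e1 → DY1 ω = Y1p a e1 ω)
    (hconsE2 : ∀ a ∈ ({0, 1} : Set ℝ), ∀ e1 ∈ ({0, 1} : Set ℝ),
      ∀ᵐ ω ∂μ, A ω = a → E1 ω = e1 → E2 ω = E2p a e1 ω)
    (hconsY2 : ∀ a ∈ ({0, 1} : Set ℝ), ∀ e2 ∈ ({0, 1} : Set ℝ),
      ∀ᵐ ω ∂μ, A ω = a → E1 ω = 0 → E2 ω = e2 → DY2 ω = Y2p a e2 ω)
    (hconsW : ∀ a ∈ ({0, 1} : Set ℝ), ∀ e1 ∈ ({0, 1} : Set ℝ),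
      ∀ᵐ ω ∂μ, A ω = a → E1 ω = e1 → DY1 ω = 0 → E2 ω = 1 → DY2 ω = Wp a e1 ω)
    -- Exposure necessity
    (hnecY1 : ∀ a ∈ ({0, 1} : Set ℝ), ∀ᵐ ω ∂μ, Y1p a 0 ω = 0)
    (hnecY2 : ∀ a ∈ ({0, 1} : Set ℝ), ∀ᵐ ω ∂μ, Y2p a 0 ω = 0)
    (hnecE2 : ∀ᵐ ω ∂μ, E2 ω = 0 → DY2 ω = 0)
    -- Exclusion restriction
    (hexcl : ∀ a ∈ ({0, 1} : Set ℝ), ∀ᵐ ω ∂μ, Wp a 1 ω = Y2p a 1 ω ∧ Wp a 0 ω = Y2p a 1 ω)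
    -- Treatment exchangeability
    (hexch : IndepFun A (fun ω => ![E1p 0 ω, E1p 1 ω,
      E2p 0 0 ω, E2p 0 1 ω, E2p 1 0 ω, E2p 1 1 ω,
      Y1p 0 0 ω, Y1p 0 1 ω, Y1p 1 0 ω, Y1p 1 1 ω,
      Y2p 0 0 ω, Y2p 0 1 ω, Y2p 1 0 ω, Y2p 1 1 ω,
      Wp 0 0 ω, Wp 0 1 ω, Wp 1 0 ω, Wp 1 1 ω]) μ)
    -- Positivity
    (hpos : 0 < (μ {ω | A ω = 1}).toReal ∧ (μ {ω | A ω = 1}).toReal < 1)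
    -- Exposure exchangeability
    (heeY1 : ∀ a ∈ ({0, 1} : Set ℝ), ∀ e1 ∈ ({0, 1} : Set ℝ), IndepFun (E1p a) (Y1p a e1) μ)
    (heeY2cond : ∀ a ∈ ({0, 1} : Set ℝ), ∀ e2 ∈ ({0, 1} : Set ℝ), ∀ e ∈ ({0, 1} : Set ℝ),
      IndepFun (E1p a) (Y2p a e2) (μ[|{ω | E2p a 0 ω = e}]))
    (heeE2 : ∀ a ∈ ({0, 1} : Set ℝ), ∀ e2 ∈ ({0, 1} : Set ℝ), IndepFun (E2p a 0) (Y2p a e2) μ)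
    -- Extended exposure exchangeability
    (hextee1 : ∀ a ∈ ({0, 1} : Set ℝ), ∀ e ∈ ({0, 1} : Set ℝ),
      IndepFun (E1p a) (Wp a 1) (μ[|{ω | Y1p a 1 ω = 0 ∧ E2p a 1 ω = e}]))
    (hextee2 : ∀ a ∈ ({0, 1} : Set ℝ),
      IndepFun (E2p a 1) (Wp a 1) (μ[|{ω | Y1p a 1 ω = 0}]))
    (a : ℝ) (ha : a ∈ ({0, 1} : Set ℝ))
    -- Nondegeneracy
    (hE1pos : 0 < (μ {ω | E1p a ω = 1}).toReal)
    (hE1lt : (μ {ω | E1p a ω = 1}).toReal < 1)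
    (hE1Y1 : 0 < (μ {ω | E1p a ω = 1 ∧ Y1p a 1 ω = 0}).toReal) :
    (∫ ω, DY2 ω ∂(μ[|{ω | A ω = a}])) =
      (μ {ω | Y2p a 1 ω = 1}).toReal *
        ((μ[|{ω | E1p a ω = 0}]) {ω | E2p a 0 ω = 1}).toReal *
        (μ {ω | E1p a ω = 0}).toReal +
      (μ {ω | Y2p a 1 ω = 1 ∧ Y1p a 1 ω = 0}).toReal *
        ((μ[|{ω | E1p a ω = 1 ∧ Y1p a 1 ω = 0}]) {ω | E2p a 1 ω = 1}).toReal *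
        (μ {ω | E1p a ω = 1}).toReal :=
  second_interval_incidence_decomposition_general μ A E1 E2 DY1 DY2 E1p E2p Y1p Y2p Wp hAm hDY2m
    hE1pm hE2pm hY1pm hWpm hAr hE1r hE2r hDY1r hDY2r hmono hconsE1 hconsY1 hconsE2 hconsY2 hconsW
    hnecE2 hexcl hexch hpos heeY1 heeY2cond heeE2 hextee1 hextee2 a ha
end

section
/- Positive bias of the second-interval incidence ratio under sharp no waning of the placebo. Assume, for both a = 0 and a = 1, the hypotheses of the second-interval incidence decomposition (Consistency, Exposure necessity, Exclusion restriction, Treatment exchangeability, Positivity, Exposure exchangeability, Extended exposure exchangeability, 0 < P(E1[a]=1) < 1 and P(E1[a]=1, Y1[a,1]=0) > 0), together with Blinding, sharp no waning of the placebo (Y1[0,1] = Y2[0,1] a.s.), E[ΔY2 | A=0] > 0 and E[Y2[0,1]] > 0. Then IR2 = (1 − VE2ch) + P(Y2[1,1]=1, Y1[1,1]=0) · P(E2[1,1]=1 | E1[1]=1, Y1[1,1]=0) · P(E1[1]=1) / E[ΔY2 | A=0]. In particular, IR2 ≥ 1 − VE2ch: the observed second-interval incidence ratio overestimates one minus the second-interval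 challenge efficacy. -/
/-!
Within arm `A = a`, consistency splits the event `ΔY2 = 1` almost surely into two events of
potential outcomes: first exposure only at time 2 followed by infection, and exposure at time 1
without infection followed by exposure and infection at time 2. Treatment exchangeability turns
their conditional probabilities given `A = a` into unconditional ones. Exposure exchangeability
factorizes the first as `P(E1[a] = 0, E2[a,0] = 1) · P(Y2[a,1] = 1)`, and blinding makes the first
factor `k` the same in both arms. Sharp no waning makes the second event null in the placebo arm,
since there `W[0,1] = Y2[0,1] = Y1[0,1]`, while in the vaccine arm extended exposure
exchangeability factorizes it into the extra term `t ≥ 0`. Hence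
`IR2 = (k y₁ + t) / (k y₀)` with `y_a = P(Y2[a,1] = 1)`.
-/

open MeasureTheory ProbabilityTheory Set
open scoped ProbabilityTheory

section ConditionalIndependence

variable {Ω β γ δ : Type*} [MeasurableSpace Ω] [MeasurableSpace β] [MeasurableSpace γ]
  [MeasurableSpace δ] {μ : Measure Ω}

theorem integral_eq_toReal_measure_of_zero_or_one {f : Ω → ℝ} (hf : Measurable f)
    (h01 : ∀ ω, f ω = 0 ∨ f ω = 1) : ∫ ω, f ω ∂μ = (μ {ω | f ω = 1}).toReal := by
  calc ∫ ω, f ω ∂μ = ∫ ω, {ω | f ω = 1}.indicator 1 ω ∂μ := by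
        congr 1 with ω
        rcases h01 ω with h | h <;> simp [h]
    _ = (μ {ω | f ω = 1}).toReal := integral_indicator_one (hf (measurableSet_singleton 1))

variable [IsFiniteMeasure μ]

theorem measure_inter_preimage_eq_mul_cond {B : Set Ω} (hB : MeasurableSet B) {f : Ω → β}
    {g : Ω → γ} (hfg : IndepFun f g μ[|B]) {s : Set β} {t : Set γ} (hs : MeasurableSet s)
    (ht : MeasurableSet t) :
    μ (B ∩ f ⁻¹' s ∩ g ⁻¹' t) = μ (B ∩ f ⁻¹' s) * μ[|B] (g ⁻¹' t) := by
  rw [inter_assoc, ← cond_mul_eq_inter hB, ← cond_mul_eq_inter hB,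
    hfg.measure_inter_preimage_eq_mul _ _ hs ht, mul_right_comm]

theorem cond_inter_preimage_eq_cond {C : Set Ω} (hC : MeasurableSet C) {h : Ω → δ} {g : Ω → γ}
    (hh : Measurable h) (hhg : IndepFun h g μ[|C]) {u : Set δ} {t : Set γ} (hu : MeasurableSet u)
    (ht : MeasurableSet t) (hCu : μ (C ∩ h ⁻¹' u) ≠ 0) :
    μ[|C ∩ h ⁻¹' u] (g ⁻¹' t) = μ[|C] (g ⁻¹' t) := by
  have hD : MeasurableSet (C ∩ h ⁻¹' u) := hC.inter (hh hu)
  rw [← ENNReal.mul_left_inj hCu (measure_ne_top μ _), cond_mul_eq_inter hD, mul_comm,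
    ← measure_inter_preimage_eq_mul_cond hC hhg hu ht]

theorem measure_inter_preimage_eq_mul_cond_of_indepFun_cond_inter {C : Set Ω}
    (hC : MeasurableSet C) {f : Ω → β} {g : Ω → γ} {h : Ω → δ} (hh : Measurable h)
    {s : Set β} {t : Set γ} {u : Set δ} (hs : MeasurableSet s) (ht : MeasurableSet t)
    (hu : MeasurableSet u)
    (hfg : IndepFun f g μ[|C ∩ h ⁻¹' u]) (hhg : IndepFun h g μ[|C]) :
    μ (C ∩ h ⁻¹' u ∩ f ⁻¹' s ∩ g ⁻¹' t) = μ (C ∩ h ⁻¹' u ∩ f ⁻¹' s) * μ[|C] (g ⁻¹' t) := by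
  rw [measure_inter_preimage_eq_mul_cond (hC.inter (hh hu)) hfg hs ht]
  rcases eq_or_ne (μ (C ∩ h ⁻¹' u)) 0 with hCu | hCu
  · simp [measure_inter_null_of_null_left _ hCu]
  · rw [cond_inter_preimage_eq_cond hC hh hhg hu ht hCu]

end ConditionalIndependence

section TreatmentArm

variable {Ω : Type*} [MeasurableSpace Ω] {μ : Measure Ω}
  {A E1 E2 DY1 DY2 E1a E20 E21 Y1 Y2 W : Ω → ℝ} {a : ℝ}

theorem ae_dy2_eq_one_iff (hE1r : ∀ ω, E1 ω = 0 ∨ E1 ω = 1) (hE2r : ∀ ω, E2 ω = 0 ∨ E2 ω = 1)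
    (hDY1r : ∀ ω, DY1 ω = 0 ∨ DY1 ω = 1) (hmono : ∀ ω, DY1 ω = 1 → DY2 ω = 0)
    (hconsE1 : ∀ᵐ ω ∂μ, A ω = a → E1 ω = E1a ω)
    (hconsY1 : ∀ᵐ ω ∂μ, A ω = a → E1 ω = 1 → DY1 ω = Y1 ω)
    (hconsE20 : ∀ᵐ ω ∂μ, A ω = a → E1 ω = 0 → E2 ω = E20 ω)
    (hconsE21 : ∀ᵐ ω ∂μ, A ω = a → E1 ω = 1 → E2 ω = E21 ω)
    (hconsY2 : ∀ᵐ ω ∂μ, A ω = a → E1 ω = 0 → E2 ω = 1 → DY2 ω = Y2 ω)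
    (hconsW : ∀ᵐ ω ∂μ, A ω = a → E1 ω = 1 → DY1 ω = 0 → E2 ω = 1 → DY2 ω = W ω)
    (hnecE2 : ∀ᵐ ω ∂μ, E2 ω = 0 → DY2 ω = 0) :
    ∀ᵐ ω ∂μ, A ω = a → (DY2 ω = 1 ↔
      (E1a ω = 0 ∧ E20 ω = 1 ∧ Y2 ω = 1) ∨ (E1a ω = 1 ∧ Y1 ω = 0 ∧ E21 ω = 1 ∧ W ω = 1)) := by
  filter_upwards [hconsE1, hconsY1, hconsE20, hconsE21, hconsY2, hconsW, hnecE2]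
    with ω cE1 cY1 cE20 cE21 cY2 cW nE2 hA
  rcases hE1r ω with h1 | h1 <;> rcases hE2r ω with h2 | h2 <;> rcases hDY1r ω with h3 | h3 <;>
    grind

theorem integral_cond_eq_add_of_indepFun [IsFiniteMeasure μ] (hAm : Measurable A)
    (hDY2m : Measurable DY2) (hDY2r : ∀ ω, DY2 ω = 0 ∨ DY2 ω = 1) (hA : μ {ω | A ω = a} ≠ 0)
    (hE1am : Measurable E1a) (hE21m : Measurable E21) (hY1m : Measurable Y1) (hWm : Measurable W)
    (hindep : IndepFun A (fun ω => ![E1a ω, E20 ω, E21 ω, Y1 ω, Y2 ω, W ω]) μ)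
    (hdecomp : ∀ᵐ ω ∂μ, A ω = a → (DY2 ω = 1 ↔
      (E1a ω = 0 ∧ E20 ω = 1 ∧ Y2 ω = 1) ∨ (E1a ω = 1 ∧ Y1 ω = 0 ∧ E21 ω = 1 ∧ W ω = 1))) :
    ∫ ω, DY2 ω ∂μ[|{ω | A ω = a}] = (μ {ω | E1a ω = 0 ∧ E20 ω = 1 ∧ Y2 ω = 1}).toReal +
      (μ {ω | E1a ω = 1 ∧ Y1 ω = 0 ∧ E21 ω = 1 ∧ W ω = 1}).toReal := by
  set S₁ := {ω | E1a ω = 0 ∧ E20 ω = 1 ∧ Y2 ω = 1}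
  set S₂ := {ω | E1a ω = 1 ∧ Y1 ω = 0 ∧ E21 ω = 1 ∧ W ω = 1}
  have hS₂ : MeasurableSet S₂ := (hE1am (measurableSet_singleton 1)).inter <|
    (hY1m (measurableSet_singleton 0)).inter <|
      (hE21m (measurableSet_singleton 1)).inter (hWm (measurableSet_singleton 1))
  have hT : MeasurableSet ({x : Fin 6 → ℝ | x 0 = 0 ∧ x 1 = 1 ∧ x 4 = 1} ∪
      {x | x 0 = 1 ∧ x 3 = 0 ∧ x 2 = 1 ∧ x 5 = 1}) := by
    refine .union (.inter ?_ (.inter ?_ ?_)) (.inter ?_ (.inter ?_ (.inter ?_ ?_))) <;>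
      exact measurable_pi_apply _ (measurableSet_singleton _)
  have hcons : μ ({ω | A ω = a} ∩ {ω | DY2 ω = 1}) = μ ({ω | A ω = a} ∩ (S₁ ∪ S₂)) := by
    refine measure_congr (Filter.eventuallyEq_set.mpr ?_)
    filter_upwards [hdecomp] with ω hω
    simp only [mem_inter_iff, mem_ofPred_eq, mem_union, S₁, S₂]
    exact and_congr_right hω
  have hexch : μ ({ω | A ω = a} ∩ (S₁ ∪ S₂)) = μ {ω | A ω = a} * μ (S₁ ∪ S₂) :=
    hindep.measure_inter_preimage_eq_mul _ _ (measurableSet_singleton a) hT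
  have hdisj : Disjoint S₁ S₂ :=
    disjoint_left.mpr fun ω h₁ h₂ => zero_ne_one (h₁.1.symm.trans h₂.1)
  rw [integral_eq_toReal_measure_of_zero_or_one hDY2m hDY2r,
    cond_apply (show MeasurableSet {ω | A ω = a} from hAm (measurableSet_singleton a)), hcons,
    hexch, ← mul_assoc,
    ENNReal.inv_mul_cancel hA (measure_ne_top μ _), one_mul, measure_union hdisj hS₂,
    ENNReal.toReal_add (measure_ne_top μ _) (measure_ne_top μ _)]

theorem measure_infected_after_late_exposure_eq_mul [IsProbabilityMeasure μ]
    (hE20m : Measurable E20) (hE1Y2 : IndepFun E1a Y2 μ[|{ω | E20 ω = 1}])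
    (hE20Y2 : IndepFun E20 Y2 μ) :
    μ {ω | E1a ω = 0 ∧ E20 ω = 1 ∧ Y2 ω = 1} =
      μ {ω | E1a ω = 0 ∧ E20 ω = 1} * μ {ω | Y2 ω = 1} := by
  have key := measure_inter_preimage_eq_mul_cond_of_indepFun_cond_inter MeasurableSet.univ hE20m
    (measurableSet_singleton 0) (measurableSet_singleton 1) (measurableSet_singleton 1)
    (f := E1a) (g := Y2) (by rwa [univ_inter]) (by rwa [cond_univ])
  rw [cond_univ] at key
  convert key using 3 <;> ext ω <;> simp only [mem_inter_iff, mem_ofPred_eq, mem_preimage,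
    mem_singleton_iff, mem_univ, true_and] <;> tauto

theorem measure_infected_after_early_exposure_eq_zero (hW : ∀ᵐ ω ∂μ, W ω = Y2 ω)
    (hY1 : ∀ᵐ ω ∂μ, Y1 ω = Y2 ω) :
    μ {ω | E1a ω = 1 ∧ Y1 ω = 0 ∧ E21 ω = 1 ∧ W ω = 1} = 0 := by
  rw [measure_eq_zero_iff_ae_notMem]
  filter_upwards [hW, hY1] with ω hWω hY1ω
  rintro ⟨-, h0, -, h1⟩
  exact zero_ne_one (h0.symm.trans (hY1ω.trans (hWω.symm.trans h1)))

theorem measure_infected_after_early_exposure_eq_mul [IsFiniteMeasure μ]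
    (hE1am : Measurable E1a) (hE21m : Measurable E21) (hY1m : Measurable Y1)
    (hW : ∀ᵐ ω ∂μ, W ω = Y2 ω) (hE1Y1 : IndepFun E1a Y1 μ)
    (hE1W : IndepFun E1a W μ[|{ω | Y1 ω = 0 ∧ E21 ω = 1}])
    (hE21W : IndepFun E21 W μ[|{ω | Y1 ω = 0}]) :
    μ {ω | E1a ω = 1 ∧ Y1 ω = 0 ∧ E21 ω = 1 ∧ W ω = 1} =
      μ {ω | Y2 ω = 1 ∧ Y1 ω = 0} * μ[|{ω | E1a ω = 1 ∧ Y1 ω = 0}] {ω | E21 ω = 1} *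
        μ {ω | E1a ω = 1} := by
  have hC : MeasurableSet {ω | Y1 ω = 0} := hY1m (measurableSet_singleton 0)
  have hchain := measure_inter_preimage_eq_mul_cond_of_indepFun_cond_inter hC hE21m
    (measurableSet_singleton 1) (measurableSet_singleton 1) (measurableSet_singleton 1) hE1W hE21W
  have hE1C : μ {ω | E1a ω = 1 ∧ Y1 ω = 0} = μ {ω | E1a ω = 1} * μ {ω | Y1 ω = 0} :=
    hE1Y1.measure_inter_preimage_eq_mul _ _ (measurableSet_singleton 1) (measurableSet_singleton 0)
  have hCE21E1 : μ ({ω | Y1 ω = 0} ∩ E21 ⁻¹' {1} ∩ E1a ⁻¹' {1}) =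
      μ[|{ω | E1a ω = 1 ∧ Y1 ω = 0}] {ω | E21 ω = 1} * μ {ω | E1a ω = 1 ∧ Y1 ω = 0} := by
    rw [cond_mul_eq_inter (show MeasurableSet {ω | E1a ω = 1 ∧ Y1 ω = 0} from
      (hE1am (measurableSet_singleton 1)).inter hC)]
    congr 1
    ext ω
    simp only [mem_inter_iff, mem_ofPred_eq, mem_preimage, mem_singleton_iff]
    tauto
  have hCW : μ {ω | Y1 ω = 0} * μ[|{ω | Y1 ω = 0}] (W ⁻¹' {1}) =
      μ {ω | Y2 ω = 1 ∧ Y1 ω = 0} := by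
    rw [mul_comm, cond_mul_eq_inter hC]
    refine measure_congr (Filter.eventuallyEq_set.mpr ?_)
    filter_upwards [hW] with ω hWω
    simp only [mem_inter_iff, mem_ofPred_eq, mem_preimage, mem_singleton_iff, hWω]
    exact and_comm
  have hset : {ω | E1a ω = 1 ∧ Y1 ω = 0 ∧ E21 ω = 1 ∧ W ω = 1} =
      {ω | Y1 ω = 0} ∩ E21 ⁻¹' {1} ∩ E1a ⁻¹' {1} ∩ W ⁻¹' {1} := by
    ext ω
    simp only [mem_inter_iff, mem_ofPred_eq, mem_preimage, mem_singleton_iff]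
    tauto
  rw [hset, hchain, hCE21E1, hE1C, ← hCW]
  ring

end TreatmentArm

theorem mul_add_div_mul_eq_and_div_le {k y₀ y₁ t : ℝ} (hky : 0 < k * y₀) (ht : 0 ≤ t) :
    (k * y₁ + t) / (k * y₀) = y₁ / y₀ + t / (k * y₀) ∧ y₁ / y₀ ≤ (k * y₁ + t) / (k * y₀) := by
  have heq : (k * y₁ + t) / (k * y₀) = y₁ / y₀ + t / (k * y₀) := by
    rw [add_div, mul_div_mul_left _ _ (left_ne_zero_of_mul hky.ne')]
  exact ⟨heq, heq ▸ le_add_of_nonneg_right (div_nonneg ht hky.le)⟩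

theorem second_interval_incidence_ratio_bias_general
    {Ω : Type*} [MeasurableSpace Ω] (μ : Measure Ω) [IsProbabilityMeasure μ]
    (A E1 E2 DY1 DY2 : Ω → ℝ)
    (E1p : ℝ → Ω → ℝ) (E2p Y1p Y2p Wp : ℝ → ℝ → Ω → ℝ)
    (hAm : Measurable A) (hDY2m : Measurable DY2)
    (hE1pm : ∀ a ∈ ({0, 1} : Set ℝ), Measurable (E1p a))
    (hE2pm : ∀ a ∈ ({0, 1} : Set ℝ), ∀ e1 ∈ ({0, 1} : Set ℝ), Measurable (E2p a e1))
    (hY1pm : ∀ a ∈ ({0, 1} : Set ℝ), ∀ e1 ∈ ({0, 1} : Set ℝ), Measurable (Y1p a e1))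
    (hY2pm : ∀ a ∈ ({0, 1} : Set ℝ), ∀ e2 ∈ ({0, 1} : Set ℝ), Measurable (Y2p a e2))
    (hWpm : ∀ a ∈ ({0, 1} : Set ℝ), ∀ e1 ∈ ({0, 1} : Set ℝ), Measurable (Wp a e1))
    (hE1r : ∀ ω, E1 ω = 0 ∨ E1 ω = 1)
    (hE2r : ∀ ω, E2 ω = 0 ∨ E2 ω = 1)
    (hDY1r : ∀ ω, DY1 ω = 0 ∨ DY1 ω = 1) (hDY2r : ∀ ω, DY2 ω = 0 ∨ DY2 ω = 1)
    (hY2pr : ∀ a ∈ ({0, 1} : Set ℝ), ∀ e2 ∈ ({0, 1} : Set ℝ), ∀ ω,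
      Y2p a e2 ω = 0 ∨ Y2p a e2 ω = 1)
    (hmono : ∀ ω, DY1 ω = 1 → DY2 ω = 0)
    -- Consistency
    (hconsE1 : ∀ a ∈ ({0, 1} : Set ℝ), ∀ᵐ ω ∂μ, A ω = a → E1 ω = E1p a ω)
    (hconsY1 : ∀ a ∈ ({0, 1} : Set ℝ), ∀ e1 ∈ ({0, 1} : Set ℝ),
      ∀ᵐ ω ∂μ, A ω = a → E1 ω = e1 → DY1 ω = Y1p a e1 ω)
    (hconsE2 : ∀ a ∈ ({0, 1} : Set ℝ), ∀ e1 ∈ ({0, 1} : Set ℝ),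
      ∀ᵐ ω ∂μ, A ω = a → E1 ω = e1 → E2 ω = E2p a e1 ω)
    (hconsY2 : ∀ a ∈ ({0, 1} : Set ℝ), ∀ e2 ∈ ({0, 1} : Set ℝ),
      ∀ᵐ ω ∂μ, A ω = a → E1 ω = 0 → E2 ω = e2 → DY2 ω = Y2p a e2 ω)
    (hconsW : ∀ a ∈ ({0, 1} : Set ℝ), ∀ e1 ∈ ({0, 1} : Set ℝ),
      ∀ᵐ ω ∂μ, A ω = a → E1 ω = e1 → DY1 ω = 0 → E2 ω = 1 → DY2 ω = Wp a e1 ω)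
    -- Exposure necessity
    (hnecE2 : ∀ᵐ ω ∂μ, E2 ω = 0 → DY2 ω = 0)
    -- Exclusion restriction
    (hexcl : ∀ a ∈ ({0, 1} : Set ℝ), ∀ᵐ ω ∂μ, Wp a 1 ω = Y2p a 1 ω ∧ Wp a 0 ω = Y2p a 1 ω)
    -- Blinding
    (hblind1 : ∀ᵐ ω ∂μ, E1p 0 ω = E1p 1 ω)
    (hblind2 : ∀ᵐ ω ∂μ, E2p 0 0 ω = E2p 1 0 ω)
    -- Treatment exchangeability
    (hexch : IndepFun A (fun ω => ![E1p 0 ω, E1p 1 ω,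
      E2p 0 0 ω, E2p 0 1 ω, E2p 1 0 ω, E2p 1 1 ω,
      Y1p 0 0 ω, Y1p 0 1 ω, Y1p 1 0 ω, Y1p 1 1 ω,
      Y2p 0 0 ω, Y2p 0 1 ω, Y2p 1 0 ω, Y2p 1 1 ω,
      Wp 0 0 ω, Wp 0 1 ω, Wp 1 0 ω, Wp 1 1 ω]) μ)
    -- Positivity
    (hpos : 0 < (μ {ω | A ω = 1}).toReal ∧ (μ {ω | A ω = 1}).toReal < 1)
    -- Exposure exchangeability
    (heeY1 : ∀ a ∈ ({0, 1} : Set ℝ), ∀ e1 ∈ ({0, 1} : Set ℝ), IndepFun (E1p a) (Y1p a e1) μ)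
    (heeY2cond : ∀ a ∈ ({0, 1} : Set ℝ), ∀ e2 ∈ ({0, 1} : Set ℝ), ∀ e ∈ ({0, 1} : Set ℝ),
      IndepFun (E1p a) (Y2p a e2) (μ[|{ω | E2p a 0 ω = e}]))
    (heeE2 : ∀ a ∈ ({0, 1} : Set ℝ), ∀ e2 ∈ ({0, 1} : Set ℝ), IndepFun (E2p a 0) (Y2p a e2) μ)
    -- Extended exposure exchangeability
    (hextee1 : ∀ a ∈ ({0, 1} : Set ℝ), ∀ e ∈ ({0, 1} : Set ℝ),
      IndepFun (E1p a) (Wp a 1) (μ[|{ω | Y1p a 1 ω = 0 ∧ E2p a 1 ω = e}]))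
    (hextee2 : ∀ a ∈ ({0, 1} : Set ℝ),
      IndepFun (E2p a 1) (Wp a 1) (μ[|{ω | Y1p a 1 ω = 0}]))
    -- Sharp no waning of the placebo
    (hnull0 : ∀ᵐ ω ∂μ, Y1p 0 1 ω = Y2p 0 1 ω)
    (hd2 : 0 < ∫ ω, DY2 ω ∂(μ[|{ω | A ω = 0}])) :
    (∫ ω, DY2 ω ∂(μ[|{ω | A ω = 1}])) / (∫ ω, DY2 ω ∂(μ[|{ω | A ω = 0}])) =
      (∫ ω, Y2p 1 1 ω ∂μ) / (∫ ω, Y2p 0 1 ω ∂μ) +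
        (μ {ω | Y2p 1 1 ω = 1 ∧ Y1p 1 1 ω = 0}).toReal *
          ((μ[|{ω | E1p 1 ω = 1 ∧ Y1p 1 1 ω = 0}]) {ω | E2p 1 1 ω = 1}).toReal *
          (μ {ω | E1p 1 ω = 1}).toReal / (∫ ω, DY2 ω ∂(μ[|{ω | A ω = 0}])) ∧
    (∫ ω, Y2p 1 1 ω ∂μ) / (∫ ω, Y2p 0 1 ω ∂μ) ≤
      (∫ ω, DY2 ω ∂(μ[|{ω | A ω = 1}])) / (∫ ω, DY2 ω ∂(μ[|{ω | A ω = 0}])) := by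
  have h0 : (0 : ℝ) ∈ ({0, 1} : Set ℝ) := by simp
  have h1 : (1 : ℝ) ∈ ({0, 1} : Set ℝ) := by simp
  have hindep : ∀ a ∈ ({0, 1} : Set ℝ), IndepFun A (fun ω =>
      ![E1p a ω, E2p a 0 ω, E2p a 1 ω, Y1p a 1 ω, Y2p a 1 ω, Wp a 1 ω]) μ := by
    rintro a (rfl | rfl)
    · exact hexch.comp (φ := id) (ψ := fun x => ![x 0, x 2, x 3, x 7, x 11, x 15])
        measurable_id (by fun_prop)
    · exact hexch.comp (φ := id) (ψ := fun x => ![x 1, x 4, x 5, x 9, x 13, x 17])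
        measurable_id (by fun_prop)
  have harm : ∀ a ∈ ({0, 1} : Set ℝ), μ {ω | A ω = a} ≠ 0 →
      ∫ ω, DY2 ω ∂μ[|{ω | A ω = a}] =
        (μ {ω | E1p a ω = 0 ∧ E2p a 0 ω = 1}).toReal * (μ {ω | Y2p a 1 ω = 1}).toReal +
          (μ {ω | E1p a ω = 1 ∧ Y1p a 1 ω = 0 ∧ E2p a 1 ω = 1 ∧ Wp a 1 ω = 1}).toReal := by
    intro a ha hA
    rw [integral_cond_eq_add_of_indepFun hAm hDY2m hDY2r hA (hE1pm a ha) (hE2pm a ha 1 h1)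
      (hY1pm a ha 1 h1) (hWpm a ha 1 h1) (hindep a ha)
      (ae_dy2_eq_one_iff hE1r hE2r hDY1r hmono (hconsE1 a ha) (hconsY1 a ha 1 h1)
        (hconsE2 a ha 0 h0) (hconsE2 a ha 1 h1) (hconsY2 a ha 1 h1) (hconsW a ha 1 h1) hnecE2),
      measure_infected_after_late_exposure_eq_mul (hE2pm a ha 0 h0) (heeY2cond a ha 1 h1 1 h1)
        (heeE2 a ha 1 h1),
      ENNReal.toReal_mul]
  have hA0 : μ {ω | A ω = 0} ≠ 0 := fun h => by simp [cond_eq_zero_of_meas_eq_zero h] at hd2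
  have hA1 : μ {ω | A ω = 1} ≠ 0 := fun h => by simp [h] at hpos
  have hblind : μ {ω | E1p 0 ω = 0 ∧ E2p 0 0 ω = 1} = μ {ω | E1p 1 ω = 0 ∧ E2p 1 0 ω = 1} :=
    measure_congr <| Filter.eventuallyEq_set.mpr <| by
      filter_upwards [hblind1, hblind2] with ω hE1 hE2
      rw [hE1, hE2]
  rw [harm 0 h0 hA0,
    measure_infected_after_early_exposure_eq_zero ((hexcl 0 h0).mono fun _ h => h.1) hnull0,
    hblind, ENNReal.toReal_zero, add_zero] at hd2 ⊢
  rw [harm 1 h1 hA1,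
    measure_infected_after_early_exposure_eq_mul (hE1pm 1 h1) (hE2pm 1 h1 1 h1) (hY1pm 1 h1 1 h1)
      ((hexcl 1 h1).mono fun _ h => h.1) (heeY1 1 h1 1 h1) (hextee1 1 h1 1 h1) (hextee2 1 h1),
    integral_eq_toReal_measure_of_zero_or_one (hY2pm 1 h1 1 h1) (hY2pr 1 h1 1 h1),
    integral_eq_toReal_measure_of_zero_or_one (hY2pm 0 h0 1 h1) (hY2pr 0 h0 1 h1),
    ENNReal.toReal_mul, ENNReal.toReal_mul]
  exact mul_add_div_mul_eq_and_div_le hd2 (by positivity)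

/-- Positive bias of the second-interval incidence ratio under sharp no waning of the placebo. -/
theorem second_interval_incidence_ratio_bias
    {Ω : Type*} [MeasurableSpace Ω] (μ : Measure Ω) [IsProbabilityMeasure μ]
    (A E1 E2 DY1 DY2 : Ω → ℝ)
    (E1p : ℝ → Ω → ℝ) (E2p Y1p Y2p Wp : ℝ → ℝ → Ω → ℝ)
    (hAm : Measurable A) (hE1m : Measurable E1) (hE2m : Measurable E2)
    (hDY1m : Measurable DY1) (hDY2m : Measurable DY2)
    (hE1pm : ∀ a ∈ ({0, 1} : Set ℝ), Measurable (E1p a))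
    (hE2pm : ∀ a ∈ ({0, 1} : Set ℝ), ∀ e1 ∈ ({0, 1} : Set ℝ), Measurable (E2p a e1))
    (hY1pm : ∀ a ∈ ({0, 1} : Set ℝ), ∀ e1 ∈ ({0, 1} : Set ℝ), Measurable (Y1p a e1))
    (hY2pm : ∀ a ∈ ({0, 1} : Set ℝ), ∀ e2 ∈ ({0, 1} : Set ℝ), Measurable (Y2p a e2))
    (hWpm : ∀ a ∈ ({0, 1} : Set ℝ), ∀ e1 ∈ ({0, 1} : Set ℝ), Measurable (Wp a e1))
    (hAr : ∀ ω, A ω = 0 ∨ A ω = 1) (hE1r : ∀ ω, E1 ω = 0 ∨ E1 ω = 1)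
    (hE2r : ∀ ω, E2 ω = 0 ∨ E2 ω = 1)
    (hDY1r : ∀ ω, DY1 ω = 0 ∨ DY1 ω = 1) (hDY2r : ∀ ω, DY2 ω = 0 ∨ DY2 ω = 1)
    (hE1pr : ∀ a ∈ ({0, 1} : Set ℝ), ∀ ω, E1p a ω = 0 ∨ E1p a ω = 1)
    (hE2pr : ∀ a ∈ ({0, 1} : Set ℝ), ∀ e1 ∈ ({0, 1} : Set ℝ), ∀ ω,
      E2p a e1 ω = 0 ∨ E2p a e1 ω = 1)
    (hY1pr : ∀ a ∈ ({0, 1} : Set ℝ), ∀ e1 ∈ ({0, 1} : Set ℝ), ∀ ω,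
      Y1p a e1 ω = 0 ∨ Y1p a e1 ω = 1)
    (hY2pr : ∀ a ∈ ({0, 1} : Set ℝ), ∀ e2 ∈ ({0, 1} : Set ℝ), ∀ ω,
      Y2p a e2 ω = 0 ∨ Y2p a e2 ω = 1)
    (hWpr : ∀ a ∈ ({0, 1} : Set ℝ), ∀ e1 ∈ ({0, 1} : Set ℝ), ∀ ω,
      Wp a e1 ω = 0 ∨ Wp a e1 ω = 1)
    (hmono : ∀ ω, DY1 ω = 1 → DY2 ω = 0)
    -- Consistency
    (hconsE1 : ∀ a ∈ ({0, 1} : Set ℝ), ∀ᵐ ω ∂μ, A ω = a → E1 ω = E1p a ω)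
    (hconsY1 : ∀ a ∈ ({0, 1} : Set ℝ), ∀ e1 ∈ ({0, 1} : Set ℝ),
      ∀ᵐ ω ∂μ, A ω = a → E1 ω = e1 → DY1 ω = Y1p a e1 ω)
    (hconsE2 : ∀ a ∈ ({0, 1} : Set ℝ), ∀ e1 ∈ ({0, 1} : Set ℝ),
      ∀ᵐ ω ∂μ, A ω = a → E1 ω = e1 → E2 ω = E2p a e1 ω)
    (hconsY2 : ∀ a ∈ ({0, 1} : Set ℝ), ∀ e2 ∈ ({0, 1} : Set ℝ),
      ∀ᵐ ω ∂μ, A ω = a → E1 ω = 0 → E2 ω = e2 → DY2 ω = Y2p a e2 ω)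
    (hconsW : ∀ a ∈ ({0, 1} : Set ℝ), ∀ e1 ∈ ({0, 1} : Set ℝ),
      ∀ᵐ ω ∂μ, A ω = a → E1 ω = e1 → DY1 ω = 0 → E2 ω = 1 → DY2 ω = Wp a e1 ω)
    -- Exposure necessity
    (hnecY1 : ∀ a ∈ ({0, 1} : Set ℝ), ∀ᵐ ω ∂μ, Y1p a 0 ω = 0)
    (hnecY2 : ∀ a ∈ ({0, 1} : Set ℝ), ∀ᵐ ω ∂μ, Y2p a 0 ω = 0)
    (hnecE2 : ∀ᵐ ω ∂μ, E2 ω = 0 → DY2 ω = 0)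
    -- Exclusion restriction
    (hexcl : ∀ a ∈ ({0, 1} : Set ℝ), ∀ᵐ ω ∂μ, Wp a 1 ω = Y2p a 1 ω ∧ Wp a 0 ω = Y2p a 1 ω)
    -- Blinding
    (hblind1 : ∀ᵐ ω ∂μ, E1p 0 ω = E1p 1 ω)
    (hblind2 : ∀ᵐ ω ∂μ, E2p 0 0 ω = E2p 1 0 ω)
    -- Treatment exchangeability
    (hexch : IndepFun A (fun ω => ![E1p 0 ω, E1p 1 ω,
      E2p 0 0 ω, E2p 0 1 ω, E2p 1 0 ω, E2p 1 1 ω,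
      Y1p 0 0 ω, Y1p 0 1 ω, Y1p 1 0 ω, Y1p 1 1 ω,
      Y2p 0 0 ω, Y2p 0 1 ω, Y2p 1 0 ω, Y2p 1 1 ω,
      Wp 0 0 ω, Wp 0 1 ω, Wp 1 0 ω, Wp 1 1 ω]) μ)
    -- Positivity
    (hpos : 0 < (μ {ω | A ω = 1}).toReal ∧ (μ {ω | A ω = 1}).toReal < 1)
    -- Exposure exchangeability
    (heeY1 : ∀ a ∈ ({0, 1} : Set ℝ), ∀ e1 ∈ ({0, 1} : Set ℝ), IndepFun (E1p a) (Y1p a e1) μ)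
    (heeY2cond : ∀ a ∈ ({0, 1} : Set ℝ), ∀ e2 ∈ ({0, 1} : Set ℝ), ∀ e ∈ ({0, 1} : Set ℝ),
      IndepFun (E1p a) (Y2p a e2) (μ[|{ω | E2p a 0 ω = e}]))
    (heeE2 : ∀ a ∈ ({0, 1} : Set ℝ), ∀ e2 ∈ ({0, 1} : Set ℝ), IndepFun (E2p a 0) (Y2p a e2) μ)
    -- Extended exposure exchangeability
    (hextee1 : ∀ a ∈ ({0, 1} : Set ℝ), ∀ e ∈ ({0, 1} : Set ℝ),
      IndepFun (E1p a) (Wp a 1) (μ[|{ω | Y1p a 1 ω = 0 ∧ E2p a 1 ω = e}]))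
    (hextee2 : ∀ a ∈ ({0, 1} : Set ℝ),
      IndepFun (E2p a 1) (Wp a 1) (μ[|{ω | Y1p a 1 ω = 0}]))
    -- Nondegeneracy (for both arms)
    (hE1pos : ∀ a ∈ ({0, 1} : Set ℝ), 0 < (μ {ω | E1p a ω = 1}).toReal)
    (hE1lt : ∀ a ∈ ({0, 1} : Set ℝ), (μ {ω | E1p a ω = 1}).toReal < 1)
    (hE1Y1 : ∀ a ∈ ({0, 1} : Set ℝ), 0 < (μ {ω | E1p a ω = 1 ∧ Y1p a 1 ω = 0}).toReal)
    -- Sharp no waning of the placebo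
    (hnull0 : ∀ᵐ ω ∂μ, Y1p 0 1 ω = Y2p 0 1 ω)
    (hd2 : 0 < ∫ ω, DY2 ω ∂(μ[|{ω | A ω = 0}]))
    (hd5 : 0 < ∫ ω, Y2p 0 1 ω ∂μ) :
    (∫ ω, DY2 ω ∂(μ[|{ω | A ω = 1}])) / (∫ ω, DY2 ω ∂(μ[|{ω | A ω = 0}])) =
      (∫ ω, Y2p 1 1 ω ∂μ) / (∫ ω, Y2p 0 1 ω ∂μ) +
        (μ {ω | Y2p 1 1 ω = 1 ∧ Y1p 1 1 ω = 0}).toReal *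
          ((μ[|{ω | E1p 1 ω = 1 ∧ Y1p 1 1 ω = 0}]) {ω | E2p 1 1 ω = 1}).toReal *
          (μ {ω | E1p 1 ω = 1}).toReal / (∫ ω, DY2 ω ∂(μ[|{ω | A ω = 0}])) ∧
    (∫ ω, Y2p 1 1 ω ∂μ) / (∫ ω, Y2p 0 1 ω ∂μ) ≤
      (∫ ω, DY2 ω ∂(μ[|{ω | A ω = 1}])) / (∫ ω, DY2 ω ∂(μ[|{ω | A ω = 0}])) :=
  second_interval_incidence_ratio_bias_general μ A E1 E2 DY1 DY2 E1p E2p Y1p Y2p Wp hAm hDY2m hE1pm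
    hE2pm hY1pm hY2pm hWpm hE1r hE2r hDY1r hDY2r hY2pr hmono hconsE1 hconsY1 hconsE2 hconsY2 hconsW
    hnecE2 hexcl hblind1 hblind2 hexch hpos heeY1 heeY2cond heeE2 hextee1 hextee2 hnull0 hd2
end

section
/- Observed improvement implies true improvement. Assume the hypotheses under which IR1 = 1 − VE1ch (Consistency, Exposure necessity, Blinding, Treatment exchangeability, Positivity, Exposure exchangeability, P(E1[0]=1) > 0, E[Y1[0,1]] > 0, E[ΔY1 | A=0] > 0) and the hypotheses under which IR2 ≥ 1 − VE2ch (additionally the Exclusion restriction, Extended exposure exchangeability, P(E1[a]=1, Y1[a,1]=0) > 0, sharp no waning of the placebo, E[ΔY2 | A=0] > 0 and E[Y2[0,1]] > 0). Then IR2 < IR1 implies VE2ch > VE1ch: if the observed incidence ratio decreases from interval 1 to interval 2, the challenge vaccine efficacy has truly increased. -/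
open MeasureTheory ProbabilityTheory
open scoped ProbabilityTheory

/-!
Within arm a, consistency identifies the observed events with events of potential outcomes:
{ΔY1 = 1} with {E1[a] = 1, Y1[a,1] = 1}, and, splitting on E1, {ΔY2 = 1} with
{E2[a,0] = 1, E1[a] = 0, Y2[a,1] = 1} ∪ {E1[a] = 1, Y1[a,1] = 0, E2[a,1] = 1, Y2[a,1] = 1}.
Treatment exchangeability lets us drop the conditioning on A = a, and exposure exchangeability
factorises the probabilities, so
E[ΔY1 | A=a] = P(E1[a]=1) E[Y1[a,1]] and
E[ΔY2 | A=a] = P(E2[a,0]=1, E1[a]=0) E[Y2[a,1]] + P(E1[a]=1, Y1[a,1]=0, E2[a,1]=1, Y2[a,1]=1).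
By blinding the exposure factors agree across arms, so IR1 = 1 - VE1ch. Sharp no waning of the
placebo makes the last probability vanish for a = 0, and it is nonnegative for a = 1, so
IR2 ≥ 1 - VE2ch. Hence 1 - VE2ch ≤ IR2 < IR1 = 1 - VE1ch.
-/

section

variable {Ω : Type*} [MeasurableSpace Ω] {μ : Measure Ω}

lemma integral_eq_measureReal_setOf_eq_one [IsFiniteMeasure μ] {f : Ω → ℝ} (hf : Measurable f)
    (hf01 : ∀ ω, f ω = 0 ∨ f ω = 1) : ∫ ω, f ω ∂μ = μ.real {ω | f ω = 1} :=
  calc ∫ ω, f ω ∂μ = ∫ ω, {ω | f ω = 1}.indicator 1 ω ∂μ := by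
        congr 1; funext ω; rcases hf01 ω with h | h <;> simp [h]
    _ = μ.real {ω | f ω = 1} := integral_indicator_one (hf (measurableSet_singleton 1))

lemma measure_setOf_eq_zero_ne_zero [IsProbabilityMeasure μ] {A : Ω → ℝ} (hA : Measurable A)
    (hA01 : ∀ ω, A ω = 0 ∨ A ω = 1) (h : μ.real {ω | A ω = 1} < 1) : μ {ω | A ω = 0} ≠ 0 := by
  have hcompl : {ω | A ω = 0} = {ω | A ω = 1}ᶜ := by
    ext ω; rcases hA01 ω with h | h <;> simp [h]
  have hs : MeasurableSet {ω | A ω = 1} := hA (measurableSet_singleton 1)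
  rw [hcompl, Ne, prob_compl_eq_zero_iff hs]
  intro h1
  simp [measureReal_def, h1] at h

lemma measure_inter_inter_eq_mul_of_cond [IsFiniteMeasure μ] {s S U : Set Ω} (hs : MeasurableSet s)
    (hcond : μ[S ∩ U | s] = μ[S | s] * μ[U | s]) (hsU : μ (s ∩ U) = μ s * μ U) :
    μ (s ∩ (S ∩ U)) = μ (s ∩ S) * μ U := by
  rw [← cond_mul_eq_inter hs, hcond, mul_assoc, cond_mul_eq_inter hs, hsU, ← mul_assoc,
    cond_mul_eq_inter hs]

variable {α : Type*} {A : Ω → α} {a : α}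

lemma ae_outcome_interval1_iff {E1 DY1 E1a Y1a0 Y1a1 : Ω → ℝ} (hE1 : ∀ ω, E1 ω = 0 ∨ E1 ω = 1)
    (hconsE1 : ∀ᵐ ω ∂μ, A ω = a → E1 ω = E1a ω)
    (hconsY0 : ∀ᵐ ω ∂μ, A ω = a → E1 ω = 0 → DY1 ω = Y1a0 ω)
    (hconsY1 : ∀ᵐ ω ∂μ, A ω = a → E1 ω = 1 → DY1 ω = Y1a1 ω)
    (hnec : ∀ᵐ ω ∂μ, Y1a0 ω = 0) :
    ∀ᵐ ω ∂μ, A ω = a → (DY1 ω = 1 ↔ E1a ω = 1 ∧ Y1a1 ω = 1) := by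
  filter_upwards [hconsE1, hconsY0, hconsY1, hnec] with ω hE hY0 hY1 hn hA
  rcases hE1 ω with h | h <;> simp_all

lemma ae_outcome_interval2_iff {E1 E2 DY1 DY2 E1a Y1a E2a0 E2a1 Y2a Wa : Ω → ℝ}
    (hE1 : ∀ ω, E1 ω = 0 ∨ E1 ω = 1) (hE2 : ∀ ω, E2 ω = 0 ∨ E2 ω = 1)
    (hDY1 : ∀ ω, DY1 ω = 0 ∨ DY1 ω = 1) (hmono : ∀ ω, DY1 ω = 1 → DY2 ω = 0)
    (hconsE1 : ∀ᵐ ω ∂μ, A ω = a → E1 ω = E1a ω)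
    (hconsY1 : ∀ᵐ ω ∂μ, A ω = a → E1 ω = 1 → DY1 ω = Y1a ω)
    (hconsE2₀ : ∀ᵐ ω ∂μ, A ω = a → E1 ω = 0 → E2 ω = E2a0 ω)
    (hconsE2₁ : ∀ᵐ ω ∂μ, A ω = a → E1 ω = 1 → E2 ω = E2a1 ω)
    (hconsY2 : ∀ᵐ ω ∂μ, A ω = a → E1 ω = 0 → E2 ω = 1 → DY2 ω = Y2a ω)
    (hconsW : ∀ᵐ ω ∂μ, A ω = a → E1 ω = 1 → DY1 ω = 0 → E2 ω = 1 → DY2 ω = Wa ω)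
    (hnec : ∀ᵐ ω ∂μ, E2 ω = 0 → DY2 ω = 0) (hexcl : ∀ᵐ ω ∂μ, Wa ω = Y2a ω) :
    ∀ᵐ ω ∂μ, A ω = a → (DY2 ω = 1 ↔ (E2a0 ω = 1 ∧ E1a ω = 0 ∧ Y2a ω = 1) ∨
      (E1a ω = 1 ∧ Y1a ω = 0 ∧ E2a1 ω = 1 ∧ Y2a ω = 1)) := by
  filter_upwards [hconsE1, hconsY1, hconsE2₀, hconsE2₁, hconsY2, hconsW, hnec, hexcl]
    with ω hE1a hY1a hE2a0 hE2a1 hY2a hWa hn hW hA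
  rcases hE1 ω with h1 | h1 <;> rcases hE2 ω with h2 | h2 <;> rcases hDY1 ω with h3 | h3 <;>
    grind

variable [MeasurableSpace α] [MeasurableSingletonClass α]

lemma integral_cond_eq_measureReal_of_indepFun [IsFiniteMeasure μ] {β : Type*}
    [MeasurableSpace β] {Z : Ω → β} {t : Set β} {f : Ω → ℝ} (hA : Measurable A)
    (hAZ : IndepFun A Z μ) (hAa : μ {ω | A ω = a} ≠ 0) (ht : MeasurableSet t)
    (hf : Measurable f) (hf01 : ∀ ω, f ω = 0 ∨ f ω = 1)
    (hft : ∀ᵐ ω ∂μ, A ω = a → (f ω = 1 ↔ Z ω ∈ t)) :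
    ∫ ω, f ω ∂μ[|{ω | A ω = a}] = μ.real (Z ⁻¹' t) := by
  have hs : MeasurableSet {ω | A ω = a} := hA (measurableSet_singleton a)
  have hinter : μ ({ω | A ω = a} ∩ {ω | f ω = 1}) = μ ({ω | A ω = a} ∩ Z ⁻¹' t) :=
    measure_congr <| Filter.eventuallyEq_set.2 <| hft.mono fun ω h => and_congr_right h
  have hindep : μ ({ω | A ω = a} ∩ Z ⁻¹' t) = μ {ω | A ω = a} * μ (Z ⁻¹' t) :=
    hAZ.measure_inter_preimage_eq_mul _ _ (measurableSet_singleton a) ht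
  rw [integral_eq_measureReal_setOf_eq_one hf hf01, measureReal_def, cond_apply hs, hinter,
    hindep, ENNReal.inv_mul_cancel_left hAa (measure_ne_top _ _), measureReal_def]

lemma incidence_interval1_eq [IsFiniteMeasure μ] {DY1 E1a Y1a : Ω → ℝ} (hA : Measurable A)
    (hAZ : IndepFun A (fun ω => (E1a ω, Y1a ω)) μ) (hAa : μ {ω | A ω = a} ≠ 0)
    (hDY1 : Measurable DY1) (hDY1_01 : ∀ ω, DY1 ω = 0 ∨ DY1 ω = 1)
    (hY1a : Measurable Y1a) (hY1a_01 : ∀ ω, Y1a ω = 0 ∨ Y1a ω = 1)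
    (hE1aY1a : IndepFun E1a Y1a μ)
    (hevent : ∀ᵐ ω ∂μ, A ω = a → (DY1 ω = 1 ↔ E1a ω = 1 ∧ Y1a ω = 1)) :
    ∫ ω, DY1 ω ∂μ[|{ω | A ω = a}] = μ.real {ω | E1a ω = 1} * ∫ ω, Y1a ω ∂μ := by
  have ht : MeasurableSet {z : ℝ × ℝ | z.1 = 1 ∧ z.2 = 1} := by measurability
  rw [integral_cond_eq_measureReal_of_indepFun hA hAZ hAa ht hDY1 hDY1_01 hevent,
    integral_eq_measureReal_setOf_eq_one hY1a hY1a_01, measureReal_def, measureReal_def,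
    measureReal_def, ← ENNReal.toReal_mul]
  exact congrArg ENNReal.toReal <| hE1aY1a.measure_inter_preimage_eq_mul _ _
    (measurableSet_singleton 1) (measurableSet_singleton 1)

lemma incidence_interval2_eq [IsFiniteMeasure μ] {DY2 E1a Y1a E2a0 E2a1 Y2a : Ω → ℝ}
    (hA : Measurable A)
    (hAZ : IndepFun A (fun ω => (E1a ω, Y1a ω, E2a0 ω, E2a1 ω, Y2a ω)) μ)
    (hAa : μ {ω | A ω = a} ≠ 0) (hDY2 : Measurable DY2) (hDY2_01 : ∀ ω, DY2 ω = 0 ∨ DY2 ω = 1)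
    (hE1a : Measurable E1a) (hY1a : Measurable Y1a) (hE2a0 : Measurable E2a0)
    (hE2a1 : Measurable E2a1) (hY2a : Measurable Y2a) (hY2a_01 : ∀ ω, Y2a ω = 0 ∨ Y2a ω = 1)
    (hE1aY2a : IndepFun E1a Y2a μ[|{ω | E2a0 ω = 1}]) (hE2a0Y2a : IndepFun E2a0 Y2a μ)
    (hevent : ∀ᵐ ω ∂μ, A ω = a → (DY2 ω = 1 ↔ (E2a0 ω = 1 ∧ E1a ω = 0 ∧ Y2a ω = 1) ∨
      (E1a ω = 1 ∧ Y1a ω = 0 ∧ E2a1 ω = 1 ∧ Y2a ω = 1))) :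
    ∫ ω, DY2 ω ∂μ[|{ω | A ω = a}] =
      μ.real ({ω | E2a0 ω = 1} ∩ {ω | E1a ω = 0}) * ∫ ω, Y2a ω ∂μ +
        μ.real {ω | E1a ω = 1 ∧ Y1a ω = 0 ∧ E2a1 ω = 1 ∧ Y2a ω = 1} := by
  have ht : MeasurableSet {z : ℝ × ℝ × ℝ × ℝ × ℝ | (z.2.2.1 = 1 ∧ z.1 = 0 ∧ z.2.2.2.2 = 1) ∨
      (z.1 = 1 ∧ z.2.1 = 0 ∧ z.2.2.2.1 = 1 ∧ z.2.2.2.2 = 1)} := by measurability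
  have hs : MeasurableSet {ω | E2a0 ω = 1} := hE2a0 (measurableSet_singleton 1)
  have hdisj : Disjoint {ω | E2a0 ω = 1 ∧ E1a ω = 0 ∧ Y2a ω = 1}
      {ω | E1a ω = 1 ∧ Y1a ω = 0 ∧ E2a1 ω = 1 ∧ Y2a ω = 1} :=
    Set.disjoint_left.2 fun ω h h' => by simp_all
  have hmeas : MeasurableSet {ω | E1a ω = 1 ∧ Y1a ω = 0 ∧ E2a1 ω = 1 ∧ Y2a ω = 1} := by
    measurability
  have hfactor : μ {ω | E2a0 ω = 1 ∧ E1a ω = 0 ∧ Y2a ω = 1} =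
      μ ({ω | E2a0 ω = 1} ∩ {ω | E1a ω = 0}) * μ {ω | Y2a ω = 1} :=
    measure_inter_inter_eq_mul_of_cond hs
      (hE1aY2a.measure_inter_preimage_eq_mul _ _ (measurableSet_singleton 0)
        (measurableSet_singleton 1))
      (hE2a0Y2a.measure_inter_preimage_eq_mul _ _ (measurableSet_singleton 1)
        (measurableSet_singleton 1))
  rw [integral_cond_eq_measureReal_of_indepFun hA hAZ hAa ht hDY2 hDY2_01 hevent,
    integral_eq_measureReal_setOf_eq_one hY2a hY2a_01, Set.preimage_ofPred_eq, Set.ofPred_or,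
    measureReal_union hdisj hmeas, measureReal_def, hfactor, ENNReal.toReal_mul]
  rfl

end

lemma div_le_mul_add_div_mul {q x y b : ℝ} (hqy : 0 < q * y) (hb : 0 ≤ b) :
    x / y ≤ (q * x + b) / (q * y) := by
  rw [← mul_div_mul_left x y (left_ne_zero_of_mul hqy.ne')]
  exact div_le_div_of_nonneg_right (le_add_of_nonneg_right hb) hqy.le

theorem observed_improvement_implies_true_improvement_general
    {Ω : Type*} [MeasurableSpace Ω] (μ : Measure Ω) [IsProbabilityMeasure μ]
    (A E1 E2 DY1 DY2 : Ω → ℝ)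
    (E1p : ℝ → Ω → ℝ) (E2p Y1p Y2p Wp : ℝ → ℝ → Ω → ℝ)
    (hAm : Measurable A)
    (hDY1m : Measurable DY1) (hDY2m : Measurable DY2)
    (hE1pm : ∀ a ∈ ({0, 1} : Set ℝ), Measurable (E1p a))
    (hE2pm : ∀ a ∈ ({0, 1} : Set ℝ), ∀ e1 ∈ ({0, 1} : Set ℝ), Measurable (E2p a e1))
    (hY1pm : ∀ a ∈ ({0, 1} : Set ℝ), ∀ e1 ∈ ({0, 1} : Set ℝ), Measurable (Y1p a e1))
    (hY2pm : ∀ a ∈ ({0, 1} : Set ℝ), ∀ e2 ∈ ({0, 1} : Set ℝ), Measurable (Y2p a e2))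
    (hAr : ∀ ω, A ω = 0 ∨ A ω = 1) (hE1r : ∀ ω, E1 ω = 0 ∨ E1 ω = 1)
    (hE2r : ∀ ω, E2 ω = 0 ∨ E2 ω = 1)
    (hDY1r : ∀ ω, DY1 ω = 0 ∨ DY1 ω = 1) (hDY2r : ∀ ω, DY2 ω = 0 ∨ DY2 ω = 1)
    (hY1pr : ∀ a ∈ ({0, 1} : Set ℝ), ∀ e1 ∈ ({0, 1} : Set ℝ), ∀ ω,
      Y1p a e1 ω = 0 ∨ Y1p a e1 ω = 1)
    (hY2pr : ∀ a ∈ ({0, 1} : Set ℝ), ∀ e2 ∈ ({0, 1} : Set ℝ), ∀ ω,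
      Y2p a e2 ω = 0 ∨ Y2p a e2 ω = 1)
    (hmono : ∀ ω, DY1 ω = 1 → DY2 ω = 0)
    -- Consistency
    (hconsE1 : ∀ a ∈ ({0, 1} : Set ℝ), ∀ᵐ ω ∂μ, A ω = a → E1 ω = E1p a ω)
    (hconsY1 : ∀ a ∈ ({0, 1} : Set ℝ), ∀ e1 ∈ ({0, 1} : Set ℝ),
      ∀ᵐ ω ∂μ, A ω = a → E1 ω = e1 → DY1 ω = Y1p a e1 ω)
    (hconsE2 : ∀ a ∈ ({0, 1} : Set ℝ), ∀ e1 ∈ ({0, 1} : Set ℝ),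
      ∀ᵐ ω ∂μ, A ω = a → E1 ω = e1 → E2 ω = E2p a e1 ω)
    (hconsY2 : ∀ a ∈ ({0, 1} : Set ℝ), ∀ e2 ∈ ({0, 1} : Set ℝ),
      ∀ᵐ ω ∂μ, A ω = a → E1 ω = 0 → E2 ω = e2 → DY2 ω = Y2p a e2 ω)
    (hconsW : ∀ a ∈ ({0, 1} : Set ℝ), ∀ e1 ∈ ({0, 1} : Set ℝ),
      ∀ᵐ ω ∂μ, A ω = a → E1 ω = e1 → DY1 ω = 0 → E2 ω = 1 → DY2 ω = Wp a e1 ω)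
    -- Exposure necessity
    (hnecY1 : ∀ a ∈ ({0, 1} : Set ℝ), ∀ᵐ ω ∂μ, Y1p a 0 ω = 0)
    (hnecE2 : ∀ᵐ ω ∂μ, E2 ω = 0 → DY2 ω = 0)
    -- Exclusion restriction
    (hexcl : ∀ a ∈ ({0, 1} : Set ℝ), ∀ᵐ ω ∂μ, Wp a 1 ω = Y2p a 1 ω ∧ Wp a 0 ω = Y2p a 1 ω)
    -- Blinding
    (hblind1 : ∀ᵐ ω ∂μ, E1p 0 ω = E1p 1 ω)
    (hblind2 : ∀ᵐ ω ∂μ, E2p 0 0 ω = E2p 1 0 ω)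
    -- Treatment exchangeability
    (hexch : IndepFun A (fun ω => ![E1p 0 ω, E1p 1 ω,
      E2p 0 0 ω, E2p 0 1 ω, E2p 1 0 ω, E2p 1 1 ω,
      Y1p 0 0 ω, Y1p 0 1 ω, Y1p 1 0 ω, Y1p 1 1 ω,
      Y2p 0 0 ω, Y2p 0 1 ω, Y2p 1 0 ω, Y2p 1 1 ω,
      Wp 0 0 ω, Wp 0 1 ω, Wp 1 0 ω, Wp 1 1 ω]) μ)
    -- Positivity
    (hpos : 0 < (μ {ω | A ω = 1}).toReal ∧ (μ {ω | A ω = 1}).toReal < 1)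
    -- Exposure exchangeability
    (heeY1 : ∀ a ∈ ({0, 1} : Set ℝ), ∀ e1 ∈ ({0, 1} : Set ℝ), IndepFun (E1p a) (Y1p a e1) μ)
    (heeY2cond : ∀ a ∈ ({0, 1} : Set ℝ), ∀ e2 ∈ ({0, 1} : Set ℝ), ∀ e ∈ ({0, 1} : Set ℝ),
      IndepFun (E1p a) (Y2p a e2) (μ[|{ω | E2p a 0 ω = e}]))
    (heeE2 : ∀ a ∈ ({0, 1} : Set ℝ), ∀ e2 ∈ ({0, 1} : Set ℝ), IndepFun (E2p a 0) (Y2p a e2) μ)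
    -- Nondegeneracy (for both arms)
    (hE1pos : ∀ a ∈ ({0, 1} : Set ℝ), 0 < (μ {ω | E1p a ω = 1}).toReal)
    -- Sharp no waning of the placebo
    (hnull0 : ∀ᵐ ω ∂μ, Y1p 0 1 ω = Y2p 0 1 ω)
    (hd2 : 0 < ∫ ω, DY2 ω ∂(μ[|{ω | A ω = 0}])) :
    (∫ ω, DY2 ω ∂(μ[|{ω | A ω = 1}])) / (∫ ω, DY2 ω ∂(μ[|{ω | A ω = 0}])) <
        (∫ ω, DY1 ω ∂(μ[|{ω | A ω = 1}])) / (∫ ω, DY1 ω ∂(μ[|{ω | A ω = 0}])) →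
      1 - (∫ ω, Y2p 1 1 ω ∂μ) / (∫ ω, Y2p 0 1 ω ∂μ) >
        1 - (∫ ω, Y1p 1 1 ω ∂μ) / (∫ ω, Y1p 0 1 ω ∂μ) := by
  intro hlt
  have h0 : (0 : ℝ) ∈ ({0, 1} : Set ℝ) := by simp
  have h1 : (1 : ℝ) ∈ ({0, 1} : Set ℝ) := by simp
  have hZ : ∀ a ∈ ({0, 1} : Set ℝ), IndepFun A
      (fun ω => (E1p a ω, Y1p a 1 ω, E2p a 0 ω, E2p a 1 ω, Y2p a 1 ω)) μ := by
    rintro a (rfl | rfl)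
    · exact hexch.comp measurable_id
        (ψ := fun v : Fin 18 → ℝ => (v 0, v 7, v 2, v 3, v 11)) (by fun_prop)
    · exact hexch.comp measurable_id
        (ψ := fun v : Fin 18 → ℝ => (v 1, v 9, v 4, v 5, v 13)) (by fun_prop)
  have hinc1 : ∀ a ∈ ({0, 1} : Set ℝ), μ {ω | A ω = a} ≠ 0 →
      ∫ ω, DY1 ω ∂μ[|{ω | A ω = a}] = μ.real {ω | E1p a ω = 1} * ∫ ω, Y1p a 1 ω ∂μ :=
    fun a ha hAa => incidence_interval1_eq hAm ((hZ a ha).comp measurable_id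
        (ψ := fun z : ℝ × ℝ × ℝ × ℝ × ℝ => (z.1, z.2.1)) (by fun_prop)) hAa hDY1m hDY1r
      (hY1pm a ha 1 h1) (hY1pr a ha 1 h1) (heeY1 a ha 1 h1)
      (ae_outcome_interval1_iff hE1r (hconsE1 a ha) (hconsY1 a ha 0 h0) (hconsY1 a ha 1 h1)
        (hnecY1 a ha))
  have hinc2 : ∀ a ∈ ({0, 1} : Set ℝ), μ {ω | A ω = a} ≠ 0 →
      ∫ ω, DY2 ω ∂μ[|{ω | A ω = a}] =
        μ.real ({ω | E2p a 0 ω = 1} ∩ {ω | E1p a ω = 0}) * ∫ ω, Y2p a 1 ω ∂μ +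
          μ.real {ω | E1p a ω = 1 ∧ Y1p a 1 ω = 0 ∧ E2p a 1 ω = 1 ∧ Y2p a 1 ω = 1} :=
    fun a ha hAa => incidence_interval2_eq hAm (hZ a ha) hAa hDY2m hDY2r (hE1pm a ha)
      (hY1pm a ha 1 h1) (hE2pm a ha 0 h0) (hE2pm a ha 1 h1) (hY2pm a ha 1 h1) (hY2pr a ha 1 h1)
      (heeY2cond a ha 1 h1 1 h1) (heeE2 a ha 1 h1)
      (ae_outcome_interval2_iff hE1r hE2r hDY1r hmono (hconsE1 a ha) (hconsY1 a ha 1 h1)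
        (hconsE2 a ha 0 h0) (hconsE2 a ha 1 h1) (hconsY2 a ha 1 h1) (hconsW a ha 1 h1) hnecE2
        ((hexcl a ha).mono fun _ h => h.1))
  have hA1 : μ {ω | A ω = 1} ≠ 0 := fun h => by simp [h] at hpos
  have hA0 : μ {ω | A ω = 0} ≠ 0 := measure_setOf_eq_zero_ne_zero hAm hAr hpos.2
  have hblindE1 : μ.real {ω | E1p 1 ω = 1} = μ.real {ω | E1p 0 ω = 1} :=
    measureReal_congr <| Filter.eventuallyEq_set.2 <| hblind1.mono fun ω h => by simp [h]
  have hblindE2 : μ.real ({ω | E2p 1 0 ω = 1} ∩ {ω | E1p 1 ω = 0}) =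
      μ.real ({ω | E2p 0 0 ω = 1} ∩ {ω | E1p 0 ω = 0}) :=
    measureReal_congr <| Filter.eventuallyEq_set.2 <| by
      filter_upwards [hblind1, hblind2] with ω h h' using by simp [h, h']
  have hnoWaning : μ.real {ω | E1p 0 ω = 1 ∧ Y1p 0 1 ω = 0 ∧ E2p 0 1 ω = 1 ∧ Y2p 0 1 ω = 1} = 0 :=
    (measureReal_eq_zero_iff (measure_ne_top μ _)).2 <| measure_eq_zero_iff_ae_notMem.2 <|
      hnull0.mono fun ω h ⟨_, hY1, _, hY2⟩ => by simp_all
  have he : μ.real {ω | E1p 0 ω = 1} ≠ 0 := (hE1pos 0 h0).ne'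
  rw [hinc1 1 h1 hA1, hinc1 0 h0 hA0, hblindE1, mul_div_mul_left _ _ he] at hlt
  rw [hinc2 1 h1 hA1, hinc2 0 h0 hA0, hblindE2, hnoWaning, add_zero] at hlt
  rw [hinc2 0 h0 hA0, hnoWaning, add_zero] at hd2
  exact sub_lt_sub_left ((div_le_mul_add_div_mul hd2 measureReal_nonneg).trans_lt hlt) 1

/-- Observed improvement implies true improvement: IR2 < IR1 implies VE2ch > VE1ch. -/
theorem observed_improvement_implies_true_improvement
    {Ω : Type*} [MeasurableSpace Ω] (μ : Measure Ω) [IsProbabilityMeasure μ]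
    (A E1 E2 DY1 DY2 : Ω → ℝ)
    (E1p : ℝ → Ω → ℝ) (E2p Y1p Y2p Wp : ℝ → ℝ → Ω → ℝ)
    (hAm : Measurable A) (hE1m : Measurable E1) (hE2m : Measurable E2)
    (hDY1m : Measurable DY1) (hDY2m : Measurable DY2)
    (hE1pm : ∀ a ∈ ({0, 1} : Set ℝ), Measurable (E1p a))
    (hE2pm : ∀ a ∈ ({0, 1} : Set ℝ), ∀ e1 ∈ ({0, 1} : Set ℝ), Measurable (E2p a e1))
    (hY1pm : ∀ a ∈ ({0, 1} : Set ℝ), ∀ e1 ∈ ({0, 1} : Set ℝ), Measurable (Y1p a e1))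
    (hY2pm : ∀ a ∈ ({0, 1} : Set ℝ), ∀ e2 ∈ ({0, 1} : Set ℝ), Measurable (Y2p a e2))
    (hWpm : ∀ a ∈ ({0, 1} : Set ℝ), ∀ e1 ∈ ({0, 1} : Set ℝ), Measurable (Wp a e1))
    (hAr : ∀ ω, A ω = 0 ∨ A ω = 1) (hE1r : ∀ ω, E1 ω = 0 ∨ E1 ω = 1)
    (hE2r : ∀ ω, E2 ω = 0 ∨ E2 ω = 1)
    (hDY1r : ∀ ω, DY1 ω = 0 ∨ DY1 ω = 1) (hDY2r : ∀ ω, DY2 ω = 0 ∨ DY2 ω = 1)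
    (hE1pr : ∀ a ∈ ({0, 1} : Set ℝ), ∀ ω, E1p a ω = 0 ∨ E1p a ω = 1)
    (hE2pr : ∀ a ∈ ({0, 1} : Set ℝ), ∀ e1 ∈ ({0, 1} : Set ℝ), ∀ ω,
      E2p a e1 ω = 0 ∨ E2p a e1 ω = 1)
    (hY1pr : ∀ a ∈ ({0, 1} : Set ℝ), ∀ e1 ∈ ({0, 1} : Set ℝ), ∀ ω,
      Y1p a e1 ω = 0 ∨ Y1p a e1 ω = 1)
    (hY2pr : ∀ a ∈ ({0, 1} : Set ℝ), ∀ e2 ∈ ({0, 1} : Set ℝ), ∀ ω,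
      Y2p a e2 ω = 0 ∨ Y2p a e2 ω = 1)
    (hWpr : ∀ a ∈ ({0, 1} : Set ℝ), ∀ e1 ∈ ({0, 1} : Set ℝ), ∀ ω,
      Wp a e1 ω = 0 ∨ Wp a e1 ω = 1)
    (hmono : ∀ ω, DY1 ω = 1 → DY2 ω = 0)
    -- Consistency
    (hconsE1 : ∀ a ∈ ({0, 1} : Set ℝ), ∀ᵐ ω ∂μ, A ω = a → E1 ω = E1p a ω)
    (hconsY1 : ∀ a ∈ ({0, 1} : Set ℝ), ∀ e1 ∈ ({0, 1} : Set ℝ),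
      ∀ᵐ ω ∂μ, A ω = a → E1 ω = e1 → DY1 ω = Y1p a e1 ω)
    (hconsE2 : ∀ a ∈ ({0, 1} : Set ℝ), ∀ e1 ∈ ({0, 1} : Set ℝ),
      ∀ᵐ ω ∂μ, A ω = a → E1 ω = e1 → E2 ω = E2p a e1 ω)
    (hconsY2 : ∀ a ∈ ({0, 1} : Set ℝ), ∀ e2 ∈ ({0, 1} : Set ℝ),
      ∀ᵐ ω ∂μ, A ω = a → E1 ω = 0 → E2 ω = e2 → DY2 ω = Y2p a e2 ω)
    (hconsW : ∀ a ∈ ({0, 1} : Set ℝ), ∀ e1 ∈ ({0, 1} : Set ℝ),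
      ∀ᵐ ω ∂μ, A ω = a → E1 ω = e1 → DY1 ω = 0 → E2 ω = 1 → DY2 ω = Wp a e1 ω)
    -- Exposure necessity
    (hnecY1 : ∀ a ∈ ({0, 1} : Set ℝ), ∀ᵐ ω ∂μ, Y1p a 0 ω = 0)
    (hnecY2 : ∀ a ∈ ({0, 1} : Set ℝ), ∀ᵐ ω ∂μ, Y2p a 0 ω = 0)
    (hnecE2 : ∀ᵐ ω ∂μ, E2 ω = 0 → DY2 ω = 0)
    -- Exclusion restriction
    (hexcl : ∀ a ∈ ({0, 1} : Set ℝ), ∀ᵐ ω ∂μ, Wp a 1 ω = Y2p a 1 ω ∧ Wp a 0 ω = Y2p a 1 ω)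
    -- Blinding
    (hblind1 : ∀ᵐ ω ∂μ, E1p 0 ω = E1p 1 ω)
    (hblind2 : ∀ᵐ ω ∂μ, E2p 0 0 ω = E2p 1 0 ω)
    -- Treatment exchangeability
    (hexch : IndepFun A (fun ω => ![E1p 0 ω, E1p 1 ω,
      E2p 0 0 ω, E2p 0 1 ω, E2p 1 0 ω, E2p 1 1 ω,
      Y1p 0 0 ω, Y1p 0 1 ω, Y1p 1 0 ω, Y1p 1 1 ω,
      Y2p 0 0 ω, Y2p 0 1 ω, Y2p 1 0 ω, Y2p 1 1 ω,
      Wp 0 0 ω, Wp 0 1 ω, Wp 1 0 ω, Wp 1 1 ω]) μ)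
    -- Positivity
    (hpos : 0 < (μ {ω | A ω = 1}).toReal ∧ (μ {ω | A ω = 1}).toReal < 1)
    -- Exposure exchangeability
    (heeY1 : ∀ a ∈ ({0, 1} : Set ℝ), ∀ e1 ∈ ({0, 1} : Set ℝ), IndepFun (E1p a) (Y1p a e1) μ)
    (heeY2cond : ∀ a ∈ ({0, 1} : Set ℝ), ∀ e2 ∈ ({0, 1} : Set ℝ), ∀ e ∈ ({0, 1} : Set ℝ),
      IndepFun (E1p a) (Y2p a e2) (μ[|{ω | E2p a 0 ω = e}]))
    (heeE2 : ∀ a ∈ ({0, 1} : Set ℝ), ∀ e2 ∈ ({0, 1} : Set ℝ), IndepFun (E2p a 0) (Y2p a e2) μ)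
    -- Extended exposure exchangeability
    (hextee1 : ∀ a ∈ ({0, 1} : Set ℝ), ∀ e ∈ ({0, 1} : Set ℝ),
      IndepFun (E1p a) (Wp a 1) (μ[|{ω | Y1p a 1 ω = 0 ∧ E2p a 1 ω = e}]))
    (hextee2 : ∀ a ∈ ({0, 1} : Set ℝ),
      IndepFun (E2p a 1) (Wp a 1) (μ[|{ω | Y1p a 1 ω = 0}]))
    -- Nondegeneracy (for both arms)
    (hE1pos : ∀ a ∈ ({0, 1} : Set ℝ), 0 < (μ {ω | E1p a ω = 1}).toReal)
    (hE1lt : ∀ a ∈ ({0, 1} : Set ℝ), (μ {ω | E1p a ω = 1}).toReal < 1)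
    (hE1Y1 : ∀ a ∈ ({0, 1} : Set ℝ), 0 < (μ {ω | E1p a ω = 1 ∧ Y1p a 1 ω = 0}).toReal)
    -- Sharp no waning of the placebo
    (hnull0 : ∀ᵐ ω ∂μ, Y1p 0 1 ω = Y2p 0 1 ω)
    (hd4 : 0 < ∫ ω, Y1p 0 1 ω ∂μ)
    (hd1 : 0 < ∫ ω, DY1 ω ∂(μ[|{ω | A ω = 0}]))
    (hd2 : 0 < ∫ ω, DY2 ω ∂(μ[|{ω | A ω = 0}]))
    (hd5 : 0 < ∫ ω, Y2p 0 1 ω ∂μ) :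
    (∫ ω, DY2 ω ∂(μ[|{ω | A ω = 1}])) / (∫ ω, DY2 ω ∂(μ[|{ω | A ω = 0}])) <
        (∫ ω, DY1 ω ∂(μ[|{ω | A ω = 1}])) / (∫ ω, DY1 ω ∂(μ[|{ω | A ω = 0}])) →
      1 - (∫ ω, Y2p 1 1 ω ∂μ) / (∫ ω, Y2p 0 1 ω ∂μ) >
        1 - (∫ ω, Y1p 1 1 ω ∂μ) / (∫ ω, Y1p 0 1 ω ∂μ) :=
  observed_improvement_implies_true_improvement_general μ A E1 E2 DY1 DY2 E1p E2p Y1p Y2p Wp hAm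
    hDY1m hDY2m hE1pm hE2pm hY1pm hY2pm hAr hE1r hE2r hDY1r hDY2r hY1pr hY2pr hmono hconsE1 hconsY1
    hconsE2 hconsY2 hconsW hnecY1 hnecE2 hexcl hblind1 hblind2 hexch hpos heeY1 heeY2cond heeE2
    hE1pos hnull0 hd2
end

section
/- Waning strata restriction. Assume, for a fixed a ∈ {0,1}, the hypotheses of the second-interval incidence decomposition (Consistency, Exposure necessity, Exclusion restriction, Treatment exchangeability, Positivity, Exposure exchangeability, Extended exposure exchangeability, 0 < P(E1[a]=1) < 1 and P(E1[a]=1, Y1[a,1]=0) > 0). Write q0 := P(E2[a,0]=1 | E1[a]=0), q1 := P(E2[a,1]=1 | E1[a]=1, Y1[a,1]=0), p0 := P(E1[a]=0), p1 := P(E1[a]=1), and assume q0·p0 + q1·p1 > 0. Then P(Y2[a,1]=1, Y1[a,1]=0) ≤ E[ΔY2 | A=a] / (q0·p0 + q1·p1). -/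
/-!
Within the arm `A = a`, two disjoint groups of units are certain to have an interval-2 event:
those with `E1[a] = 0`, `E2[a,0] = 1`, `Y2[a,1] = 1`, and those with `E1[a] = 1`,
`Y1[a,1] = 0`, `E2[a,1] = 1`, `W[a,1] = 1`. By treatment exchangeability these groups have the
same probability within the arm as in the whole population. The exposure exchangeability
assumptions factor the first probability as `q0 p0 P(Y2[a,1] = 1)` and the second as
`q1 p1 P(W[a,1] = 1, Y1[a,1] = 0)`; by the exclusion restriction the latter factor equals
`P(Y2[a,1] = 1, Y1[a,1] = 0)`, which also bounds the former factor from below.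
-/

open MeasureTheory ProbabilityTheory Set
open scoped ProbabilityTheory

section

variable {Ω : Type*} [MeasurableSpace Ω] {μ : Measure Ω} {s t u : Set Ω}
  {A E1 E2 DY1 DY2 e1 y1 e2 e2n e2e y2 w : Ω → ℝ} {a : ℝ}

lemma cond_real_mul_measureReal [IsFiniteMeasure μ] (hs : MeasurableSet s) (t : Set Ω) :
    μ[|s].real t * μ.real s = μ.real (s ∩ t) := by
  rw [measureReal_def, measureReal_def, measureReal_def, ← ENNReal.toReal_mul,
    cond_mul_eq_inter hs]

lemma measureReal_inter_mul_of_cond_indep [IsFiniteMeasure μ] (hs : MeasurableSet s)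
    (h : μ[t ∩ u | s] = μ[t | s] * μ[u | s]) :
    μ.real (s ∩ (t ∩ u)) * μ.real s = μ.real (s ∩ t) * μ.real (s ∩ u) := by
  rw [← cond_real_mul_measureReal hs, ← cond_real_mul_measureReal hs,
    ← cond_real_mul_measureReal hs, measureReal_def, h, ENNReal.toReal_mul]
  simp only [measureReal_def]
  ring

lemma measureReal_inter_inter_eq_mul_of_cond_indep [IsFiniteMeasure μ]
    (hs : MeasurableSet s)
    (hcond : μ[t ∩ u | s] = μ[t | s] * μ[u | s]) (hindep : μ (s ∩ u) = μ s * μ u) :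
    μ.real (s ∩ t ∩ u) = μ.real (s ∩ t) * μ.real u := by
  rcases eq_or_ne (μ.real s) 0 with hs0 | hs0
  · rw [measureReal_mono_null (inter_subset_left.trans inter_subset_left) hs0,
      measureReal_mono_null inter_subset_left hs0, zero_mul]
  · refine mul_right_cancel₀ hs0 ?_
    rw [inter_assoc, measureReal_inter_mul_of_cond_indep hs hcond, measureReal_def μ (s ∩ u),
      hindep, ENNReal.toReal_mul, ← measureReal_def, ← measureReal_def]
    ring

lemma ProbabilityTheory.IndepFun.cond_real_preimage_eq [IsFiniteMeasure μ] {β γ : Type*}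
    [MeasurableSpace β] [MeasurableSpace γ] {X : Ω → β} {Y : Ω → γ} (h : IndepFun X Y μ)
    (hX : Measurable X) {s : Set β} {t : Set γ}
    (hs : MeasurableSet s) (ht : MeasurableSet t) (hXs : μ (X ⁻¹' s) ≠ 0) :
    μ[|X ⁻¹' s].real (Y ⁻¹' t) = μ.real (Y ⁻¹' t) := by
  rw [measureReal_def, measureReal_def, cond_apply (hX hs),
    h.measure_inter_preimage_eq_mul s t hs ht, ← mul_assoc,
    ENNReal.inv_mul_cancel hXs (measure_ne_top _ _), one_mul]

lemma integral_eq_measureReal_of_eq_zero_or_eq_one {f : Ω → ℝ} (hf : Measurable f)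
    (h01 : ∀ ω, f ω = 0 ∨ f ω = 1) : ∫ ω, f ω ∂μ = μ.real (f ⁻¹' {1}) := by
  rw [← integral_indicator_one (hf (measurableSet_singleton 1))]
  refine integral_congr_ae (ae_of_all _ fun ω => ?_)
  rcases h01 ω with h | h <;> simp [h]

lemma measure_preimage_ne_zero_of_eq_zero_or_eq_one [IsProbabilityMeasure μ]
    (h01 : ∀ ω, A ω = 0 ∨ A ω = 1) (hpos : 0 < μ.real (A ⁻¹' {1}) ∧ μ.real (A ⁻¹' {1}) < 1)
    (ha : a ∈ ({0, 1} : Set ℝ)) : μ (A ⁻¹' {a}) ≠ 0 := by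
  suffices 0 < μ.real (A ⁻¹' {a}) from fun h => by simp [measureReal_def, h] at this
  obtain rfl | rfl := ha
  · have hcover : A ⁻¹' {0} ∪ A ⁻¹' {1} = univ := by
      ext ω; simpa using h01 ω
    have := measureReal_union_le (μ := μ) (A ⁻¹' {0}) (A ⁻¹' {1})
    rw [hcover, probReal_univ] at this
    linarith
  · exact hpos.1

lemma measureReal_stratum_unexposed [IsFiniteMeasure μ] (he1 : Measurable e1)
    (he2 : Measurable e2)
    (hcond : IndepFun e1 y2 μ[|e2 ⁻¹' {1}]) (hindep : IndepFun e2 y2 μ) :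
    μ.real (e1 ⁻¹' {0} ∩ e2 ⁻¹' {1} ∩ y2 ⁻¹' {1}) =
      μ[|e1 ⁻¹' {0}].real (e2 ⁻¹' {1}) * μ.real (e1 ⁻¹' {0}) * μ.real (y2 ⁻¹' {1}) := by
  have hG := he2 (measurableSet_singleton 1)
  rw [inter_comm (e1 ⁻¹' {0}), measureReal_inter_inter_eq_mul_of_cond_indep hG
      (hcond.measure_inter_preimage_eq_mul _ _ (measurableSet_singleton 0)
        (measurableSet_singleton 1))
      (hindep.measure_inter_preimage_eq_mul _ _ (measurableSet_singleton 1)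
        (measurableSet_singleton 1)),
    inter_comm, cond_real_mul_measureReal (he1 (measurableSet_singleton 0))]

lemma measureReal_stratum_exposed [IsFiniteMeasure μ] (he1 : Measurable e1)
    (hy1 : Measurable y1) (he2 : Measurable e2) (hindep : IndepFun e1 y1 μ)
    (hcond : IndepFun e1 w μ[|y1 ⁻¹' {0} ∩ e2 ⁻¹' {1}])
    (hcond' : IndepFun e2 w μ[|y1 ⁻¹' {0}]) :
    μ.real (e1 ⁻¹' {1} ∩ y1 ⁻¹' {0} ∩ e2 ⁻¹' {1} ∩ w ⁻¹' {1}) =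
      μ[|e1 ⁻¹' {1} ∩ y1 ⁻¹' {0}].real (e2 ⁻¹' {1}) * μ.real (e1 ⁻¹' {1}) *
        μ.real (y1 ⁻¹' {0} ∩ w ⁻¹' {1}) := by
  set E := e1 ⁻¹' {1}
  set C := y1 ⁻¹' {0}
  set G := e2 ⁻¹' {1}
  set W := w ⁻¹' {1}
  have hE : MeasurableSet E := he1 (measurableSet_singleton 1)
  have hC : MeasurableSet C := hy1 (measurableSet_singleton 0)
  have hG : MeasurableSet G := he2 (measurableSet_singleton 1)
  have hset : E ∩ C ∩ G ∩ W = C ∩ (G ∩ E ∩ W) := by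
    ext ω; simp only [mem_inter_iff]; tauto
  rcases eq_or_ne (μ.real C) 0 with hC0 | hC0
  · rw [hset, measureReal_mono_null inter_subset_left hC0,
      measureReal_mono_null inter_subset_left hC0, mul_zero]
  have hfactor : μ[|C].real (G ∩ E ∩ W) = μ[|C].real (G ∩ E) * μ[|C].real W := by
    refine measureReal_inter_inter_eq_mul_of_cond_indep hG ?_
      (hcond'.measure_inter_preimage_eq_mul _ _ (measurableSet_singleton 1)
        (measurableSet_singleton 1))
    rw [cond_cond_eq_cond_inter hC hG]
    exact hcond.measure_inter_preimage_eq_mul _ _ (measurableSet_singleton 1)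
      (measurableSet_singleton 1)
  have hEC : μ.real (E ∩ C) = μ.real E * μ.real C := by
    rw [measureReal_def, hindep.measure_inter_preimage_eq_mul _ _ (measurableSet_singleton 1)
      (measurableSet_singleton 0), ENNReal.toReal_mul]; rfl
  have hGE : μ.real (C ∩ (G ∩ E)) = μ[|E ∩ C].real G * μ.real (E ∩ C) := by
    rw [cond_real_mul_measureReal (hE.inter hC)]
    congr 1; ext ω; simp only [mem_inter_iff]; tauto
  refine mul_right_cancel₀ hC0 ?_
  calc μ.real (E ∩ C ∩ G ∩ W) * μ.real C
      = μ[|C].real (G ∩ E ∩ W) * μ.real C * μ.real C := by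
        rw [hset, cond_real_mul_measureReal hC]
    _ = μ.real (C ∩ (G ∩ E)) * μ.real (C ∩ W) := by
        rw [hfactor, ← cond_real_mul_measureReal hC, ← cond_real_mul_measureReal hC]; ring
    _ = _ := by rw [hGE, hEC]; ring

-- Coordinates of the vector: `E1[a]` is entry `a`, `E2[a,e]` entry `2 + 2a + e`,
-- `Y1[a,e]` entry `6 + 2a + e`, `Y2[a,e]` entry `10 + 2a + e`, `W[a,e]` entry `14 + 2a + e`.
lemma indepFun_arm_of_indepFun_potentialOutcomes {E1p : ℝ → Ω → ℝ}
    {E2p Y1p Y2p Wp : ℝ → ℝ → Ω → ℝ}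
    (h : IndepFun A (fun ω => ![E1p 0 ω, E1p 1 ω,
      E2p 0 0 ω, E2p 0 1 ω, E2p 1 0 ω, E2p 1 1 ω,
      Y1p 0 0 ω, Y1p 0 1 ω, Y1p 1 0 ω, Y1p 1 1 ω,
      Y2p 0 0 ω, Y2p 0 1 ω, Y2p 1 0 ω, Y2p 1 1 ω,
      Wp 0 0 ω, Wp 0 1 ω, Wp 1 0 ω, Wp 1 1 ω]) μ)
    (ha : a ∈ ({0, 1} : Set ℝ)) :
    IndepFun A (fun ω => (E1p a ω, Y1p a 1 ω, E2p a 0 ω, E2p a 1 ω, Y2p a 1 ω, Wp a 1 ω)) μ := by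
  obtain rfl | rfl := ha
  · exact h.comp measurable_id
      (by fun_prop : Measurable fun v : Fin 18 → ℝ => (v 0, v 7, v 2, v 3, v 11, v 15))
  · exact h.comp measurable_id
      (by fun_prop : Measurable fun v : Fin 18 → ℝ => (v 1, v 9, v 4, v 5, v 13, v 17))

lemma cond_measureReal_strata_le_factual [IsFiniteMeasure μ] (hA : Measurable A)
    (he1 : Measurable e1) (hy1 : Measurable y1) (he2e : Measurable e2e) (hw : Measurable w)
    (hcE1 : ∀ᵐ ω ∂μ, A ω = a → E1 ω = e1 ω)
    (hcE2n : ∀ᵐ ω ∂μ, A ω = a → E1 ω = 0 → E2 ω = e2n ω)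
    (hcE2e : ∀ᵐ ω ∂μ, A ω = a → E1 ω = 1 → E2 ω = e2e ω)
    (hcY1 : ∀ᵐ ω ∂μ, A ω = a → E1 ω = 1 → DY1 ω = y1 ω)
    (hcY2 : ∀ᵐ ω ∂μ, A ω = a → E1 ω = 0 → E2 ω = 1 → DY2 ω = y2 ω)
    (hcW : ∀ᵐ ω ∂μ, A ω = a → E1 ω = 1 → DY1 ω = 0 → E2 ω = 1 → DY2 ω = w ω) :
    μ[|A ⁻¹' {a}].real (e1 ⁻¹' {0} ∩ e2n ⁻¹' {1} ∩ y2 ⁻¹' {1}) +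
        μ[|A ⁻¹' {a}].real (e1 ⁻¹' {1} ∩ y1 ⁻¹' {0} ∩ e2e ⁻¹' {1} ∩ w ⁻¹' {1}) ≤
      μ[|A ⁻¹' {a}].real (DY2 ⁻¹' {1}) := by
  have hdisj : Disjoint (e1 ⁻¹' {0} ∩ e2n ⁻¹' {1} ∩ y2 ⁻¹' {1})
      (e1 ⁻¹' {1} ∩ y1 ⁻¹' {0} ∩ e2e ⁻¹' {1} ∩ w ⁻¹' {1}) :=
    Disjoint.mono (inter_subset_left.trans inter_subset_left)
      (inter_subset_left.trans (inter_subset_left.trans inter_subset_left))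
      ((disjoint_singleton.2 zero_ne_one).preimage e1)
  have hcons : ∀ᵐ ω ∂μ, A ω = a →
      ω ∈ e1 ⁻¹' {0} ∩ e2n ⁻¹' {1} ∩ y2 ⁻¹' {1} ∪
        e1 ⁻¹' {1} ∩ y1 ⁻¹' {0} ∩ e2e ⁻¹' {1} ∩ w ⁻¹' {1} → DY2 ω = 1 := by
    filter_upwards [hcE1, hcE2n, hcE2e, hcY1, hcY2, hcW] with ω hE1 hE2n hE2e hY1 hY2 hW hA
    rintro (⟨⟨he1 : e1 ω = 0, he2 : e2n ω = 1⟩, hy2 : y2 ω = 1⟩ |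
      ⟨⟨⟨he1 : e1 ω = 1, hy1 : y1 ω = 0⟩, he2 : e2e ω = 1⟩, hw : w ω = 1⟩)
    · have hE1ω : E1 ω = 0 := (hE1 hA).trans he1
      exact (hY2 hA hE1ω ((hE2n hA hE1ω).trans he2)).trans hy2
    · have hE1ω : E1 ω = 1 := (hE1 hA).trans he1
      exact (hW hA hE1ω ((hY1 hA hE1ω).trans hy1) ((hE2e hA hE1ω).trans he2)).trans hw
  rw [← measureReal_union hdisj ((((he1 (measurableSet_singleton 1)).inter
    (hy1 (measurableSet_singleton 0))).inter (he2e (measurableSet_singleton 1))).inter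
      (hw (measurableSet_singleton 1)))]
  refine ENNReal.toReal_mono (measure_ne_top _ _) (measure_mono_ae ?_)
  filter_upwards [ae_cond_mem (hA (measurableSet_singleton a)),
    cond_absolutelyContinuous.ae_le hcons] with ω hAω hω hS
  exact hω hAω hS

theorem mul_measureReal_waning_le_cond_incidence [IsFiniteMeasure μ] (hA : Measurable A)
    (he1 : Measurable e1) (hy1 : Measurable y1) (he2n : Measurable e2n)
    (he2e : Measurable e2e) (hw : Measurable w) (hZ : μ (A ⁻¹' {a}) ≠ 0)
    (hX : IndepFun A (fun ω => (e1 ω, y1 ω, e2n ω, e2e ω, y2 ω, w ω)) μ)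
    (hcE1 : ∀ᵐ ω ∂μ, A ω = a → E1 ω = e1 ω)
    (hcE2n : ∀ᵐ ω ∂μ, A ω = a → E1 ω = 0 → E2 ω = e2n ω)
    (hcE2e : ∀ᵐ ω ∂μ, A ω = a → E1 ω = 1 → E2 ω = e2e ω)
    (hcY1 : ∀ᵐ ω ∂μ, A ω = a → E1 ω = 1 → DY1 ω = y1 ω)
    (hcY2 : ∀ᵐ ω ∂μ, A ω = a → E1 ω = 0 → E2 ω = 1 → DY2 ω = y2 ω)
    (hcW : ∀ᵐ ω ∂μ, A ω = a → E1 ω = 1 → DY1 ω = 0 → E2 ω = 1 → DY2 ω = w ω)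
    (hexcl : ∀ᵐ ω ∂μ, w ω = y2 ω) (hY1 : IndepFun e1 y1 μ)
    (hcondY2 : IndepFun e1 y2 μ[|e2n ⁻¹' {1}]) (hE2Y2 : IndepFun e2n y2 μ)
    (hcondW : IndepFun e1 w μ[|y1 ⁻¹' {0} ∩ e2e ⁻¹' {1}])
    (hcondW' : IndepFun e2e w μ[|y1 ⁻¹' {0}]) :
    (μ[|e1 ⁻¹' {0}].real (e2n ⁻¹' {1}) * μ.real (e1 ⁻¹' {0}) +
        μ[|e1 ⁻¹' {1} ∩ y1 ⁻¹' {0}].real (e2e ⁻¹' {1}) * μ.real (e1 ⁻¹' {1})) *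
      μ.real (y2 ⁻¹' {1} ∩ y1 ⁻¹' {0}) ≤ μ[|A ⁻¹' {a}].real (DY2 ⁻¹' {1}) := by
  have hfactual := cond_measureReal_strata_le_factual hA he1 hy1 he2e hw
    hcE1 hcE2n hcE2e hcY1 hcY2 hcW
  have hS0 : μ[|A ⁻¹' {a}].real (e1 ⁻¹' {0} ∩ e2n ⁻¹' {1} ∩ y2 ⁻¹' {1}) =
      μ.real (e1 ⁻¹' {0} ∩ e2n ⁻¹' {1} ∩ y2 ⁻¹' {1}) :=
    hX.cond_real_preimage_eq (t := {p | p.1 = 0} ∩ {p | p.2.2.1 = 1} ∩ {p | p.2.2.2.2.1 = 1})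
      hA (measurableSet_singleton a) (by measurability) hZ
  have hS1 : μ[|A ⁻¹' {a}].real (e1 ⁻¹' {1} ∩ y1 ⁻¹' {0} ∩ e2e ⁻¹' {1} ∩ w ⁻¹' {1}) =
      μ.real (e1 ⁻¹' {1} ∩ y1 ⁻¹' {0} ∩ e2e ⁻¹' {1} ∩ w ⁻¹' {1}) :=
    hX.cond_real_preimage_eq
      (t := {p | p.1 = 1} ∩ {p | p.2.1 = 0} ∩ {p | p.2.2.2.1 = 1} ∩ {p | p.2.2.2.2.2 = 1})
      hA (measurableSet_singleton a) (by measurability) hZ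
  rw [hS0, hS1, measureReal_stratum_unexposed he1 he2n hcondY2 hE2Y2,
    measureReal_stratum_exposed he1 hy1 he2e hY1 hcondW hcondW'] at hfactual
  have hwaning : μ.real (y1 ⁻¹' {0} ∩ w ⁻¹' {1}) = μ.real (y2 ⁻¹' {1} ∩ y1 ⁻¹' {0}) := by
    refine measureReal_congr (Filter.eventuallyEq_set.2 ?_)
    filter_upwards [hexcl] with ω hωeq
    simp only [mem_inter_iff, mem_preimage, hωeq, and_comm]
  have hle : μ.real (y2 ⁻¹' {1} ∩ y1 ⁻¹' {0}) ≤ μ.real (y2 ⁻¹' {1}) :=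
    measureReal_mono inter_subset_left
  have hq0p0 : 0 ≤ μ[|e1 ⁻¹' {0}].real (e2n ⁻¹' {1}) * μ.real (e1 ⁻¹' {0}) := by positivity
  rw [hwaning] at hfactual
  nlinarith

end

theorem waning_strata_restriction_general
    {Ω : Type*} [MeasurableSpace Ω] (μ : Measure Ω) [IsProbabilityMeasure μ]
    (A E1 E2 DY1 DY2 : Ω → ℝ)
    (E1p : ℝ → Ω → ℝ) (E2p Y1p Y2p Wp : ℝ → ℝ → Ω → ℝ)
    (hAm : Measurable A) (hDY2m : Measurable DY2)
    (hE1pm : ∀ a ∈ ({0, 1} : Set ℝ), Measurable (E1p a))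
    (hE2pm : ∀ a ∈ ({0, 1} : Set ℝ), ∀ e1 ∈ ({0, 1} : Set ℝ), Measurable (E2p a e1))
    (hY1pm : ∀ a ∈ ({0, 1} : Set ℝ), ∀ e1 ∈ ({0, 1} : Set ℝ), Measurable (Y1p a e1))
    (hWpm : ∀ a ∈ ({0, 1} : Set ℝ), ∀ e1 ∈ ({0, 1} : Set ℝ), Measurable (Wp a e1))
    (hAr : ∀ ω, A ω = 0 ∨ A ω = 1) (hDY2r : ∀ ω, DY2 ω = 0 ∨ DY2 ω = 1)
    -- Consistency
    (hconsE1 : ∀ a ∈ ({0, 1} : Set ℝ), ∀ᵐ ω ∂μ, A ω = a → E1 ω = E1p a ω)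
    (hconsY1 : ∀ a ∈ ({0, 1} : Set ℝ), ∀ e1 ∈ ({0, 1} : Set ℝ),
      ∀ᵐ ω ∂μ, A ω = a → E1 ω = e1 → DY1 ω = Y1p a e1 ω)
    (hconsE2 : ∀ a ∈ ({0, 1} : Set ℝ), ∀ e1 ∈ ({0, 1} : Set ℝ),
      ∀ᵐ ω ∂μ, A ω = a → E1 ω = e1 → E2 ω = E2p a e1 ω)
    (hconsY2 : ∀ a ∈ ({0, 1} : Set ℝ), ∀ e2 ∈ ({0, 1} : Set ℝ),
      ∀ᵐ ω ∂μ, A ω = a → E1 ω = 0 → E2 ω = e2 → DY2 ω = Y2p a e2 ω)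
    (hconsW : ∀ a ∈ ({0, 1} : Set ℝ), ∀ e1 ∈ ({0, 1} : Set ℝ),
      ∀ᵐ ω ∂μ, A ω = a → E1 ω = e1 → DY1 ω = 0 → E2 ω = 1 → DY2 ω = Wp a e1 ω)
    -- Exclusion restriction
    (hexcl : ∀ a ∈ ({0, 1} : Set ℝ), ∀ᵐ ω ∂μ, Wp a 1 ω = Y2p a 1 ω ∧ Wp a 0 ω = Y2p a 1 ω)
    -- Treatment exchangeability
    (hexch : IndepFun A (fun ω => ![E1p 0 ω, E1p 1 ω,
      E2p 0 0 ω, E2p 0 1 ω, E2p 1 0 ω, E2p 1 1 ω,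
      Y1p 0 0 ω, Y1p 0 1 ω, Y1p 1 0 ω, Y1p 1 1 ω,
      Y2p 0 0 ω, Y2p 0 1 ω, Y2p 1 0 ω, Y2p 1 1 ω,
      Wp 0 0 ω, Wp 0 1 ω, Wp 1 0 ω, Wp 1 1 ω]) μ)
    -- Positivity
    (hpos : 0 < (μ {ω | A ω = 1}).toReal ∧ (μ {ω | A ω = 1}).toReal < 1)
    -- Exposure exchangeability
    (heeY1 : ∀ a ∈ ({0, 1} : Set ℝ), ∀ e1 ∈ ({0, 1} : Set ℝ), IndepFun (E1p a) (Y1p a e1) μ)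
    (heeY2cond : ∀ a ∈ ({0, 1} : Set ℝ), ∀ e2 ∈ ({0, 1} : Set ℝ), ∀ e ∈ ({0, 1} : Set ℝ),
      IndepFun (E1p a) (Y2p a e2) (μ[|{ω | E2p a 0 ω = e}]))
    (heeE2 : ∀ a ∈ ({0, 1} : Set ℝ), ∀ e2 ∈ ({0, 1} : Set ℝ), IndepFun (E2p a 0) (Y2p a e2) μ)
    -- Extended exposure exchangeability
    (hextee1 : ∀ a ∈ ({0, 1} : Set ℝ), ∀ e ∈ ({0, 1} : Set ℝ),
      IndepFun (E1p a) (Wp a 1) (μ[|{ω | Y1p a 1 ω = 0 ∧ E2p a 1 ω = e}]))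
    (hextee2 : ∀ a ∈ ({0, 1} : Set ℝ),
      IndepFun (E2p a 1) (Wp a 1) (μ[|{ω | Y1p a 1 ω = 0}]))
    (a : ℝ) (ha : a ∈ ({0, 1} : Set ℝ))
    (q0 q1 p0 p1 : ℝ)
    (hq0 : q0 = ((μ[|{ω | E1p a ω = 0}]) {ω | E2p a 0 ω = 1}).toReal)
    (hq1 : q1 = ((μ[|{ω | E1p a ω = 1 ∧ Y1p a 1 ω = 0}]) {ω | E2p a 1 ω = 1}).toReal)
    (hp0 : p0 = (μ {ω | E1p a ω = 0}).toReal)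
    (hp1 : p1 = (μ {ω | E1p a ω = 1}).toReal)
    (hden : 0 < q0 * p0 + q1 * p1) :
    (μ {ω | Y2p a 1 ω = 1 ∧ Y1p a 1 ω = 0}).toReal ≤
      (∫ ω, DY2 ω ∂(μ[|{ω | A ω = a}])) / (q0 * p0 + q1 * p1) := by
  have h0 : (0 : ℝ) ∈ ({0, 1} : Set ℝ) := by simp
  have h1 : (1 : ℝ) ∈ ({0, 1} : Set ℝ) := by simp
  rw [integral_eq_measureReal_of_eq_zero_or_eq_one hDY2m hDY2r, le_div_iff₀ hden, mul_comm,
    hq0, hq1, hp0, hp1]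
  exact mul_measureReal_waning_le_cond_incidence hAm (hE1pm a ha) (hY1pm a ha 1 h1)
    (hE2pm a ha 0 h0) (hE2pm a ha 1 h1) (hWpm a ha 1 h1)
    (measure_preimage_ne_zero_of_eq_zero_or_eq_one hAr hpos ha)
    (indepFun_arm_of_indepFun_potentialOutcomes hexch ha)
    (hconsE1 a ha) (hconsE2 a ha 0 h0) (hconsE2 a ha 1 h1) (hconsY1 a ha 1 h1)
    (hconsY2 a ha 1 h1) (hconsW a ha 1 h1) ((hexcl a ha).mono fun _ h => h.1)
    (heeY1 a ha 1 h1) (heeY2cond a ha 1 h1 1 h1) (heeE2 a ha 1 h1) (hextee1 a ha 1 h1)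
    (hextee2 a ha)

/-- Waning strata restriction. -/
theorem waning_strata_restriction
    {Ω : Type*} [MeasurableSpace Ω] (μ : Measure Ω) [IsProbabilityMeasure μ]
    (A E1 E2 DY1 DY2 : Ω → ℝ)
    (E1p : ℝ → Ω → ℝ) (E2p Y1p Y2p Wp : ℝ → ℝ → Ω → ℝ)
    (hAm : Measurable A) (hE1m : Measurable E1) (hE2m : Measurable E2)
    (hDY1m : Measurable DY1) (hDY2m : Measurable DY2)
    (hE1pm : ∀ a ∈ ({0, 1} : Set ℝ), Measurable (E1p a))
    (hE2pm : ∀ a ∈ ({0, 1} : Set ℝ), ∀ e1 ∈ ({0, 1} : Set ℝ), Measurable (E2p a e1))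
    (hY1pm : ∀ a ∈ ({0, 1} : Set ℝ), ∀ e1 ∈ ({0, 1} : Set ℝ), Measurable (Y1p a e1))
    (hY2pm : ∀ a ∈ ({0, 1} : Set ℝ), ∀ e2 ∈ ({0, 1} : Set ℝ), Measurable (Y2p a e2))
    (hWpm : ∀ a ∈ ({0, 1} : Set ℝ), ∀ e1 ∈ ({0, 1} : Set ℝ), Measurable (Wp a e1))
    (hAr : ∀ ω, A ω = 0 ∨ A ω = 1) (hE1r : ∀ ω, E1 ω = 0 ∨ E1 ω = 1)
    (hE2r : ∀ ω, E2 ω = 0 ∨ E2 ω = 1)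
    (hDY1r : ∀ ω, DY1 ω = 0 ∨ DY1 ω = 1) (hDY2r : ∀ ω, DY2 ω = 0 ∨ DY2 ω = 1)
    (hE1pr : ∀ a ∈ ({0, 1} : Set ℝ), ∀ ω, E1p a ω = 0 ∨ E1p a ω = 1)
    (hE2pr : ∀ a ∈ ({0, 1} : Set ℝ), ∀ e1 ∈ ({0, 1} : Set ℝ), ∀ ω,
      E2p a e1 ω = 0 ∨ E2p a e1 ω = 1)
    (hY1pr : ∀ a ∈ ({0, 1} : Set ℝ), ∀ e1 ∈ ({0, 1} : Set ℝ), ∀ ω,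
      Y1p a e1 ω = 0 ∨ Y1p a e1 ω = 1)
    (hY2pr : ∀ a ∈ ({0, 1} : Set ℝ), ∀ e2 ∈ ({0, 1} : Set ℝ), ∀ ω,
      Y2p a e2 ω = 0 ∨ Y2p a e2 ω = 1)
    (hWpr : ∀ a ∈ ({0, 1} : Set ℝ), ∀ e1 ∈ ({0, 1} : Set ℝ), ∀ ω,
      Wp a e1 ω = 0 ∨ Wp a e1 ω = 1)
    (hmono : ∀ ω, DY1 ω = 1 → DY2 ω = 0)
    -- Consistency
    (hconsE1 : ∀ a ∈ ({0, 1} : Set ℝ), ∀ᵐ ω ∂μ, A ω = a → E1 ω = E1p a ω)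
    (hconsY1 : ∀ a ∈ ({0, 1} : Set ℝ), ∀ e1 ∈ ({0, 1} : Set ℝ),
      ∀ᵐ ω ∂μ, A ω = a → E1 ω = e1 → DY1 ω = Y1p a e1 ω)
    (hconsE2 : ∀ a ∈ ({0, 1} : Set ℝ), ∀ e1 ∈ ({0, 1} : Set ℝ),
      ∀ᵐ ω ∂μ, A ω = a → E1 ω = e1 → E2 ω = E2p a e1 ω)
    (hconsY2 : ∀ a ∈ ({0, 1} : Set ℝ), ∀ e2 ∈ ({0, 1} : Set ℝ),
      ∀ᵐ ω ∂μ, A ω = a → E1 ω = 0 → E2 ω = e2 → DY2 ω = Y2p a e2 ω)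
    (hconsW : ∀ a ∈ ({0, 1} : Set ℝ), ∀ e1 ∈ ({0, 1} : Set ℝ),
      ∀ᵐ ω ∂μ, A ω = a → E1 ω = e1 → DY1 ω = 0 → E2 ω = 1 → DY2 ω = Wp a e1 ω)
    -- Exposure necessity
    (hnecY1 : ∀ a ∈ ({0, 1} : Set ℝ), ∀ᵐ ω ∂μ, Y1p a 0 ω = 0)
    (hnecY2 : ∀ a ∈ ({0, 1} : Set ℝ), ∀ᵐ ω ∂μ, Y2p a 0 ω = 0)
    (hnecE2 : ∀ᵐ ω ∂μ, E2 ω = 0 → DY2 ω = 0)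
    -- Exclusion restriction
    (hexcl : ∀ a ∈ ({0, 1} : Set ℝ), ∀ᵐ ω ∂μ, Wp a 1 ω = Y2p a 1 ω ∧ Wp a 0 ω = Y2p a 1 ω)
    -- Treatment exchangeability
    (hexch : IndepFun A (fun ω => ![E1p 0 ω, E1p 1 ω,
      E2p 0 0 ω, E2p 0 1 ω, E2p 1 0 ω, E2p 1 1 ω,
      Y1p 0 0 ω, Y1p 0 1 ω, Y1p 1 0 ω, Y1p 1 1 ω,
      Y2p 0 0 ω, Y2p 0 1 ω, Y2p 1 0 ω, Y2p 1 1 ω,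
      Wp 0 0 ω, Wp 0 1 ω, Wp 1 0 ω, Wp 1 1 ω]) μ)
    -- Positivity
    (hpos : 0 < (μ {ω | A ω = 1}).toReal ∧ (μ {ω | A ω = 1}).toReal < 1)
    -- Exposure exchangeability
    (heeY1 : ∀ a ∈ ({0, 1} : Set ℝ), ∀ e1 ∈ ({0, 1} : Set ℝ), IndepFun (E1p a) (Y1p a e1) μ)
    (heeY2cond : ∀ a ∈ ({0, 1} : Set ℝ), ∀ e2 ∈ ({0, 1} : Set ℝ), ∀ e ∈ ({0, 1} : Set ℝ),
      IndepFun (E1p a) (Y2p a e2) (μ[|{ω | E2p a 0 ω = e}]))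
    (heeE2 : ∀ a ∈ ({0, 1} : Set ℝ), ∀ e2 ∈ ({0, 1} : Set ℝ), IndepFun (E2p a 0) (Y2p a e2) μ)
    -- Extended exposure exchangeability
    (hextee1 : ∀ a ∈ ({0, 1} : Set ℝ), ∀ e ∈ ({0, 1} : Set ℝ),
      IndepFun (E1p a) (Wp a 1) (μ[|{ω | Y1p a 1 ω = 0 ∧ E2p a 1 ω = e}]))
    (hextee2 : ∀ a ∈ ({0, 1} : Set ℝ),
      IndepFun (E2p a 1) (Wp a 1) (μ[|{ω | Y1p a 1 ω = 0}]))
    (a : ℝ) (ha : a ∈ ({0, 1} : Set ℝ))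
    -- Nondegeneracy
    (hE1pos : 0 < (μ {ω | E1p a ω = 1}).toReal)
    (hE1lt : (μ {ω | E1p a ω = 1}).toReal < 1)
    (hE1Y1 : 0 < (μ {ω | E1p a ω = 1 ∧ Y1p a 1 ω = 0}).toReal)
    (q0 q1 p0 p1 : ℝ)
    (hq0 : q0 = ((μ[|{ω | E1p a ω = 0}]) {ω | E2p a 0 ω = 1}).toReal)
    (hq1 : q1 = ((μ[|{ω | E1p a ω = 1 ∧ Y1p a 1 ω = 0}]) {ω | E2p a 1 ω = 1}).toReal)
    (hp0 : p0 = (μ {ω | E1p a ω = 0}).toReal)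
    (hp1 : p1 = (μ {ω | E1p a ω = 1}).toReal)
    (hden : 0 < q0 * p0 + q1 * p1) :
    (μ {ω | Y2p a 1 ω = 1 ∧ Y1p a 1 ω = 0}).toReal ≤
      (∫ ω, DY2 ω ∂(μ[|{ω | A ω = a}])) / (q0 * p0 + q1 * p1) :=
  waning_strata_restriction_general μ A E1 E2 DY1 DY2 E1p E2p Y1p Y2p Wp hAm hDY2m hE1pm hE2pm hY1pm
    hWpm hAr hDY2r hconsE1 hconsY1 hconsE2 hconsY2 hconsW hexcl hexch hpos heeY1 heeY2cond heeE2
    hextee1 hextee2 a ha q0 q1 p0 p1 hq0 hq1 hp0 hp1 hden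
end
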